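/- arXiv:1402.2960 — 8 statements merged into one kernel-verified Lean document; each statement's English description precedes it below -/
import Mathlib

section
/- For every sequence a = (a_1, a_2, …) of natural numbers and all natural numbers n ≥ 1 and k, the number of colored set partitions of {1,…,n} associated to a having exactly k blocks equals the partial Bell polynomial value B(n,k;a) (where the sequence a is regarded as a sequence of rationals). -/
open Finset BigOperators

/-- The partial Bell polynomial value `B(n,k;a)` for a sequence `a : ℕ → ℚ` indexed from 1:
`B(n,k;a) = Σ_j n!/(∏_{i=1}^n (j_i)!·(i!)^{j_i}) · ∏_{i=1}^n a_i^{j_i}`, the sum ranging over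
families `(j_1,…,j_n)` of nonnegative integers with `Σ j_i = k` and `Σ i·j_i = n`.
(Each admissible `j_i` satisfies `j_i ≤ n`, so summing over `Fin n → Fin (n+1)` is exhaustive.) -/
noncomputable def partialBell (a : ℕ → ℚ) (n k : ℕ) : ℚ :=
  ∑ j : Fin n → Fin (n + 1),
    if (∑ i, (j i : ℕ)) = k ∧ (∑ i, (i.1 + 1) * (j i : ℕ)) = n then
      (n.factorial : ℚ) /
          ((∏ i, (j i : ℕ).factorial * ((i.1 + 1).factorial) ^ (j i : ℕ) : ℕ) : ℚ) *
        ∏ i, a (i.1 + 1) ^ (j i : ℕ)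
    else 0





variable {α : Type*} [DecidableEq α]

lemma sup_erase_part {s : Finset α} (P : Finpartition s) {B : Finset α} (hB : B ∈ P.parts) :
    (P.parts.erase B).sup id = s \ B := by
  ext a
  simp only [Finset.mem_sup, mem_erase, mem_sdiff, id]
  constructor
  · rintro ⟨C, ⟨hCB, hC⟩, haC⟩
    refine ⟨P.le hC haC, fun haB => hCB ?_⟩
    exact P.eq_of_mem_parts hC hB haC haB
  · rintro ⟨ha, haB⟩
    obtain ⟨C, hC, haC⟩ := P.exists_mem ha
    exact ⟨C, ⟨fun h => haB (h ▸ haC), hC⟩, haC⟩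

def Wsum (a : ℕ → ℕ) (s : Finset α) (k : ℕ) : ℕ :=
  ∑ π ∈ (Finset.univ : Finset (Finpartition s)).filter (fun π => π.parts.card = k),
    ∏ B ∈ π.parts, a B.card

lemma wsum_rec (a : ℕ → ℕ) (s : Finset α) (x : α) (hx : x ∉ s) (k : ℕ) :
    Wsum a (insert x s) (k+1) = ∑ t ∈ s.powerset, a (t.card + 1) * Wsum a (s \ t) k := by
  have hxs : x ∈ insert x s := mem_insert_self x s
  rw [Wsum, ← Finset.sum_fiberwise_of_maps_to
    (g := fun π : Finpartition (insert x s) => (π.part x).erase x) (t := s.powerset)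
    (fun π _ => by
      rw [mem_powerset]
      intro b hb
      have hb' := π.le (π.part_mem.2 hxs) (mem_of_mem_erase hb)
      rcases mem_insert.1 hb' with h | h
      · exact absurd h (ne_of_mem_erase hb)
      · exact h)]
  refine Finset.sum_congr rfl fun t ht => ?_
  rw [mem_powerset] at ht
  have hxt : x ∉ t := fun h => hx (ht h)
  -- facts for extend
  have hb : insert x t ≠ (⊥ : Finset α) := by
    simp [Finset.insert_ne_empty]
  have hab : Disjoint (s \ t) (insert x t) := by
    rw [Finset.disjoint_left]
    intro b hb1 hb2
    rcases mem_insert.1 hb2 with rfl | h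
    · exact hx (mem_sdiff.1 hb1).1
    · exact (mem_sdiff.1 hb1).2 h
  have hc : (s \ t) ⊔ (insert x t) = insert x s := by
    ext b
    simp only [sup_eq_union, mem_union, mem_sdiff, mem_insert]
    constructor
    · rintro (⟨h1, _⟩ | rfl | h2)
      · exact Or.inr h1
      · exact Or.inl rfl
      · exact Or.inr (ht h2)
    · rintro (rfl | h)
      · exact Or.inr (Or.inl rfl)
      · by_cases hbt : b ∈ t
        · exact Or.inr (Or.inr hbt)
        · exact Or.inl ⟨h, hbt⟩
  rw [Wsum, Finset.mul_sum]
  refine Finset.sum_bij'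
    (i := fun π hπ => Finpartition.ofSubset π (parts := π.parts.erase (π.part x))
      (erase_subset _ _) ?_)
    (j := fun π' _ => π'.extend hb hab hc) ?_ ?_ ?_ ?_ ?_
  · -- sup proof
    simp only [mem_filter, mem_univ, true_and] at hπ
    obtain ⟨-, hπ⟩ := hπ
    have hpart : π.part x = insert x t := by
      rw [← hπ, Finset.insert_erase (π.mem_part hxs)]
    rw [sup_erase_part π (π.part_mem.2 hxs), hpart]
    ext b
    simp only [mem_sdiff, mem_insert]
    constructor
    · rintro ⟨rfl | h1, h2⟩
      · exact absurd (Or.inl rfl) h2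
      · exact ⟨h1, fun h => h2 (Or.inr h)⟩
    · rintro ⟨h1, h2⟩
      exact ⟨Or.inr h1, by rintro (rfl | h) <;> [exact hx h1; exact h2 h]⟩
  · -- hi
    intro π hπ
    simp only [mem_filter, mem_univ, true_and] at hπ ⊢
    simp only [Finpartition.ofSubset_parts]
    rw [Finset.card_erase_of_mem (π.part_mem.2 hxs), hπ.1]
    omega
  · -- hj
    intro π' hπ'
    simp only [mem_filter, mem_univ, true_and] at hπ' ⊢
    have hmem : insert x t ∈ (π'.extend hb hab hc).parts := by
      rw [Finpartition.extend_parts]; exact mem_insert_self _ _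
    constructor
    · rw [Finpartition.card_extend, hπ']
    · rw [Finpartition.part_eq_of_mem _ hmem (mem_insert_self x t),
        Finset.erase_insert hxt]
  · -- left_inv
    intro π hπ
    simp only [mem_filter, mem_univ, true_and] at hπ
    have hpart : π.part x = insert x t := by
      rw [← hπ.2, Finset.insert_erase (π.mem_part hxs)]
    apply Finpartition.ext
    simp only [Finpartition.extend_parts, Finpartition.ofSubset_parts]
    rw [← hpart, Finset.insert_erase (π.part_mem.2 hxs)]
  · -- right_inv
    intro π' hπ'
    have hnotmem : insert x t ∉ π'.parts := by
      intro h
      have := π'.le h (mem_insert_self x t)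
      exact hx (mem_sdiff.1 this).1
    have hmem : insert x t ∈ (π'.extend hb hab hc).parts := by
      rw [Finpartition.extend_parts]; exact mem_insert_self _ _
    have hpart : (π'.extend hb hab hc).part x = insert x t :=
      Finpartition.part_eq_of_mem _ hmem (mem_insert_self x t)
    apply Finpartition.ext
    simp only [Finpartition.ofSubset_parts]
    rw [hpart, Finpartition.extend_parts, Finset.erase_insert hnotmem]
  · -- values
    intro π hπ
    simp only [mem_filter, mem_univ, true_and] at hπ
    have hpart : π.part x = insert x t := by
      rw [← hπ.2, Finset.insert_erase (π.mem_part hxs)]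
    have := Finset.mul_prod_erase π.parts (fun B => a B.card) (π.part_mem.2 hxs)
    simp only [Finpartition.ofSubset_parts]
    rw [← this, hpart]
    simp [Finset.card_insert_of_notMem hxt]


def Brec (a : ℕ → ℕ) : ℕ → ℕ → ℕ
  | 0, 0 => 1
  | 0, _+1 => 0
  | _+1, 0 => 0
  | n+1, k+1 => ∑ m ∈ Finset.range (n+1), n.choose m * a (m+1) * Brec a (n-m) k
  termination_by n k => k

@[simp] lemma brec_zero_zero (a : ℕ → ℕ) : Brec a 0 0 = 1 := by rw [Brec]
@[simp] lemma brec_zero_succ (a : ℕ → ℕ) (k : ℕ) : Brec a 0 (k+1) = 0 := by rw [Brec]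
@[simp] lemma brec_succ_zero (a : ℕ → ℕ) (n : ℕ) : Brec a (n+1) 0 = 0 := by rw [Brec]
lemma brec_succ_succ (a : ℕ → ℕ) (n k : ℕ) :
    Brec a (n+1) (k+1) = ∑ m ∈ Finset.range (n+1), n.choose m * a (m+1) * Brec a (n-m) k := by
  rw [Brec]

lemma parts_of_empty (π : Finpartition (∅ : Finset α)) : π.parts = ∅ :=
  (Finpartition.parts_eq_empty_iff (P := π)).2 rfl

lemma wsum_empty (a : ℕ → ℕ) (k : ℕ) :
    Wsum a (∅ : Finset α) k = if k = 0 then 1 else 0 := by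
  unfold Wsum
  rcases k with - | k
  · rw [Finset.filter_true_of_mem (fun π _ => by simp [parts_of_empty π])]
    have h1 : ∀ π : Finpartition (∅ : Finset α), π = ⊥ := fun π =>
      Finpartition.ext (by simp [parts_of_empty, parts_of_empty π])
    have h2 := Fintype.card_eq_one_iff.2 ⟨(⊥ : Finpartition (∅ : Finset α)), h1⟩
    simp [parts_of_empty, Finset.card_univ, h2]
  · rw [Finset.filter_false_of_mem (fun π _ => by simp [parts_of_empty π]), Finset.sum_empty]
    simp

lemma wsum_eq (a : ℕ → ℕ) (s : Finset α) : ∀ k, Wsum a s k = Brec a s.card k := by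
  induction s using Finset.strongInduction with
  | _ s ih =>
    rcases s.eq_empty_or_nonempty with rfl | ⟨x, hx⟩
    · intro k
      rw [wsum_empty]
      rcases k with - | k <;> simp
    · intro k
      have hxu : x ∉ s.erase x := notMem_erase x s
      have hins : insert x (s.erase x) = s := Finset.insert_erase hx
      have hcard : s.card = (s.erase x).card + 1 := by
        rw [Finset.card_erase_of_mem hx]
        have : 1 ≤ s.card := Finset.card_pos.2 ⟨x, hx⟩
        omega
      rcases k with - | k
      · rw [hcard, brec_succ_zero]
        unfold Wsum
        rw [Finset.filter_false_of_mem, Finset.sum_empty]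
        intro π _
        simp only [Finset.card_eq_zero]
        intro hparts
        have := (Finpartition.parts_eq_empty_iff (P := π)).1 hparts
        rw [Finset.bot_eq_empty] at this
        exact Finset.Nonempty.ne_empty ⟨x, hx⟩ this
      · rw [← hins, wsum_rec a _ x hxu, Finset.sum_powerset]
        have hc2 : (insert x (s.erase x)).card = (s.erase x).card + 1 := by
          rw [Finset.card_insert_of_notMem hxu]
        rw [hc2, brec_succ_succ]
        refine Finset.sum_congr rfl fun m hm => ?_
        rw [Finset.mem_range] at hm
        have : ∀ t ∈ Finset.powersetCard m (s.erase x),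
            a (t.card + 1) * Wsum a (s.erase x \ t) k
              = a (m + 1) * Brec a ((s.erase x).card - m) k := by
          intro t htm
          rw [Finset.mem_powersetCard] at htm
          have hsub : s.erase x \ t ⊂ s :=
            Finset.ssubset_of_subset_of_ssubset (Finset.sdiff_subset) (Finset.erase_ssubset hx)
          rw [ih _ hsub, Finset.card_sdiff_of_subset htm.1, htm.2]
        rw [Finset.sum_congr rfl this, Finset.sum_const, Finset.card_powersetCard,
          smul_eq_mul, ← mul_assoc]




lemma card_colored (a : ℕ → ℕ) (n k : ℕ) :
    Nat.card {p : Finpartition (Finset.univ : Finset (Fin n)) × (Finset (Fin n) → ℕ) //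
        (∀ B ∈ p.1.parts, 1 ≤ p.2 B ∧ p.2 B ≤ a B.card) ∧
        (∀ B, B ∉ p.1.parts → p.2 B = 0) ∧
        p.1.parts.card = k} =
      Wsum a (Finset.univ : Finset (Fin n)) k := by
  classical
  have e : {p : Finpartition (Finset.univ : Finset (Fin n)) × (Finset (Fin n) → ℕ) //
        (∀ B ∈ p.1.parts, 1 ≤ p.2 B ∧ p.2 B ≤ a B.card) ∧
        (∀ B, B ∉ p.1.parts → p.2 B = 0) ∧
        p.1.parts.card = k} ≃
      Σ π : {π : Finpartition (Finset.univ : Finset (Fin n)) // π.parts.card = k},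
        ((B : π.1.parts) → Fin (a (B : Finset (Fin n)).card)) := by
    refine
      { toFun := fun p => ⟨⟨p.1.1, p.2.2.2⟩, fun B => ⟨p.1.2 B.1 - 1, ?_⟩⟩
        invFun := fun q => ⟨⟨q.1.1, fun B => if h : B ∈ q.1.1.parts then (q.2 ⟨B, h⟩ : ℕ) + 1 else 0⟩,
          ?_, ?_, q.1.2⟩
        left_inv := ?_
        right_inv := ?_ }
    · obtain ⟨h1, h2⟩ := p.2.1 B.1 B.2
      omega
    · intro B hB
      simp only [dif_pos hB]
      refine ⟨Nat.succ_le_succ (Nat.zero_le _), ?_⟩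
      exact (q.2 ⟨B, hB⟩).isLt
    · intro B hB
      simp only [dif_neg hB]
    · rintro ⟨⟨π, c⟩, h1, h2, h3⟩
      apply Subtype.ext
      dsimp only
      refine Prod.ext rfl (funext fun B => ?_)
      dsimp only
      by_cases hB : B ∈ π.parts
      · rw [dif_pos hB]
        have h : 1 ≤ c B := (h1 B hB).1
        show c B - 1 + 1 = c B
        omega
      · rw [dif_neg hB]
        exact (h2 B hB).symm
    · rintro ⟨⟨π, hπ⟩, f⟩
      refine Sigma.ext rfl (heq_of_eq ?_)
      funext B
      apply Fin.ext
      simp only [Fin.val_mk]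
      rw [dif_pos (show (B : Finset (Fin n)) ∈ π.parts from B.2)]
      rfl
  rw [Nat.card_congr e, Nat.card_eq_fintype_card, Fintype.card_sigma, Wsum]
  have h1 : ∀ i : {π : Finpartition (Finset.univ : Finset (Fin n)) // π.parts.card = k},
      Fintype.card ((B : i.1.parts) → Fin (a (B : Finset (Fin n)).card))
        = ∏ B ∈ i.1.parts, a B.card := by
    intro i
    rw [Fintype.card_pi]
    simp only [Fintype.card_fin]
    exact Finset.prod_coe_sort i.1.parts (fun B => a B.card)
  rw [Fintype.sum_congr _ _ h1]
  exact (Finset.sum_subtype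
    (s := (Finset.univ : Finset (Finpartition (Finset.univ : Finset (Fin n)))).filter
      (fun π => π.parts.card = k))
    (p := fun π => π.parts.card = k)
    (f := fun π => ∏ B ∈ π.parts, a B.card) (fun x => by simp)).symm




/-- the admissible index set -/
def BellSet (N n k : ℕ) : Finset (ℕ → ℕ) :=
  ((Finset.range N).piAntidiag k).filter (fun J => ∑ m ∈ Finset.range N, (m+1) * J m = n)

/-- the summand -/
noncomputable def BellTerm (a : ℕ → ℚ) (N n : ℕ) (J : ℕ → ℕ) : ℚ :=
  (n.factorial : ℚ) /
      ((∏ m ∈ Finset.range N, (J m).factorial * ((m+1).factorial) ^ (J m) : ℕ) : ℚ) *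
    ∏ m ∈ Finset.range N, a (m+1) ^ (J m)

noncomputable def Pq (a : ℕ → ℚ) (N n k : ℕ) : ℚ := ∑ J ∈ BellSet N n k, BellTerm a N n J

section conv
variable {M : Type*} [AddCommMonoid M] {M' : Type*} [CommMonoid M']

def toJ {n : ℕ} (j : Fin n → Fin (n+1)) : ℕ → ℕ := fun m => if h : m < n then (j ⟨m, h⟩ : ℕ) else 0

lemma conv_sum {n : ℕ} (g : ℕ → ℕ → M) (j : Fin n → Fin (n+1)) :
    ∑ i : Fin n, g i.1 (j i : ℕ) = ∑ m ∈ Finset.range n, g m (toJ j m) := by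
  rw [← Fin.sum_univ_eq_sum_range (fun m => g m (toJ j m)) n]
  refine Finset.sum_congr rfl fun i _ => ?_
  simp only [toJ, dif_pos i.2, Fin.eta]

lemma conv_prod {n : ℕ} (g : ℕ → ℕ → M') (j : Fin n → Fin (n+1)) :
    ∏ i : Fin n, g i.1 (j i : ℕ) = ∏ m ∈ Finset.range n, g m (toJ j m) := by
  rw [← Fin.prod_univ_eq_prod_range (fun m => g m (toJ j m)) n]
  refine Finset.prod_congr rfl fun i _ => ?_
  simp only [toJ, dif_pos i.2, Fin.eta]

end conv

lemma bellset_bound {N n k : ℕ} {J : ℕ → ℕ} (hJ : J ∈ BellSet N n k) (m : ℕ) (hm : m < N) :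
    (m + 1) * J m ≤ n := by
  simp only [BellSet, Finset.mem_filter, Finset.mem_piAntidiag] at hJ
  exact hJ.2 ▸ Finset.single_le_sum (f := fun m => (m+1) * J m)
    (fun _ _ => Nat.zero_le _) (Finset.mem_range.2 hm)

lemma partialBell_eq_Pq (a : ℕ → ℚ) (n k : ℕ) : partialBell a n k = Pq a n n k := by
  classical
  rw [partialBell, ← Finset.sum_filter, Pq]
  refine Finset.sum_bij' (i := fun j _ => toJ j)
    (j := fun J hJ => fun i => ⟨J i.1, ?_⟩) ?_ ?_ ?_ ?_ ?_
  case refine_1 =>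
    -- bound
    have h1 := bellset_bound hJ i.1 i.2
    have : J i.1 ≤ (i.1 + 1) * J i.1 := Nat.le_mul_of_pos_left _ (Nat.succ_pos _)
    omega
  case refine_2 =>
    intro j hj
    simp only [Finset.mem_filter, Finset.mem_univ, true_and] at hj
    simp only [BellSet, Finset.mem_filter, Finset.mem_piAntidiag]
    refine ⟨⟨?_, ?_⟩, ?_⟩
    · rw [← conv_sum (fun _ v => v) j]; exact hj.1
    · intro i hi
      simp only [toJ] at hi
      by_contra h
      rw [dif_neg (fun hlt => h (Finset.mem_range.2 hlt))] at hi
      exact hi rfl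
    · rw [← conv_sum (fun m v => (m+1) * v) j]; exact hj.2
  case refine_3 =>
    intro J hJ
    simp only [Finset.mem_filter, Finset.mem_univ, true_and]
    simp only [BellSet, Finset.mem_filter, Finset.mem_piAntidiag] at hJ
    constructor
    · rw [Fin.sum_univ_eq_sum_range (fun m => J m) n]; exact hJ.1.1
    · rw [Fin.sum_univ_eq_sum_range (fun m => (m+1) * J m) n]; exact hJ.2
  case refine_4 =>
    intro j hj
    funext i
    apply Fin.ext
    simp only [toJ, dif_pos i.2, Fin.eta]
  case refine_5 =>
    intro J hJ
    funext m
    simp only [BellSet, Finset.mem_filter, Finset.mem_piAntidiag] at hJ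
    by_cases hm : m < n
    · simp only [toJ, dif_pos hm]
    · simp only [toJ, dif_neg hm]
      by_contra h
      have := hJ.1.2 m (fun hh => h hh.symm)
      exact hm (Finset.mem_range.1 this)
  case refine_6 =>
    intro j hj
    rw [BellTerm]
    rw [conv_prod (fun m v => v.factorial * ((m+1).factorial) ^ v) j,
      conv_prod (fun m v => a (m+1) ^ v) j]

lemma bellset_zero_of_ge {N n k m : ℕ} {J : ℕ → ℕ} (hJ : J ∈ BellSet N n k) (hm : n ≤ m) :
    J m = 0 := by
  by_cases hmN : m < N
  · have h1 := bellset_bound hJ m hmN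
    by_contra h
    have : 1 ≤ J m := Nat.pos_of_ne_zero h
    have : m + 1 ≤ (m+1) * J m := Nat.le_mul_of_pos_right _ this
    omega
  · simp only [BellSet, Finset.mem_filter, Finset.mem_piAntidiag] at hJ
    by_contra h
    exact hmN (Finset.mem_range.1 (hJ.1.2 m h))

lemma bellset_eq {N n k : ℕ} (h : n ≤ N) : BellSet N n k = BellSet n n k := by
  ext J
  constructor
  · intro hJ
    have hz : ∀ m, n ≤ m → J m = 0 := fun m hm => bellset_zero_of_ge hJ hm
    have e1 : ∑ x ∈ Finset.range n, J x = ∑ x ∈ Finset.range N, J x :=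
      Finset.sum_subset (Finset.range_subset_range.2 h)
        (fun x _ hx => hz x (le_of_not_gt (fun hh => hx (Finset.mem_range.2 hh))))
    have e2 : ∑ x ∈ Finset.range n, (x+1) * J x = ∑ x ∈ Finset.range N, (x+1) * J x :=
      Finset.sum_subset (Finset.range_subset_range.2 h)
        (fun x _ hx => by
          rw [hz x (le_of_not_gt (fun hh => hx (Finset.mem_range.2 hh))), mul_zero])
    simp only [BellSet, Finset.mem_filter, Finset.mem_piAntidiag] at hJ ⊢
    exact ⟨⟨e1.trans hJ.1.1,
      fun i hi => Finset.mem_range.2 (lt_of_not_ge fun hh => hi (hz i hh))⟩,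
      e2.trans hJ.2⟩
  · intro hJ
    have hz : ∀ m, n ≤ m → J m = 0 := fun m hm => bellset_zero_of_ge hJ hm
    have e1 : ∑ x ∈ Finset.range n, J x = ∑ x ∈ Finset.range N, J x :=
      Finset.sum_subset (Finset.range_subset_range.2 h)
        (fun x _ hx => hz x (le_of_not_gt (fun hh => hx (Finset.mem_range.2 hh))))
    have e2 : ∑ x ∈ Finset.range n, (x+1) * J x = ∑ x ∈ Finset.range N, (x+1) * J x :=
      Finset.sum_subset (Finset.range_subset_range.2 h)
        (fun x _ hx => by
          rw [hz x (le_of_not_gt (fun hh => hx (Finset.mem_range.2 hh))), mul_zero])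
    simp only [BellSet, Finset.mem_filter, Finset.mem_piAntidiag] at hJ ⊢
    exact ⟨⟨e1.symm.trans hJ.1.1,
      fun i hi => Finset.mem_range.2 (lt_of_lt_of_le (Finset.mem_range.1 (hJ.1.2 i hi)) h)⟩,
      e2.symm.trans hJ.2⟩

lemma pq_stab (a : ℕ → ℚ) {N n : ℕ} (k : ℕ) (h : n ≤ N) : Pq a N n k = Pq a n n k := by
  rw [Pq, Pq, bellset_eq h]
  refine Finset.sum_congr rfl fun J hJ => ?_
  have hz : ∀ m, n ≤ m → J m = 0 := fun m hm => bellset_zero_of_ge hJ hm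
  rw [BellTerm, BellTerm]
  have h1 : (∏ m ∈ Finset.range n, (J m).factorial * ((m+1).factorial) ^ (J m) : ℕ)
      = ∏ m ∈ Finset.range N, (J m).factorial * ((m+1).factorial) ^ (J m) :=
    Finset.prod_subset (Finset.range_subset_range.2 h) (fun x _ hx => by
      rw [hz x (le_of_not_gt (fun hh => hx (Finset.mem_range.2 hh)))]
      simp)
  have h2 : (∏ m ∈ Finset.range n, a (m+1) ^ (J m)) = ∏ m ∈ Finset.range N, a (m+1) ^ (J m) :=
    Finset.prod_subset (Finset.range_subset_range.2 h) (fun x _ hx => by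
      rw [hz x (le_of_not_gt (fun hh => hx (Finset.mem_range.2 hh)))]
      simp)
  rw [← h1, ← h2]

lemma pq_zero (a : ℕ → ℚ) (k : ℕ) : Pq a 0 0 k = if k = 0 then 1 else 0 := by
  rw [Pq, BellSet]
  rcases eq_or_ne k 0 with rfl | hk
  · rw [if_pos rfl]
    rw [show Finset.range 0 = ∅ from rfl, Finset.piAntidiag_empty_zero]
    rw [Finset.filter_true_of_mem (by simp)]
    simp [BellTerm]
  · rw [if_neg hk]
    rw [show Finset.range 0 = ∅ from rfl, Finset.piAntidiag_empty_of_ne_zero hk]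
    simp

lemma pq_succ_zero (a : ℕ → ℚ) (n : ℕ) : Pq a (n+1) (n+1) 0 = 0 := by
  rw [Pq]
  rw [Finset.sum_eq_zero]
  intro J hJ
  simp only [BellSet, Finset.mem_filter, Finset.mem_piAntidiag] at hJ
  exfalso
  have h0 : ∀ m ∈ Finset.range (n+1), J m = 0 :=
    fun m hm => (Finset.sum_eq_zero_iff).1 hJ.1.1 m hm
  have : ∑ m ∈ Finset.range (n+1), (m+1) * J m = 0 :=
    Finset.sum_eq_zero fun m hm => by rw [h0 m hm, mul_zero]
  omega




lemma denom_pos (N : ℕ) (J : ℕ → ℕ) :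
    0 < ∏ m ∈ Finset.range N, (J m).factorial * ((m+1).factorial) ^ (J m) :=
  Finset.prod_pos fun m _ => Nat.mul_pos (Nat.factorial_pos _) (Nat.pow_pos (Nat.factorial_pos _))

lemma pq_rec (a : ℕ → ℚ) (n k : ℕ) :
    Pq a (n+1) (n+1) (k+1)
      = ∑ m ∈ Finset.range (n+1), (n.choose m : ℚ) * a (m+1) * Pq a (n+1) (n-m) k := by
  classical
  -- step 1: weight splitting
  have key : ∀ J ∈ BellSet (n+1) (n+1) (k+1),
      BellTerm a (n+1) (n+1) J
        = ∑ m ∈ Finset.range (n+1),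
            (((m+1) * J m : ℕ) : ℚ) / ((n:ℚ)+1) * BellTerm a (n+1) (n+1) J := by
    intro J hJ
    have hs : ∑ m ∈ Finset.range (n+1), (((m+1) * J m : ℕ) : ℚ) = ((n:ℚ)+1) := by
      rw [← Nat.cast_sum]
      have : ∑ m ∈ Finset.range (n+1), (m+1) * J m = n + 1 := by
        simp only [BellSet, Finset.mem_filter] at hJ
        exact hJ.2
      rw [this]
      push_cast
      ring
    rw [← Finset.sum_mul, ← Finset.sum_div, hs, div_self (by positivity), one_mul]
  rw [Pq, Finset.sum_congr rfl key, Finset.sum_comm]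
  refine Finset.sum_congr rfl fun m hm => ?_
  have hmn : m ≤ n := by
    rw [Finset.mem_range] at hm; omega
  -- step 2: restrict to J with J m ≠ 0
  rw [← Finset.sum_filter_of_ne (p := fun J => J m ≠ 0)
    (fun J _ hw => by
      intro h0
      rw [h0, mul_zero, Nat.cast_zero, zero_div, zero_mul] at hw
      exact hw rfl)]
  -- step 3: bijection with BellSet (n+1) (n-m) k
  rw [Pq, Finset.mul_sum]
  refine Finset.sum_bij' (i := fun J _ => Function.update J m (J m - 1))
    (j := fun J _ => Function.update J m (J m + 1)) ?_ ?_ ?_ ?_ ?_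
  case refine_1 =>
    intro J hJ
    simp only [Finset.mem_filter, BellSet, Finset.mem_piAntidiag] at hJ ⊢
    obtain ⟨⟨⟨hsum, hsupp⟩, hwt⟩, hm0⟩ := hJ
    have hrw : ∀ b i, (i+1) * Function.update J m b i
        = Function.update (fun i => (i+1) * J i) m ((m+1)*b) i := by
      intro b i
      rcases eq_or_ne i m with rfl | h
      · simp
      · simp [Function.update_of_ne h]
    have e1 : J m + ∑ x ∈ (Finset.range (n+1)).erase m, J x = k + 1 := by
      rw [Finset.add_sum_erase _ _ hm]; exact hsum
    have e2 : (m+1) * J m + ∑ x ∈ (Finset.range (n+1)).erase m, (x+1) * J x = n + 1 := by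
      rw [Finset.add_sum_erase _ (fun i => (i+1) * J i) hm]; exact hwt
    refine ⟨⟨?_, ?_⟩, ?_⟩
    · rw [Finset.sum_update_of_mem hm, Finset.sdiff_singleton_eq_erase]
      omega
    · intro i hi
      rcases eq_or_ne i m with rfl | h
      · exact hm
      · rw [Function.update_of_ne h] at hi
        exact hsupp i hi
    · rw [Finset.sum_congr rfl (fun i _ => hrw (J m - 1) i), Finset.sum_update_of_mem hm,
        Finset.sdiff_singleton_eq_erase]
      obtain ⟨q, hq⟩ : ∃ q, J m = q + 1 := ⟨J m - 1, by omega⟩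
      rw [hq, Nat.add_sub_cancel]
      rw [hq] at e2
      have hh : (m+1) * (q+1) = (m+1) * q + (m+1) := by ring
      omega
  case refine_2 =>
    intro J hJ
    simp only [Finset.mem_filter, BellSet, Finset.mem_piAntidiag] at hJ ⊢
    obtain ⟨⟨hsum, hsupp⟩, hwt⟩ := hJ
    have hrw : ∀ b i, (i+1) * Function.update J m b i
        = Function.update (fun i => (i+1) * J i) m ((m+1)*b) i := by
      intro b i
      rcases eq_or_ne i m with rfl | h
      · simp
      · simp [Function.update_of_ne h]
    have e1 : J m + ∑ x ∈ (Finset.range (n+1)).erase m, J x = k := by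
      rw [Finset.add_sum_erase _ _ hm]; exact hsum
    have e2 : (m+1) * J m + ∑ x ∈ (Finset.range (n+1)).erase m, (x+1) * J x = n - m := by
      rw [Finset.add_sum_erase _ (fun i => (i+1) * J i) hm]; exact hwt
    refine ⟨⟨⟨?_, ?_⟩, ?_⟩, ?_⟩
    · rw [Finset.sum_update_of_mem hm, Finset.sdiff_singleton_eq_erase]
      omega
    · intro i hi
      rcases eq_or_ne i m with rfl | h
      · exact hm
      · rw [Function.update_of_ne h] at hi
        exact hsupp i hi
    · rw [Finset.sum_congr rfl (fun i _ => hrw (J m + 1) i), Finset.sum_update_of_mem hm,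
        Finset.sdiff_singleton_eq_erase]
      have hh : (m+1) * (J m + 1) = (m+1) * J m + (m + 1) := by ring
      omega
    · simp
  case refine_3 =>
    intro J hJ
    simp only [Finset.mem_filter] at hJ
    rw [Function.update_idem, Function.update_self]
    have : J m - 1 + 1 = J m := by omega
    rw [this, Function.update_eq_self]
  case refine_4 =>
    intro J hJ
    rw [Function.update_idem, Function.update_self, Nat.add_sub_cancel, Function.update_eq_self]
  case refine_5 =>
    intro J hJ
    simp only [Finset.mem_filter, BellSet, Finset.mem_piAntidiag] at hJ
    obtain ⟨⟨⟨hsum, hsupp⟩, hwt⟩, hm0⟩ := hJ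
    obtain ⟨q, hq⟩ : ∃ q, J m = q + 1 := ⟨J m - 1, by omega⟩
    -- split products at m
    have hD : (∏ i ∈ Finset.range (n+1), (J i).factorial * ((i+1).factorial) ^ (J i))
        = ((J m).factorial * ((m+1).factorial) ^ (J m)) *
            ∏ i ∈ (Finset.range (n+1)).erase m, (J i).factorial * ((i+1).factorial) ^ (J i) :=
      (Finset.mul_prod_erase _ _ hm).symm
    have hD' : (∏ i ∈ Finset.range (n+1),
          (Function.update J m (J m - 1) i).factorial * ((i+1).factorial) ^ (Function.update J m (J m - 1) i))
        = (q.factorial * ((m+1).factorial) ^ q) *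
            ∏ i ∈ (Finset.range (n+1)).erase m, (J i).factorial * ((i+1).factorial) ^ (J i) := by
      rw [← Finset.mul_prod_erase (Finset.range (n+1)) (fun i =>
        (Function.update J m (J m - 1) i).factorial * ((i+1).factorial) ^ (Function.update J m (J m - 1) i)) hm]
      congr 1
      · rw [Function.update_self, hq, Nat.add_sub_cancel]
      · refine Finset.prod_congr rfl fun i hi => ?_
        rw [Function.update_of_ne (Finset.ne_of_mem_erase hi)]
    have hA : (∏ i ∈ Finset.range (n+1), a (i+1) ^ (J i))
        = a (m+1) ^ (J m) * ∏ i ∈ (Finset.range (n+1)).erase m, a (i+1) ^ (J i) :=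
      (Finset.mul_prod_erase _ _ hm).symm
    have hA' : (∏ i ∈ Finset.range (n+1), a (i+1) ^ (Function.update J m (J m - 1) i))
        = a (m+1) ^ q * ∏ i ∈ (Finset.range (n+1)).erase m, a (i+1) ^ (J i) := by
      rw [← Finset.mul_prod_erase (Finset.range (n+1)) (fun i => a (i+1) ^ (Function.update J m (J m - 1) i)) hm]
      congr 1
      · rw [Function.update_self, hq, Nat.add_sub_cancel]
      · refine Finset.prod_congr rfl fun i hi => ?_
        rw [Function.update_of_ne (Finset.ne_of_mem_erase hi)]
    rw [BellTerm, BellTerm, hD, hD', hA, hA', hq]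
    set R := ∏ i ∈ (Finset.range (n+1)).erase m, (J i).factorial * ((i+1).factorial) ^ (J i) with hR
    have hRpos : 0 < R := Finset.prod_pos fun i _ =>
      Nat.mul_pos (Nat.factorial_pos _) (Nat.pow_pos (Nat.factorial_pos _))
    have hR0 : ((R : ℕ) : ℚ) ≠ 0 := by exact_mod_cast hRpos.ne'
    have hch : ((n.factorial : ℕ) : ℚ)
        = (n.choose m : ℚ) * (m.factorial : ℚ) * ((n-m).factorial : ℚ) := by
      exact_mod_cast (Nat.choose_mul_factorial_mul_factorial hmn).symm
    have hfs : ((n+1).factorial : ℚ) = ((n:ℚ)+1) * (n.factorial : ℚ) := by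
      rw [Nat.factorial_succ]; push_cast; ring
    have hfq : ((q+1).factorial : ℚ) = ((q:ℚ)+1) * (q.factorial : ℚ) := by
      rw [Nat.factorial_succ]; push_cast; ring
    have hfm : ((m+1).factorial : ℚ) = ((m:ℚ)+1) * (m.factorial : ℚ) := by
      rw [Nat.factorial_succ]; push_cast; ring
    push_cast
    rw [hfs, hfq, hfm, hch]
    have h1 : ((q:ℚ)+1) ≠ 0 := by positivity
    have h2 : ((n:ℚ)+1) ≠ 0 := by positivity
    have h3 : ((m:ℚ)+1) ≠ 0 := by positivity
    have h4 : (q.factorial : ℚ) ≠ 0 := by exact_mod_cast (Nat.factorial_pos q).ne'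
    have h5 : (m.factorial : ℚ) ≠ 0 := by exact_mod_cast (Nat.factorial_pos m).ne'
    have h6 : (((m:ℚ)+1) * (m.factorial : ℚ)) ^ q ≠ 0 := by positivity
    field_simp
    ring


lemma pq_eq_brec (a : ℕ → ℕ) : ∀ n, ∀ k, Pq (fun m => (a m : ℚ)) n n k = (Brec a n k : ℚ) := by
  intro n
  induction n using Nat.strong_induction_on with
  | _ n ih =>
    match n with
    | 0 =>
      intro k
      rw [pq_zero]
      rcases k with - | k <;> simp
    | n+1 =>
      intro k
      rcases k with - | k
      · rw [pq_succ_zero]; simp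
      · rw [pq_rec, brec_succ_succ]
        push_cast
        refine Finset.sum_congr rfl fun m hm => ?_
        rw [Finset.mem_range] at hm
        rw [pq_stab _ k (show n - m ≤ n + 1 by omega), ih (n - m) (by omega) k]

/-- A colored set partition of `{1,…,n}` associated to `a : ℕ → ℕ` is a set partition `π`
together with a choice, for each block `B` of `π`, of a color in `{1,…,a(|B|)}`.  We encode the
coloring as a function on all finsets which vanishes outside the blocks of `π`. -/
theorem colored_partitions_card_eq_partialBell (a : ℕ → ℕ) (n k : ℕ) (hn : 1 ≤ n) :
    (Nat.card {p : Finpartition (Finset.univ : Finset (Fin n)) × (Finset (Fin n) → ℕ) //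
        (∀ B ∈ p.1.parts, 1 ≤ p.2 B ∧ p.2 B ≤ a B.card) ∧
        (∀ B, B ∉ p.1.parts → p.2 B = 0) ∧
        p.1.parts.card = k} : ℚ) =
      partialBell (fun m => (a m : ℚ)) n k := by
  rw [card_colored a n k, partialBell_eq_Pq, pq_eq_brec a n k, wsum_eq,
    show (Finset.univ : Finset (Fin n)).card = n by simp]
end

section
/- For every sequence a = (a_1, a_2, …) of natural numbers and every natural number n ≥ 1, the total number of colored set partitions of {1,…,n} associated to a equals the complete Bell polynomial value A(n;a) (where the sequence a is regarded as a sequence of rationals). -/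
open Finset BigOperators

/-- The complete Bell polynomial value `A(n;a) = Σ_{k=0}^n B(n,k;a)`. -/
noncomputable def completeBell (a : ℕ → ℚ) (n : ℕ) : ℚ :=
  ∑ k ∈ Finset.range (n + 1), partialBell a n k

def extFun {m L : ℕ} (hm : m ≤ L) (j' : Fin m → Fin (m+1)) : Fin L → Fin (L+1) :=
  fun i => if h : (i : ℕ) < m then ⟨(j' ⟨i, h⟩ : ℕ), by have := (j' ⟨i,h⟩).isLt; omega⟩ else 0

lemma extFun_val {m L : ℕ} (hm : m ≤ L) (j' : Fin m → Fin (m+1)) (i : Fin L) :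
    (extFun hm j' i : ℕ) = if h : (i : ℕ) < m then (j' ⟨i, h⟩ : ℕ) else 0 := by
  unfold extFun; split <;> rfl

lemma prod_extFun {M : Type*} [CommMonoid M] {m L : ℕ} (hm : m ≤ L) (F : ℕ → ℕ → M)
    (j' : Fin m → Fin (m+1)) (hF : ∀ i, F i 0 = 1) :
    ∏ i : Fin L, F i (extFun hm j' i) = ∏ r : Fin m, F r (j' r) := by
  set G : ℕ → ℕ := fun i => if h : i < m then (j' ⟨i, h⟩ : ℕ) else 0 with hG
  have h1 : ∀ i : Fin L, (extFun hm j' i : ℕ) = G i := fun i => extFun_val hm j' i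
  calc ∏ i : Fin L, F i (extFun hm j' i) = ∏ i : Fin L, F i (G i) := by
        refine Finset.prod_congr rfl fun i _ => by rw [h1]
    _ = ∏ i ∈ Finset.range L, F i (G i) := Fin.prod_univ_eq_prod_range (fun i => F i (G i)) L
    _ = ∏ i ∈ Finset.range m, F i (G i) := by
        refine (Finset.prod_subset (Finset.range_subset_range.2 hm) fun i _ hi => ?_).symm
        rw [Finset.mem_range, not_lt] at hi
        rw [hG]; simp only [dif_neg (not_lt.2 hi)]; exact hF i
    _ = ∏ r : Fin m, F r (G r) := (Fin.prod_univ_eq_prod_range (fun i => F i (G i)) m).symm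
    _ = ∏ r : Fin m, F r (j' r) := by
        refine Finset.prod_congr rfl fun r _ => ?_
        rw [hG]; simp only [Fin.is_lt, dif_pos, Fin.eta]

lemma sum_extFun {m L : ℕ} (hm : m ≤ L) (F : ℕ → ℕ → ℕ)
    (j' : Fin m → Fin (m+1)) (hF : ∀ i, F i 0 = 0) :
    ∑ i : Fin L, F i (extFun hm j' i) = ∑ r : Fin m, F r (j' r) := by
  set G : ℕ → ℕ := fun i => if h : i < m then (j' ⟨i, h⟩ : ℕ) else 0 with hG
  have h1 : ∀ i : Fin L, (extFun hm j' i : ℕ) = G i := fun i => extFun_val hm j' i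
  calc ∑ i : Fin L, F i (extFun hm j' i) = ∑ i : Fin L, F i (G i) := by
        refine Finset.sum_congr rfl fun i _ => by rw [h1]
    _ = ∑ i ∈ Finset.range L, F i (G i) := Fin.sum_univ_eq_sum_range (fun i => F i (G i)) L
    _ = ∑ i ∈ Finset.range m, F i (G i) := by
        refine (Finset.sum_subset (Finset.range_subset_range.2 hm) fun i _ hi => ?_).symm
        rw [Finset.mem_range, not_lt] at hi
        rw [hG]; simp only [dif_neg (not_lt.2 hi)]; exact hF i
    _ = ∑ r : Fin m, F r (G r) := (Fin.sum_univ_eq_sum_range (fun i => F i (G i)) m).symm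
    _ = ∑ r : Fin m, F r (j' r) := by
        refine Finset.sum_congr rfl fun r _ => ?_
        rw [hG]; simp only [Fin.is_lt, dif_pos, Fin.eta]

-- weight
noncomputable def W (a : ℕ → ℚ) (L m : ℕ) (j : Fin L → Fin (L+1)) : ℚ :=
  (m.factorial : ℚ) /
      ((∏ i, (j i : ℕ).factorial * ((i.1 + 1).factorial) ^ (j i : ℕ) : ℕ) : ℚ) *
    ∏ i, a (i.1 + 1) ^ (j i : ℕ)

noncomputable def QQ (a : ℕ → ℚ) (L m : ℕ) : ℚ :=
  ∑ j : Fin L → Fin (L+1), if (∑ i, (i.1 + 1) * (j i : ℕ)) = m then W a L m j else 0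

lemma completeBell_eq_sum (a : ℕ → ℚ) (m : ℕ) :
    completeBell a m = QQ a m m := by
  unfold completeBell partialBell QQ W
  rw [Finset.sum_comm]
  refine Finset.sum_congr rfl fun j _ => ?_
  by_cases hB : (∑ i, (i.1 + 1) * (j i : ℕ)) = m
  · have hA : (∑ i, (j i : ℕ)) ∈ Finset.range (m+1) := by
      rw [Finset.mem_range, Nat.lt_succ_iff]
      exact le_trans (Finset.sum_le_sum fun i _ => Nat.le_mul_of_pos_left _ (Nat.succ_pos _))
        (le_of_eq hB)
    rw [if_pos hB]
    rw [show (fun k => if (∑ i, (j i : ℕ)) = k ∧ (∑ i, (i.1 + 1) * (j i : ℕ)) = m then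
      (m.factorial : ℚ) /
          ((∏ i, (j i : ℕ).factorial * ((i.1 + 1).factorial) ^ (j i : ℕ) : ℕ) : ℚ) *
        ∏ i, a (i.1 + 1) ^ (j i : ℕ) else 0) = fun k => if (∑ i, (j i : ℕ)) = k then
      (m.factorial : ℚ) /
          ((∏ i, (j i : ℕ).factorial * ((i.1 + 1).factorial) ^ (j i : ℕ) : ℕ) : ℚ) *
        ∏ i, a (i.1 + 1) ^ (j i : ℕ) else 0 from funext fun k => by simp [hB]]
    rw [Finset.sum_ite_eq (Finset.range (m+1)) _ _, if_pos hA]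
  · rw [if_neg hB]
    exact Finset.sum_eq_zero fun k _ => by simp [hB]

lemma QQ_eq_completeBell (a : ℕ → ℚ) {m L : ℕ} (hm : m ≤ L) :
    QQ a L m = completeBell a m := by
  rw [completeBell_eq_sum]
  unfold QQ
  rw [← Finset.sum_filter, ← Finset.sum_filter]
  refine (Finset.sum_nbij (i := extFun hm) ?_ ?_ ?_ ?_).symm
  · intro j' hj'
    simp only [Finset.mem_filter, Finset.mem_univ, true_and] at hj' ⊢
    rw [sum_extFun hm (fun i v => (i+1) * v) j' (fun i => by simp)]
    exact hj'
  · intro j1 h1 j2 h2 h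
    funext r
    have hr : ((Fin.castLE hm r : Fin L) : ℕ) < m := by simp [r.isLt]
    have hmk : (⟨((Fin.castLE hm r : Fin L) : ℕ), hr⟩ : Fin m) = r := by apply Fin.ext; simp
    have e1 : (extFun hm j1 (Fin.castLE hm r) : ℕ) = (j1 r : ℕ) := by
      rw [extFun_val, dif_pos hr, hmk]
    have e2 : (extFun hm j2 (Fin.castLE hm r) : ℕ) = (j2 r : ℕ) := by
      rw [extFun_val, dif_pos hr, hmk]
    apply Fin.ext
    rw [← e1, ← e2, h]
  · intro J hJ
    simp only [Finset.coe_filter, Finset.mem_univ, true_and, Set.mem_setOf_eq] at hJ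
    have hbig : ∀ i : Fin L, ((i : ℕ) + 1) * (J i : ℕ) ≤ m := by
      intro i
      rw [← hJ]
      exact Finset.single_le_sum (f := fun i : Fin L => ((i:ℕ)+1) * (J i : ℕ))
        (fun _ _ => Nat.zero_le _) (Finset.mem_univ i)
    have hle : ∀ i : Fin L, (J i : ℕ) ≤ m := fun i =>
      le_trans (Nat.le_mul_of_pos_left _ (Nat.succ_pos _)) (hbig i)
    refine ⟨fun r => ⟨(J (Fin.castLE hm r) : ℕ), Nat.lt_succ_of_le (hle _)⟩, ?_, ?_⟩
    · -- membership: proved after the equality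
      simp only [Finset.coe_filter, Finset.mem_univ, true_and, Set.mem_setOf_eq]
      have heq : extFun hm (fun r => (⟨(J (Fin.castLE hm r) : ℕ), Nat.lt_succ_of_le (hle _)⟩ : Fin (m+1))) = J := by
        funext i
        apply Fin.ext
        rw [extFun_val]
        split
        · next h => simp
        · next h =>
          rw [not_lt] at h
          have : ((i : ℕ) + 1) * (J i : ℕ) ≤ m := hbig i
          have : (J i : ℕ) = 0 := by nlinarith
          simp [this]
      refine Eq.trans ?_ hJ
      conv_rhs => rw [← heq]
      exact (sum_extFun hm (fun i v => (i+1) * v) (fun r => (⟨(J (Fin.castLE hm r) : ℕ), Nat.lt_succ_of_le (hle _)⟩ : Fin (m+1))) (fun i => by simp)).symm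
    · funext i
      apply Fin.ext
      rw [extFun_val]
      split
      · next h => simp
      · next h =>
        rw [not_lt] at h
        have : ((i : ℕ) + 1) * (J i : ℕ) ≤ m := hbig i
        have : (J i : ℕ) = 0 := by nlinarith
        simp [this]
  · intro j' hj'
    unfold W
    have hd := prod_extFun hm (fun i v => v.factorial * ((i+1).factorial) ^ v) j' (fun i => by simp)
    have ha := prod_extFun hm (fun i v => a (i+1) ^ v) j' (fun i => by simp)
    rw [hd, ha]

section helpers
variable {M : Type*} {L : ℕ}

lemma prod_update_point [CommMonoid M] (j : Fin L → Fin (L+1)) (i : Fin L) (v : Fin (L+1))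
    (F : ℕ → ℕ → M) :
    ∏ x : Fin L, F x ((Function.update j i v) x : ℕ)
      = F i (v : ℕ) * ∏ x ∈ Finset.univ.erase i, F x (j x : ℕ) := by
  have h : ∀ x : Fin L, F x ((Function.update j i v) x : ℕ)
      = Function.update (fun x : Fin L => F x (j x : ℕ)) i (F i (v : ℕ)) x := by
    intro x; rcases eq_or_ne x i with rfl | hx
    · simp
    · simp [Function.update_of_ne hx]
  rw [Finset.prod_congr rfl fun x _ => h x, Finset.prod_update_of_mem (Finset.mem_univ i),
    Finset.erase_eq]

lemma sum_update_point [AddCommMonoid M] (j : Fin L → Fin (L+1)) (i : Fin L) (v : Fin (L+1))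
    (F : ℕ → ℕ → M) :
    ∑ x : Fin L, F x ((Function.update j i v) x : ℕ)
      = F i (v : ℕ) + ∑ x ∈ Finset.univ.erase i, F x (j x : ℕ) := by
  have h : ∀ x : Fin L, F x ((Function.update j i v) x : ℕ)
      = Function.update (fun x : Fin L => F x (j x : ℕ)) i (F i (v : ℕ)) x := by
    intro x; rcases eq_or_ne x i with rfl | hx
    · simp
    · simp [Function.update_of_ne hx]
  rw [Finset.sum_congr rfl fun x _ => h x, Finset.sum_update_of_mem (Finset.mem_univ i),
    Finset.erase_eq]

lemma prod_point [CommMonoid M] (j : Fin L → Fin (L+1)) (i : Fin L) (F : ℕ → ℕ → M) :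
    ∏ x : Fin L, F x (j x : ℕ) = F i (j i : ℕ) * ∏ x ∈ Finset.univ.erase i, F x (j x : ℕ) :=
  (Finset.mul_prod_erase _ _ (Finset.mem_univ i)).symm

lemma sum_point [AddCommMonoid M] (j : Fin L → Fin (L+1)) (i : Fin L) (F : ℕ → ℕ → M) :
    ∑ x : Fin L, F x (j x : ℕ) = F i (j i : ℕ) + ∑ x ∈ Finset.univ.erase i, F x (j x : ℕ) :=
  (Finset.add_sum_erase _ _ (Finset.mem_univ i)).symm

end helpers
lemma dec_bound {n : ℕ} (w : Fin (n+2)) : (w : ℕ) - 1 < n + 2 := by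
  have := w.isLt; omega

lemma inc_bound {n : ℕ} {i : Fin (n+1)} {j' : Fin (n+1) → Fin (n+2)}
    (h : (∑ x : Fin (n+1), ((x:ℕ)+1) * (j' x : ℕ)) = n - (i:ℕ)) :
    (j' i : ℕ) + 1 < n + 2 := by
  have hb : ((i:ℕ)+1) * (j' i : ℕ) ≤ n - (i:ℕ) := by
    rw [← h]
    exact Finset.single_le_sum (f := fun x : Fin (n+1) => ((x:ℕ)+1) * (j' x : ℕ))
      (fun _ _ => Nat.zero_le _) (Finset.mem_univ i)
  have hle : (j' i : ℕ) ≤ ((i:ℕ)+1) * (j' i : ℕ) :=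
    Nat.le_mul_of_pos_left _ (Nat.succ_pos _)
  omega

set_option maxHeartbeats 1000000 in
lemma exchange_key (a : ℕ → ℚ) (n : ℕ) (i : Fin (n+1)) (hin : (i : ℕ) ≤ n) :
    (∑ j ∈ Finset.univ.filter (fun j : Fin (n+1) → Fin (n+2) =>
        (∑ x : Fin (n+1), ((x:ℕ)+1) * (j x : ℕ)) = n+1 ∧ 1 ≤ (j i : ℕ)),
      ((((i:ℕ)+1) * (j i : ℕ) : ℕ) : ℚ) / ((n:ℚ)+1) * W a (n+1) (n+1) j)
    = ∑ j' ∈ Finset.univ.filter (fun j' : Fin (n+1) → Fin (n+2) =>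
        (∑ x : Fin (n+1), ((x:ℕ)+1) * (j' x : ℕ)) = n - (i:ℕ)),
      (n.choose (i:ℕ) : ℚ) * a ((i:ℕ)+1) * W a (n+1) (n - (i:ℕ)) j' := by
  refine Finset.sum_bij'
    (i := fun j _ => Function.update j i
      (⟨(j i : ℕ) - 1, dec_bound (j i)⟩ : Fin (n+2)))
    (j := fun j' hj' => Function.update j' i
      (⟨(j' i : ℕ) + 1, inc_bound ((Finset.mem_filter.mp hj').2)⟩ : Fin (n+2)))
    ?_ ?_ ?_ ?_ ?_
  · intro j hj
    simp only [Finset.mem_filter, Finset.mem_univ, true_and] at hj ⊢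
    obtain ⟨hdeg, hpos⟩ := hj
    obtain ⟨v, hv⟩ : ∃ v, (j i : ℕ) = v + 1 := ⟨(j i : ℕ) - 1, by omega⟩
    have e1 := sum_update_point j i (⟨(j i : ℕ) - 1, dec_bound (j i)⟩ : Fin (n+2))
      (fun x w => (x+1) * w)
    have e2 := sum_point j i (fun x w => (x+1) * w)
    rw [hdeg] at e2
    simp only at e1 e2
    rw [e1, hv, Nat.add_sub_cancel]
    rw [hv, Nat.mul_succ] at e2
    set B := ((i:ℕ)+1) * v with hB
    omega
  · intro j' hj'
    simp only [Finset.mem_filter, Finset.mem_univ, true_and] at hj' ⊢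
    have e1 := sum_update_point j' i
      (⟨(j' i : ℕ) + 1, inc_bound hj'⟩ : Fin (n+2))
      (fun x w => (x+1) * w)
    have e2 := sum_point j' i (fun x w => (x+1) * w)
    rw [hj'] at e2
    simp only at e1 e2
    constructor
    · rw [e1, Nat.mul_succ]
      set B := ((i:ℕ)+1) * ((j' i : ℕ)) with hB
      omega
    · rw [Function.update_self]
      exact Nat.succ_le_succ (Nat.zero_le _)
  · intro j hj
    have hpos := (Finset.mem_filter.mp hj).2.2
    funext x
    rcases eq_or_ne x i with rfl | hx
    · simp only [Function.update_self]
      apply Fin.ext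
      simp only [Function.update_self]
      omega
    · simp only [Function.update_of_ne hx]
  · intro j' hj'
    funext x
    rcases eq_or_ne x i with rfl | hx
    · simp only [Function.update_self]
      apply Fin.ext
      simp only [Function.update_self]
      omega
    · simp only [Function.update_of_ne hx]
  · intro j hj
    simp only [Finset.mem_filter, Finset.mem_univ, true_and] at hj
    obtain ⟨hdeg, hpos⟩ := hj
    obtain ⟨v, hv⟩ : ∃ v, (j i : ℕ) = v + 1 := ⟨(j i : ℕ) - 1, by omega⟩
    unfold W
    have hD1 := prod_point j i (fun x w => w.factorial * ((x+1).factorial) ^ w)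
    have hD2 := prod_update_point j i
      (⟨(j i : ℕ) - 1, dec_bound (j i)⟩ : Fin (n+2))
      (fun x w => w.factorial * ((x+1).factorial) ^ w)
    have hP1 := prod_point j i (fun x w => a (x+1) ^ w)
    have hP2 := prod_update_point j i
      (⟨(j i : ℕ) - 1, dec_bound (j i)⟩ : Fin (n+2))
      (fun x w => a (x+1) ^ w)
    simp only at hD1 hD2 hP1 hP2
    set R : ℕ := ∏ x ∈ Finset.univ.erase i,
      ((j x : ℕ).factorial * (((x:ℕ)+1).factorial) ^ (j x : ℕ)) with hR
    set Ra : ℚ := ∏ x ∈ Finset.univ.erase i, a ((x:ℕ)+1) ^ (j x : ℕ) with hRa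
    have hRpos : 0 < R := Finset.prod_pos fun x _ => Nat.mul_pos (Nat.factorial_pos _)
      (Nat.pow_pos (Nat.factorial_pos _))
    have hch : (n.choose (i:ℕ)) * ((i:ℕ).factorial * (n - (i:ℕ)).factorial) = n.factorial := by
      have := Nat.choose_mul_factorial_mul_factorial hin
      rw [← this]; ring
    have h1 : ((n:ℕ)+1).factorial = (n+1) * n.factorial := Nat.factorial_succ n
    have h2 : (v+1).factorial = (v+1) * v.factorial := Nat.factorial_succ v
    have h3 : (((i:ℕ)+1)).factorial = ((i:ℕ)+1) * (i:ℕ).factorial := Nat.factorial_succ _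
    have hne1 : ((n:ℚ)+1) ≠ 0 := by positivity
    have hne2 : ((v.factorial : ℕ) : ℚ) ≠ 0 :=
      Nat.cast_ne_zero.mpr (Nat.factorial_ne_zero v)
    have hne3 : (((i:ℕ).factorial : ℕ) : ℚ) ≠ 0 :=
      Nat.cast_ne_zero.mpr (Nat.factorial_ne_zero _)
    have hne5 : ((R : ℕ) : ℚ) ≠ 0 := Nat.cast_ne_zero.mpr hRpos.ne'
    have hne6 : ((i:ℚ)+1) ≠ 0 := by positivity
    have hne7 : ((v:ℚ)+1) ≠ 0 := by positivity
    rw [hD1, hD2, hP1, hP2, hv, Nat.add_sub_cancel, h1, h2, pow_succ, h3, ← hch]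
    push_cast
    field_simp
    ring

lemma completeBell_succ (a : ℕ → ℚ) (n : ℕ) :
    completeBell a (n+1)
      = ∑ k ∈ Finset.range (n+1), (n.choose k : ℚ) * a (k+1) * completeBell a (n-k) := by
  rw [show completeBell a (n+1) = QQ a (n+1) (n+1) from (QQ_eq_completeBell a le_rfl).symm]
  have step1 : QQ a (n+1) (n+1) = ∑ j : Fin (n+1) → Fin (n+2), ∑ i : Fin (n+1),
      (if (∑ x : Fin (n+1), ((x:ℕ)+1) * (j x : ℕ)) = n+1 then
        ((((i:ℕ)+1) * (j i : ℕ) : ℕ) : ℚ) / ((n:ℚ)+1) * W a (n+1) (n+1) j else 0) := by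
    rw [QQ]
    refine Finset.sum_congr rfl fun j _ => ?_
    by_cases h : (∑ x : Fin (n+1), ((x:ℕ)+1) * (j x : ℕ)) = n+1
    · simp only [if_pos h]
      have hc : (∑ i : Fin (n+1), ((((i:ℕ)+1) * (j i : ℕ) : ℕ) : ℚ)) = (n:ℚ)+1 := by
        rw [← Nat.cast_sum, h]; push_cast; ring
      rw [show (∑ i : Fin (n+1), ((((i:ℕ)+1) * (j i : ℕ) : ℕ) : ℚ) / ((n:ℚ)+1)
            * W a (n+1) (n+1) j)
          = (∑ i : Fin (n+1), ((((i:ℕ)+1) * (j i : ℕ) : ℕ) : ℚ)) / ((n:ℚ)+1)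
            * W a (n+1) (n+1) j from by rw [Finset.sum_div, Finset.sum_mul]]
      rw [hc, div_self (by positivity), one_mul]
    · simp [h]
  rw [step1, Finset.sum_comm]
  refine Eq.trans (Finset.sum_congr rfl fun i _ => ?_)
    (Fin.sum_univ_eq_sum_range (fun k => (n.choose k : ℚ) * a (k+1) * completeBell a (n-k)) (n+1))
  have hin : (i : ℕ) ≤ n := Nat.lt_succ_iff.mp i.isLt
  rw [← QQ_eq_completeBell a (show n - (i:ℕ) ≤ n+1 by omega)]
  have drop : (∑ j : Fin (n+1) → Fin (n+2),
      (if (∑ x : Fin (n+1), ((x:ℕ)+1) * (j x : ℕ)) = n+1 then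
        ((((i:ℕ)+1) * (j i : ℕ) : ℕ) : ℚ) / ((n:ℚ)+1) * W a (n+1) (n+1) j else 0))
      = ∑ j : Fin (n+1) → Fin (n+2),
      (if ((∑ x : Fin (n+1), ((x:ℕ)+1) * (j x : ℕ)) = n+1 ∧ 1 ≤ (j i : ℕ)) then
        ((((i:ℕ)+1) * (j i : ℕ) : ℕ) : ℚ) / ((n:ℚ)+1) * W a (n+1) (n+1) j else 0) := by
    refine Finset.sum_congr rfl fun j _ => ?_
    by_cases h1 : (∑ x : Fin (n+1), ((x:ℕ)+1) * (j x : ℕ)) = n+1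
    · by_cases h2 : 1 ≤ (j i : ℕ)
      · simp [h1, h2]
      · have h0 : (j i : ℕ) = 0 := by omega
        simp [h1, h2, h0]
    · simp [h1]
  rw [drop, ← Finset.sum_filter]
  rw [QQ, ← Finset.sum_filter, Finset.mul_sum]
  exact exchange_key a n i hin
section Comb
variable {α : Type*} [Fintype α] [DecidableEq α]

def IsCP (a : ℕ → ℕ) (s : Finset α) (p : Finpartition s × (Finset α → ℕ)) : Prop :=
  (∀ B ∈ p.1.parts, 1 ≤ p.2 B ∧ p.2 B ≤ a B.card) ∧ (∀ B, B ∉ p.1.parts → p.2 B = 0)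

def CP (a : ℕ → ℕ) (s : Finset α) := {p : Finpartition s × (Finset α → ℕ) // IsCP a s p}

instance CP.finite (a : ℕ → ℕ) (s : Finset α) : Finite (CP a s) := by
  classical
  set M := (Finset.univ : Finset (Finset α)).sup (fun B => a B.card) with hM
  have hbound : ∀ z : CP a s, ∀ B, z.1.2 B < M + 1 := by
    intro z B
    rcases Classical.em (B ∈ z.1.1.parts) with h | h
    · exact Nat.lt_succ_of_le (le_trans (z.2.1 B h).2 (Finset.le_sup (f := fun B : Finset α => a B.card) (Finset.mem_univ B)))
    · rw [z.2.2 B h]; exact Nat.succ_pos _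
  apply Finite.of_injective
    (f := fun z : CP a s => ((z.1.1, fun B => (⟨z.1.2 B, hbound z B⟩ : Fin (M+1))) :
      Finpartition s × (Finset α → Fin (M+1))))
  intro z w h
  simp only at h
  have h1 := congrArg Prod.fst h
  have h2 : ∀ B, (z.1.2 B : ℕ) = w.1.2 B :=
    fun B => congrArg Fin.val (congrFun (congrArg Prod.snd h) B)
  exact Subtype.ext (Prod.ext h1 (funext h2))

omit [Fintype α] in
lemma avoid_parts_of_mem {s : Finset α} (P : Finpartition s) {B : Finset α}
    (hB : B ∈ P.parts) : (P.avoid B).parts = P.parts.erase B := by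
  ext C
  rw [Finpartition.mem_avoid, Finset.mem_erase]
  constructor
  · rintro ⟨D, hD, hDB, rfl⟩
    have hne : D ≠ B := fun h => hDB (h ▸ le_refl B)
    have hdisj : Disjoint D B := P.disjoint hD hB hne
    rw [Finset.sdiff_eq_self_iff_disjoint.mpr hdisj]
    exact ⟨hne, hD⟩
  · rintro ⟨hne, hC⟩
    have hdisj : Disjoint C B := P.disjoint hC hB hne
    refine ⟨C, hC, fun hle => ?_, Finset.sdiff_eq_self_iff_disjoint.mpr hdisj⟩
    exact (P.nonempty_of_mem_parts hC).ne_empty (hdisj.eq_bot_of_le hle)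

end Comb
section Comb2
variable {α : Type*} [Fintype α] [DecidableEq α]

lemma card_fiber (a : ℕ → ℕ) (s : Finset α) (x : α) (hx : x ∈ s) (T : Finset α)
    (hT : T ⊆ s.erase x) :
    Nat.card {z : CP a s // (z.1.1.part x).erase x = T}
      = a (T.card + 1) * Nat.card (CP a ((s.erase x) \ T)) := by
  classical
  have hxT : x ∉ T := fun h => (Finset.mem_erase.mp (hT h)).1 rfl
  set B := insert x T with hB
  have hxB : x ∈ B := Finset.mem_insert_self x T
  have hBcard : B.card = T.card + 1 := Finset.card_insert_of_notMem hxT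
  have hTs : T ⊆ s := hT.trans (Finset.erase_subset _ _)
  have hsdiff : s \ B = (s.erase x) \ T := by
    ext y
    simp only [Finset.mem_sdiff, Finset.mem_erase, hB, Finset.mem_insert, not_or]
    tauto
  have hdisj : Disjoint ((s.erase x) \ T) B := by
    rw [Finset.disjoint_right]
    intro y hyB hyd
    rw [Finset.mem_sdiff, Finset.mem_erase] at hyd
    rcases Finset.mem_insert.mp hyB with rfl | hyT
    · exact hyd.1.1 rfl
    · exact hyd.2 hyT
  have hunion : ((s.erase x) \ T) ⊔ B = s := by
    apply Finset.ext
    intro y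
    simp only [sup_eq_union, Finset.mem_union, Finset.mem_sdiff, Finset.mem_erase, hB,
      Finset.mem_insert]
    constructor
    · rintro (⟨⟨_, hy⟩, _⟩ | (rfl | hyT))
      · exact hy
      · exact hx
      · exact hTs hyT
    · intro hy
      by_cases hyx : y = x
      · exact Or.inr (Or.inl hyx)
      · by_cases hyT : y ∈ T
        · exact Or.inr (Or.inr hyT)
        · exact Or.inl ⟨⟨hyx, hy⟩, hyT⟩
  have hBne : B ≠ (⊥ : Finset α) := by
    rw [Finset.bot_eq_empty]; exact Finset.insert_ne_empty _ _
  have E : {z : CP a s // (z.1.1.part x).erase x = T}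
      ≃ (Fin (a (T.card + 1)) × CP a ((s.erase x) \ T)) := by
    refine ⟨fun z => (⟨z.1.1.2 B - 1, ?_⟩,
        ⟨⟨(z.1.1.1.avoid B).copy hsdiff, fun D => if D = B then 0 else z.1.1.2 D⟩, ?_⟩),
      fun w => ⟨⟨⟨w.2.1.1.extend hBne hdisj hunion,
        fun D => if D = B then (w.1 : ℕ) + 1 else w.2.1.2 D⟩, ?_⟩, ?_⟩, ?_, ?_⟩
    · -- color bound
      have hpB : z.1.1.1.part x = B := by
        have h' := Finset.insert_erase (z.1.1.1.mem_part hx)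
        rw [z.2] at h'
        exact h'.symm
      have hBp : B ∈ z.1.1.1.parts := hpB ▸ z.1.1.1.part_mem.2 hx
      have h1 := z.1.2.1 B hBp
      rw [hBcard] at h1
      omega
    · -- IsCP for restricted
      have hpB : z.1.1.1.part x = B := by
        have h' := Finset.insert_erase (z.1.1.1.mem_part hx)
        rw [z.2] at h'
        exact h'.symm
      have hBp : B ∈ z.1.1.1.parts := hpB ▸ z.1.1.1.part_mem.2 hx
      have hparts : ((z.1.1.1.avoid B).copy hsdiff).parts = z.1.1.1.parts.erase B :=
        avoid_parts_of_mem _ hBp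
      constructor
      · intro D hD
        rw [hparts, Finset.mem_erase] at hD
        dsimp only
        rw [if_neg hD.1]
        exact z.1.2.1 D hD.2
      · intro D hD
        rw [hparts, Finset.mem_erase] at hD
        dsimp only
        by_cases hne : D = B
        · rw [if_pos hne]
        · rw [if_neg hne]
          exact z.1.2.2 D (fun hDp => hD ⟨hne, hDp⟩)
    · -- IsCP for extended
      have hBq : B ∉ w.2.1.1.parts := by
        intro hmem
        have := w.2.1.1.le hmem hxB
        rw [Finset.mem_sdiff, Finset.mem_erase] at this
        exact this.1.1 rfl
      have hparts : (w.2.1.1.extend hBne hdisj hunion).parts = insert B w.2.1.1.parts := rfl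
      constructor
      · intro D hD
        rw [hparts, Finset.mem_insert] at hD
        dsimp only
        by_cases hne : D = B
        · rw [if_pos hne, hne, hBcard]
          exact ⟨Nat.succ_le_succ (Nat.zero_le _), Nat.succ_le_of_lt w.1.isLt⟩
        · rw [if_neg hne]
          exact w.2.2.1 D (hD.resolve_left hne)
      · intro D hD
        rw [hparts, Finset.mem_insert] at hD
        push_neg at hD
        dsimp only
        rw [if_neg hD.1]
        exact w.2.2.2 D hD.2
    · -- fiber condition
      have hBmem : B ∈ (w.2.1.1.extend hBne hdisj hunion).parts := Finset.mem_insert_self _ _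
      have : (w.2.1.1.extend hBne hdisj hunion).part x = B :=
        Finpartition.part_eq_of_mem _ hBmem hxB
      rw [this, hB, Finset.erase_insert hxT]
    · -- left inverse
      intro z
      have hpB : z.1.1.1.part x = B := by
        have h' := Finset.insert_erase (z.1.1.1.mem_part hx)
        rw [z.2] at h'
        exact h'.symm
      have hBp : B ∈ z.1.1.1.parts := hpB ▸ z.1.1.1.part_mem.2 hx
      have hcB := z.1.2.1 B hBp
      apply Subtype.ext
      apply Subtype.ext
      apply Prod.ext
      · apply Finpartition.ext
        show insert B ((z.1.1.1.avoid B).parts) = z.1.1.1.parts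
        rw [avoid_parts_of_mem _ hBp, Finset.insert_erase hBp]
      · funext D
        show (if D = B then (z.1.1.2 B - 1) + 1 else (if D = B then 0 else z.1.1.2 D))
          = z.1.1.2 D
        by_cases hne : D = B
        · rw [if_pos hne, hne]
          omega
        · rw [if_neg hne, if_neg hne]
    · -- right inverse
      intro w
      have hBq : B ∉ w.2.1.1.parts := by
        intro hmem
        have := w.2.1.1.le hmem hxB
        rw [Finset.mem_sdiff, Finset.mem_erase] at this
        exact this.1.1 rfl
      apply Prod.ext
      · apply Fin.ext
        show (if B = B then (w.1 : ℕ) + 1 else w.2.1.2 B) - 1 = (w.1 : ℕ)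
        rw [if_pos rfl]
        omega
      · apply Subtype.ext
        apply Prod.ext
        · apply Finpartition.ext
          show ((w.2.1.1.extend hBne hdisj hunion).avoid B).parts = w.2.1.1.parts
          rw [avoid_parts_of_mem _ (Finset.mem_insert_self _ _)]
          show (insert B w.2.1.1.parts).erase B = w.2.1.1.parts
          exact Finset.erase_insert hBq
        · funext D
          show (if D = B then 0 else (if D = B then (w.1 : ℕ) + 1 else w.2.1.2 D))
            = w.2.1.2 D
          by_cases hne : D = B
          · rw [if_pos hne, hne]
            exact (w.2.2.2 B hBq).symm
          · rw [if_neg hne, if_neg hne]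
  rw [Nat.card_congr E, Nat.card_prod, Nat.card_eq_fintype_card (α := Fin _), Fintype.card_fin]

end Comb2
section Comb3
variable {α : Type*} [Fintype α] [DecidableEq α]

lemma card_decomp (a : ℕ → ℕ) (s : Finset α) (x : α) (hx : x ∈ s) :
    Nat.card (CP a s)
      = ∑ T ∈ (s.erase x).powerset, a (T.card + 1) * Nat.card (CP a ((s.erase x) \ T)) := by
  classical
  letI : Fintype (CP a s) := Fintype.ofFinite _
  rw [Nat.card_eq_fintype_card, ← Finset.card_univ]
  rw [Finset.card_eq_sum_card_fiberwise
    (f := fun z : CP a s => ((z.1.1.part x).erase x : Finset α))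
    (t := (s.erase x).powerset)
    (fun z _ => Finset.mem_powerset.mpr
      (Finset.erase_subset_erase x (z.1.1.le (z.1.1.part_mem.2 hx))))]
  refine Finset.sum_congr rfl fun T hT => ?_
  rw [Finset.mem_powerset] at hT
  rw [← Fintype.card_subtype, ← Nat.card_eq_fintype_card]
  exact card_fiber a s x hx T hT

omit [Fintype α] in
lemma card_CP_empty (a : ℕ → ℕ) : Nat.card (CP a (∅ : Finset α)) = 1 := by
  classical
  have hparts : ∀ p : Finpartition (∅ : Finset α), p.parts = ∅ := fun p => by
    rw [Finpartition.parts_eq_empty_iff]; rfl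
  have hd : IsCP a (∅ : Finset α)
      ((Finpartition.empty (Finset α) : Finpartition (∅ : Finset α)), fun _ => 0) := by
    constructor
    · intro B hB
      rw [hparts] at hB
      exact absurd hB (Finset.notMem_empty B)
    · intro B _
      rfl
  haveI : Unique (CP a (∅ : Finset α)) :=
    { default := ⟨(_, fun _ => 0), hd⟩
      uniq := by
        intro z
        apply Subtype.ext
        apply Prod.ext
        · apply Finpartition.ext
          rw [hparts, hparts]
        · funext B
          exact z.2.2 B (by rw [hparts]; exact Finset.notMem_empty B) }
  exact Nat.card_unique

lemma completeBell_zero (a : ℕ → ℚ) : completeBell a 0 = 1 := by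
  simp [completeBell, partialBell]

lemma card_CP_eq (a : ℕ → ℕ) (m : ℕ) :
    ∀ (s : Finset α), s.card = m →
      ((Nat.card (CP a s) : ℚ)) = completeBell (fun i => (a i : ℚ)) m := by
  induction m using Nat.strong_induction_on with
  | _ m IH =>
    intro s hs
    rcases Nat.eq_zero_or_pos m with rfl | hm
    · rw [Finset.card_eq_zero.mp hs, completeBell_zero, card_CP_empty]
      norm_num
    · obtain ⟨m', rfl⟩ : ∃ m', m = m' + 1 := ⟨m - 1, by omega⟩
      obtain ⟨x, hx⟩ : s.Nonempty := Finset.card_pos.mp (by omega)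
      have hce : (s.erase x).card = m' := by
        rw [Finset.card_erase_of_mem hx, hs]; omega
      rw [card_decomp a s x hx, completeBell_succ]
      push_cast
      rw [Finset.sum_congr rfl (fun T hT => ?_)]
      case _ =>
        rw [← hce, Finset.sum_powerset_apply_card
          (f := fun k => (a (k+1) : ℚ) * completeBell (fun i => (a i : ℚ)) ((s.erase x).card - k))]
        rw [hce]
        refine Finset.sum_congr rfl fun k _ => ?_
        rw [nsmul_eq_mul]
        push_cast
        ring
      · -- per-T rewrite
        rw [Finset.mem_powerset] at hT
        have hc : ((s.erase x) \ T).card = m' - T.card := by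
          rw [Finset.card_sdiff_of_subset hT, hce]
        have hlt : m' - T.card < m' + 1 := by omega
        rw [IH _ hlt _ hc, ← hce]

end Comb3
/-- The total number of colored set partitions of `{1,…,n}` associated to `a` equals the
complete Bell polynomial value `A(n;a)`. -/
theorem colored_partitions_total_card_eq_completeBell (a : ℕ → ℕ) (n : ℕ) (hn : 1 ≤ n) :
    (Nat.card {p : Finpartition (Finset.univ : Finset (Fin n)) × (Finset (Fin n) → ℕ) //
        (∀ B ∈ p.1.parts, 1 ≤ p.2 B ∧ p.2 B ≤ a B.card) ∧
        (∀ B, B ∉ p.1.parts → p.2 B = 0)} : ℚ) =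
      completeBell (fun m => (a m : ℚ)) n := by
  exact card_CP_eq (α := Fin n) a n Finset.univ (by simp)
end

section
/- For all natural numbers n ≥ k ≥ 1, the partial Bell polynomial value of the sequence of factorials satisfies B(n,k; (1!,2!,3!,…)) = C(n−1,k−1)·n!/k! (the unsigned Lah number), where C denotes the binomial coefficient. -/
open Finset BigOperators

lemma coeffP (n m : ℕ) :
    ((∑ i ∈ Finset.range n, (Polynomial.X : Polynomial ℕ) ^ (i + 1)).coeff m)
      = if 1 ≤ m ∧ m ≤ n then 1 else 0 := by
  rw [Polynomial.finset_sum_coeff]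
  simp_rw [Polynomial.coeff_X_pow]
  rcases m with _ | m
  · simp
  · simp_rw [Nat.add_right_cancel_iff]
    rw [Finset.sum_ite_eq (Finset.range n) m (fun _ => 1)]
    simp only [Finset.mem_range, Nat.lt_iff_add_one_le]
    simp

lemma coeffPk (n : ℕ) : ∀ k, 1 ≤ k → ∀ m, m ≤ n →
    (((∑ i ∈ Finset.range n, (Polynomial.X : Polynomial ℕ) ^ (i + 1)) ^ k).coeff m)
      = if k ≤ m then (m - 1).choose (k - 1) else 0 := by
  intro k hk
  induction k, hk using Nat.le_induction with
  | base =>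
    intro m hm
    rw [pow_one, coeffP]
    rcases Nat.eq_zero_or_pos m with rfl | hm1
    · simp
    · simp [hm, hm1]
  | succ k hk ih =>
    intro m hm
    rw [pow_succ, Polynomial.coeff_mul, Finset.Nat.sum_antidiagonal_eq_sum_range_succ_mk]
    have step : ∀ i ∈ Finset.range (m + 1),
        (((∑ i ∈ Finset.range n, (Polynomial.X : Polynomial ℕ) ^ (i + 1)) ^ k).coeff i) *
          ((∑ i ∈ Finset.range n, (Polynomial.X : Polynomial ℕ) ^ (i + 1)).coeff (m - i))
        = if k ≤ i ∧ i < m then (i - 1).choose (k - 1) else 0 := by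
      intro i hi
      rw [Finset.mem_range, Nat.lt_succ_iff] at hi
      rw [ih i (le_trans hi hm), coeffP]
      have h1 : (1 ≤ m - i ∧ m - i ≤ n) ↔ i < m := by
        constructor
        · intro h; omega
        · intro h; omega
      split_ifs with h2 h3 h4 h5 <;> simp_all <;> omega
    rw [Finset.sum_congr rfl step, Finset.sum_ite, Finset.sum_const, smul_zero, add_zero]
    have hfilter : (Finset.range (m + 1)).filter (fun i => k ≤ i ∧ i < m) = Finset.Ico k m := by
      ext i
      simp [Nat.lt_succ_iff]
      omega
    rw [hfilter]
    rcases le_or_gt m k with h | h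
    · rw [Finset.Ico_eq_empty (by omega), if_neg (by omega)]
      simp
    · -- k < m, so k + 1 ≤ m
      rw [if_pos (by omega)]
      have hre : ∑ i ∈ Finset.Ico k m, (i - 1).choose (k - 1)
          = ∑ t ∈ Finset.Icc (k - 1) (m - 2), t.choose (k - 1) := by
        refine Finset.sum_nbij' (fun i => i - 1) (fun t => t + 1) ?_ ?_ ?_ ?_ ?_ <;>
          intros <;> simp_all [Finset.mem_Ico, Finset.mem_Icc] <;> omega
      rw [hre]
      have h2 : m - 2 + 1 = m - 1 := by omega
      have h3 : k - 1 + 1 = k := by omega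
      rw [Nat.sum_Icc_choose, h2, h3]
      simp

lemma sumT (n k : ℕ) (hk : 1 ≤ k) (hkn : k ≤ n) :
    (∑ j : Fin n → Fin (n + 1),
      if (∑ i, (j i : ℕ)) = k ∧ (∑ i, (i.1 + 1) * (j i : ℕ)) = n then
        Nat.multinomial Finset.univ (fun i => (j i : ℕ)) else 0)
      = (n - 1).choose (k - 1) := by
  have key : ((∑ i : Fin n, (Polynomial.X : Polynomial ℕ) ^ (i.1 + 1)) ^ k).coeff n
      = (n - 1).choose (k - 1) := by
    rw [show (∑ i : Fin n, (Polynomial.X : Polynomial ℕ) ^ (i.1 + 1))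
        = ∑ i ∈ Finset.range n, (Polynomial.X : Polynomial ℕ) ^ (i + 1) from
      Fin.sum_univ_eq_sum_range (fun i => (Polynomial.X : Polynomial ℕ) ^ (i + 1)) n]
    rw [coeffPk n k hk n le_rfl, if_pos hkn]
  rw [← key, Finset.sum_pow_eq_sum_piAntidiag, Polynomial.finset_sum_coeff]
  have hterm : ∀ f ∈ Finset.piAntidiag (Finset.univ : Finset (Fin n)) k,
      ((Nat.multinomial Finset.univ f : Polynomial ℕ) *
          ∏ i, ((Polynomial.X : Polynomial ℕ) ^ (i.1 + 1)) ^ f i).coeff n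
        = if (∑ i, (i.1 + 1) * f i) = n then Nat.multinomial Finset.univ f else 0 := by
    intro f _
    simp_rw [← pow_mul, Finset.prod_pow_eq_pow_sum, ← Polynomial.C_eq_natCast,
      Polynomial.coeff_C_mul, Polynomial.coeff_X_pow]
    rcases eq_or_ne (∑ i : Fin n, (i.1 + 1) * f i) n with h | h
    · simp [h]
    · simp [h, Ne.symm h]
  rw [Finset.sum_congr rfl hterm, ← Finset.sum_filter, ← Finset.sum_filter]
  refine Finset.sum_nbij' (fun (j : Fin n → Fin (n + 1)) => (fun i => (j i : ℕ)))
    (fun (f : Fin n → ℕ) => (fun i => (⟨f i % (n + 1), Nat.mod_lt _ (Nat.succ_pos n)⟩ : Fin (n + 1))))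
    ?_ ?_ ?_ ?_ ?_
  · intro j hj
    simp only [Finset.mem_filter, Finset.mem_univ, true_and] at hj
    simp only [Finset.mem_filter, Finset.mem_piAntidiag]
    exact ⟨⟨hj.1, fun i _ => Finset.mem_univ i⟩, hj.2⟩
  · intro f hf
    simp only [Finset.mem_filter, Finset.mem_piAntidiag] at hf
    simp only [Finset.mem_filter, Finset.mem_univ, true_and]
    have hb : ∀ i, f i ≤ k := fun i => by
      rw [← hf.1.1]
      exact Finset.single_le_sum (fun _ _ => Nat.zero_le _) (Finset.mem_univ i)
    have hmod : ∀ i, f i % (n + 1) = f i := fun i =>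
      Nat.mod_eq_of_lt (by have := hb i; omega)
    constructor
    · exact (Finset.sum_congr rfl (fun i _ => hmod i)).trans hf.1.1
    · exact (Finset.sum_congr rfl (fun i _ => by rw [hmod i])).trans hf.2
  · intro j hj
    funext i
    ext
    exact Nat.mod_eq_of_lt (j i).isLt
  · intro f hf
    simp only [Finset.mem_filter, Finset.mem_piAntidiag] at hf
    funext i
    have hb : f i ≤ k := by
      rw [← hf.1.1]
      exact Finset.single_le_sum (fun _ _ => Nat.zero_le _) (Finset.mem_univ i)
    exact Nat.mod_eq_of_lt (by omega)
  · intro j hj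
    rfl

/-- `B(n,k;(1!,2!,3!,…)) = C(n−1,k−1)·n!/k!`, the unsigned Lah number. -/
theorem partialBell_factorial_eq_lah (n k : ℕ) (hk : 1 ≤ k) (hkn : k ≤ n) :
    partialBell (fun m => (m.factorial : ℚ)) n k =
      ((n - 1).choose (k - 1) : ℚ) * n.factorial / k.factorial := by
  unfold partialBell
  have step : ∀ j : Fin n → Fin (n + 1),
      (if (∑ i, (j i : ℕ)) = k ∧ (∑ i, (i.1 + 1) * (j i : ℕ)) = n then
        (n.factorial : ℚ) /
            ((∏ i, (j i : ℕ).factorial * ((i.1 + 1).factorial) ^ (j i : ℕ) : ℕ) : ℚ) *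
          ∏ i, ((i.1 + 1).factorial : ℚ) ^ (j i : ℕ)
      else 0)
      = (if (∑ i, (j i : ℕ)) = k ∧ (∑ i, (i.1 + 1) * (j i : ℕ)) = n then
          ((Nat.multinomial Finset.univ (fun i => (j i : ℕ)) : ℕ) : ℚ) else 0) *
        ((n.factorial : ℚ) / k.factorial) := by
    intro j
    rw [ite_mul, zero_mul]
    by_cases h : (∑ i, (j i : ℕ)) = k ∧ (∑ i, (i.1 + 1) * (j i : ℕ)) = n
    · rw [if_pos h, if_pos h]
      have hA : ((∏ i, (j i : ℕ).factorial : ℕ) : ℚ) ≠ 0 := by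
        positivity
      have hB : ((∏ i, ((i.1 + 1).factorial : ℚ) ^ (j i : ℕ)) : ℚ) ≠ 0 := by
        positivity
      have hcast : ((∏ i, (j i : ℕ).factorial * ((i.1 + 1).factorial) ^ (j i : ℕ) : ℕ) : ℚ)
          = ((∏ i, (j i : ℕ).factorial : ℕ) : ℚ) *
            ∏ i, ((i.1 + 1).factorial : ℚ) ^ (j i : ℕ) := by
        push_cast
        rw [Finset.prod_mul_distrib]
      rw [hcast]
      have hmult : ((∏ i, (j i : ℕ).factorial : ℕ) : ℚ) *
          ((Nat.multinomial Finset.univ (fun i => (j i : ℕ)) : ℕ) : ℚ) = (k.factorial : ℚ) := by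
        rw [← Nat.cast_mul, Nat.multinomial_spec, h.1]
      have hkf : (k.factorial : ℚ) ≠ 0 := by positivity
      field_simp
      rw [← hmult]
    · rw [if_neg h, if_neg h]
  rw [Finset.sum_congr rfl (fun j _ => step j), ← Finset.sum_mul]
  have hsum : (∑ j : Fin n → Fin (n + 1),
      (if (∑ i, (j i : ℕ)) = k ∧ (∑ i, (i.1 + 1) * (j i : ℕ)) = n then
        ((Nat.multinomial Finset.univ (fun i => (j i : ℕ)) : ℕ) : ℚ) else 0))
      = (((n - 1).choose (k - 1) : ℕ) : ℚ) := by
    rw [← sumT n k hk hkn]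
    push_cast
    rfl
  rw [hsum, mul_div_assoc]
end

section
/- For all natural numbers n ≥ k ≥ 1, the partial Bell polynomial value of the identity sequence satisfies B(n,k; (1,2,3,…)) = C(n,k)·k^(n−k) (the idempotent number), where C denotes the binomial coefficient. -/
open Finset BigOperators

open scoped PowerSeries


lemma prod_monomial'_aux {ι : Type*} (s : Finset ι) (d : ι → ℕ) (c : ι → ℚ) :
    ∏ i ∈ s, Polynomial.monomial (d i) (c i)
      = Polynomial.monomial (∑ i ∈ s, d i) (∏ i ∈ s, c i) := by
  classical
  induction s using Finset.cons_induction with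
  | empty => simp
  | cons a s ha ih => simp [ha, ih, Polynomial.monomial_mul_monomial]

lemma coeff_P_pow_aux (n k : ℕ) (hk : 1 ≤ k) (hkn : k ≤ n) :
    Polynomial.coeff ((∑ i : Fin n, Polynomial.monomial (i.1+1) (((i.1).factorial : ℚ))⁻¹) ^ k) n
      = (k:ℚ)^(n-k) * (((n-k).factorial : ℚ))⁻¹ := by
  set P : Polynomial ℚ := ∑ i : Fin n, Polynomial.monomial (i.1+1) (((i.1).factorial : ℚ))⁻¹
    with hP
  have hPc : ∀ m : ℕ, m ≤ n → P.coeff m = if 1 ≤ m then (((m-1).factorial : ℚ))⁻¹ else 0 := by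
    intro m hm
    rw [hP, Polynomial.finset_sum_coeff]
    simp only [Polynomial.coeff_monomial]
    cases m with
    | zero => simp
    | succ j =>
      have hj : j < n := by omega
      simp only [add_left_inj]
      rw [Fin.sum_univ_eq_sum_range (fun i => if i = j then ((Nat.factorial i : ℚ))⁻¹ else 0)]
      rw [Finset.sum_ite_eq' (Finset.range n) j (fun i => ((Nat.factorial i : ℚ))⁻¹)]
      simp [Finset.mem_range.mpr hj]
  have hdvd : (PowerSeries.X : ℚ⟦X⟧)^(n+1) ∣ (PowerSeries.X * PowerSeries.exp ℚ - (P : ℚ⟦X⟧)) := by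
    rw [PowerSeries.X_pow_dvd_iff]
    intro m hm
    rw [map_sub, Polynomial.coeff_coe, hPc m (by omega)]
    cases m with
    | zero => simp
    | succ j =>
      rw [PowerSeries.coeff_succ_X_mul, PowerSeries.coeff_exp]
      simp
  have hdvd2 : (PowerSeries.X : ℚ⟦X⟧)^(n+1) ∣
      (PowerSeries.X * PowerSeries.exp ℚ)^k - ((P : ℚ⟦X⟧))^k :=
    dvd_trans hdvd (sub_dvd_pow_sub_pow _ _ k)
  have h0 : PowerSeries.coeff n ((PowerSeries.X * PowerSeries.exp ℚ)^k - ((P : ℚ⟦X⟧))^k) = 0 :=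
    (PowerSeries.X_pow_dvd_iff.mp hdvd2) n (Nat.lt_succ_self n)
  rw [map_sub, sub_eq_zero] at h0
  have hc : Polynomial.coeff (P ^ k) n = PowerSeries.coeff n ((P : ℚ⟦X⟧)^k) := by
    rw [← Polynomial.coe_pow, Polynomial.coeff_coe]
  rw [hc, ← h0, mul_pow, PowerSeries.exp_pow_eq_rescale_exp]
  have hn : n = n - k + k := (Nat.sub_add_cancel hkn).symm
  rw [hn, PowerSeries.coeff_X_pow_mul, PowerSeries.coeff_rescale, PowerSeries.coeff_exp]
  simp [mul_comm, one_div]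

/-- `B(n,k;(1,2,3,…)) = C(n,k)·k^(n−k)`, the idempotent number. -/
theorem partialBell_id_eq_idempotent (n k : ℕ) (hk : 1 ≤ k) (hkn : k ≤ n) :
    partialBell (fun m => (m : ℚ)) n k = (n.choose k : ℚ) * (k : ℚ) ^ (n - k) := by
  classical
  set S : Finset (Fin n → ℕ) :=
    (Finset.piAntidiag (Finset.univ : Finset (Fin n)) k).filter
      (fun j => ∑ i, (i.1 + 1) * j i = n) with hS
  -- Step 1 : reindex partialBell as a sum over S
  have step1 : partialBell (fun m => (m : ℚ)) n k =
      ∑ j ∈ S,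
        (n.factorial : ℚ) /
            ((∏ i, (j i).factorial * ((i.1 + 1).factorial) ^ (j i) : ℕ) : ℚ) *
          ∏ i, ((i.1 + 1 : ℕ) : ℚ) ^ (j i) := by
    rw [partialBell, ← Finset.sum_filter]
    refine Finset.sum_bij' (fun j _ => fun i => (j i : ℕ))
      (fun j hj => fun i => (⟨j i, ?_⟩ : Fin (n+1))) ?_ ?_ ?_ ?_ ?_
    · simp only [hS, Finset.mem_filter, Finset.mem_piAntidiag] at hj
      have h1 : j i ≤ ∑ i, j i :=
        Finset.single_le_sum (fun i _ => Nat.zero_le _) (Finset.mem_univ i)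
      have h2 : ∑ i, j i = k := hj.1.1
      omega
    · intro j hj
      simp only [Finset.mem_filter, Finset.mem_univ, true_and] at hj
      simp only [hS, Finset.mem_filter, Finset.mem_piAntidiag]
      exact ⟨⟨hj.1, fun i _ => Finset.mem_univ i⟩, hj.2⟩
    · intro j hj
      simp only [Finset.mem_filter, Finset.mem_univ, true_and]
      simp only [hS, Finset.mem_filter, Finset.mem_piAntidiag] at hj
      exact ⟨hj.1.1, hj.2⟩
    · intro j hj
      ext i
      simp
    · intro j hj
      rfl
    · intro j hj
      push_cast
      rfl
  -- Step 2 : the polynomial coefficient as a sum over S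
  have step2 : Polynomial.coeff
        ((∑ i : Fin n, Polynomial.monomial (i.1+1) (((i.1).factorial : ℚ))⁻¹) ^ k) n
      = ∑ j ∈ S,
          (Nat.multinomial Finset.univ j : ℚ) * ∏ i, (((i.1).factorial : ℚ))⁻¹ ^ (j i) := by
    rw [Finset.sum_pow_eq_sum_piAntidiag, Polynomial.finset_sum_coeff, hS, Finset.sum_filter]
    refine Finset.sum_congr rfl fun j hj => ?_
    have hmono : ∏ i : Fin n, (Polynomial.monomial (i.1+1) (((i.1).factorial : ℚ))⁻¹)^(j i)
        = Polynomial.monomial (∑ i, (i.1+1)*(j i)) (∏ i, (((i.1).factorial : ℚ))⁻¹^(j i)) := by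
      simp_rw [Polynomial.monomial_pow]
      rw [prod_monomial'_aux]
    rw [hmono, ← Polynomial.C_eq_natCast, Polynomial.C_mul_monomial, Polynomial.coeff_monomial]
  -- Step 3 : termwise comparison
  have step3 : ∀ j ∈ S,
      (n.factorial : ℚ) /
          ((∏ i, (j i).factorial * ((i.1 + 1).factorial) ^ (j i) : ℕ) : ℚ) *
        ∏ i, ((i.1 + 1 : ℕ) : ℚ) ^ (j i)
      = (n.factorial : ℚ) / (k.factorial : ℚ) *
          ((Nat.multinomial Finset.univ j : ℚ) * ∏ i, (((i.1).factorial : ℚ))⁻¹ ^ (j i)) := by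
    intro j hj
    simp only [hS, Finset.mem_filter, Finset.mem_piAntidiag] at hj
    have hsum : ∑ i, j i = k := hj.1.1
    have hms : (∏ i, ((j i).factorial : ℚ)) * (Nat.multinomial Finset.univ j : ℚ)
        = (k.factorial : ℚ) := by
      rw [← Nat.cast_prod, ← Nat.cast_mul, Nat.multinomial_spec, hsum]
    have hA : (∏ i, ((j i).factorial : ℚ)) ≠ 0 := by positivity
    have hF : (∏ i : Fin n, (((i.1).factorial : ℚ)) ^ (j i)) ≠ 0 := by positivity
    have hB : (∏ i : Fin n, ((i.1 + 1 : ℕ) : ℚ) ^ (j i)) ≠ 0 := by positivity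
    have hkf : (k.factorial : ℚ) ≠ 0 := by positivity
    have key : ∏ i : Fin n, (((i.1+1).factorial : ℚ)) ^ (j i)
        = (∏ i : Fin n, ((i.1 + 1 : ℕ) : ℚ) ^ (j i)) *
            ∏ i : Fin n, (((i.1).factorial : ℚ)) ^ (j i) := by
      rw [← Finset.prod_mul_distrib]
      refine Finset.prod_congr rfl fun i _ => ?_
      rw [← mul_pow]
      norm_cast
    have hmult : (Nat.multinomial Finset.univ j : ℚ)
        = (k.factorial : ℚ) / ∏ i, ((j i).factorial : ℚ) := by
      rw [eq_div_iff hA, mul_comm]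
      exact hms
    have hinv : ∏ i : Fin n, (((i.1).factorial : ℚ))⁻¹ ^ (j i)
        = (∏ i : Fin n, (((i.1).factorial : ℚ)) ^ (j i))⁻¹ := by
      rw [← Finset.prod_inv_distrib]
      exact Finset.prod_congr rfl fun i _ => by rw [inv_pow]
    push_cast
    rw [Finset.prod_mul_distrib, key, hmult, hinv]
    field_simp
    push_cast
    ring
  rw [step1, Finset.sum_congr rfl step3, ← Finset.mul_sum, ← step2,
    coeff_P_pow_aux n k hk hkn, Nat.cast_choose ℚ hkn]
  field_simp
end

section
/- For all natural numbers n ≥ k ≥ 1, the partial Bell polynomial value of the sequence whose m-th term is m^(m−1) satisfies B(n,k; (1, 2, 3², 4³, …)) = C(n−1,k−1)·n^(n−k), where C denotes the binomial coefficient. -/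
open Finset BigOperators Polynomial

noncomputable def Atilde (s : ℕ) (x : ℚ) : ℚ := if s = 0 then 1 else x * (x + s) ^ (s - 1)

@[simp] lemma Atilde_zero (x : ℚ) : Atilde 0 x = 1 := rfl

lemma Atilde_pos {s : ℕ} (hs : s ≠ 0) (x : ℚ) : Atilde s x = x * (x + s) ^ (s - 1) := if_neg hs

lemma X1_natDegree : (X + 1 : ℚ[X]).natDegree = 1 := by
  rw [← Polynomial.C_1]; exact Polynomial.natDegree_X_add_C 1

lemma X1_leadingCoeff : (X + 1 : ℚ[X]).leadingCoeff = 1 := by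
  rw [← Polynomial.C_1]; exact Polynomial.leadingCoeff_X_add_C 1

lemma findiff : ∀ (m : ℕ) (p : ℚ[X]), p.natDegree < m →
    ∑ s ∈ range (m + 1), (-1 : ℚ) ^ s * (m.choose s : ℚ) * p.eval (s : ℚ) = 0 := by
  intro m
  induction m with
  | zero => intro p hp; exact absurd hp (Nat.not_lt_zero _)
  | succ m ih =>
    intro p hp
    by_cases hp0 : p.natDegree = 0
    · obtain ⟨c, rfl⟩ := Polynomial.natDegree_eq_zero.mp hp0
      simp only [eval_C]
      rw [← Finset.sum_mul]
      have h := Int.alternating_sum_range_choose_of_ne (Nat.succ_ne_zero m)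
      have h2 : ((∑ i ∈ range (m + 1 + 1), (-1 : ℤ) ^ i * ((m+1).choose i : ℤ) : ℤ) : ℚ) = 0 := by
        rw [h]; norm_num
      push_cast at h2
      rw [h2, zero_mul]
    · -- p nonconstant
      have hd1 : 1 ≤ p.natDegree := Nat.one_le_iff_ne_zero.mpr hp0
      have hpne : p ≠ 0 := fun h => hp0 (by simp [h])
      set q : ℚ[X] := p.comp (X + 1) - p with hq
      have hcompne : p.comp (X + 1) ≠ 0 := by
        intro h
        have := Polynomial.natDegree_comp (p := p) (q := X + 1)
        rw [h] at this
        rw [X1_natDegree] at this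
        simp at this
        omega
      have hdeg : (p.comp (X + 1)).degree = p.degree := by
        rw [Polynomial.degree_eq_natDegree hcompne, Polynomial.degree_eq_natDegree hpne]
        norm_cast
        rw [Polynomial.natDegree_comp, X1_natDegree, mul_one]
      have hlc : (p.comp (X + 1)).leadingCoeff = p.leadingCoeff := by
        rw [Polynomial.leadingCoeff_comp (by rw [X1_natDegree]; norm_num)]
        rw [X1_leadingCoeff, one_pow, mul_one]
      have hqdeg : q.degree < p.degree := by
        rw [← hdeg]
        exact Polynomial.degree_sub_lt hdeg hcompne hlc
      have hqnd : q.natDegree < m := by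
        rcases eq_or_ne q 0 with h | h
        · rw [h]; simpa using Nat.lt_of_lt_of_le Nat.zero_lt_one (hd1.trans (Nat.lt_succ_iff.mp hp))
        · have := Polynomial.natDegree_lt_natDegree h hqdeg
          omega
      have ihq := ih q hqnd
      have hqe : ∀ s : ℚ, q.eval s = p.eval (s + 1) - p.eval s := by
        intro s; simp [hq, Polynomial.eval_comp]
      -- now transform goal
      rw [Finset.sum_range_succ'] -- peel off s = 0
      have hpascal : ∀ t, ((m+1).choose (t+1) : ℚ) = (m.choose (t+1) : ℚ) + (m.choose t : ℚ) := by
        intro t; rw [Nat.choose_succ_succ]; push_cast; ring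
      have : ∀ t ∈ range (m+1), (-1:ℚ)^(t+1) * ((m+1).choose (t+1) : ℚ) * p.eval ((t+1 : ℕ) : ℚ)
          = (-1:ℚ)^(t+1) * (m.choose (t+1) : ℚ) * p.eval ((t+1 : ℕ) : ℚ)
            - (-1:ℚ)^t * (m.choose t : ℚ) * p.eval ((t:ℚ) + 1) := by
        intro t _
        rw [hpascal]
        push_cast
        ring
      rw [Finset.sum_congr rfl this, Finset.sum_sub_distrib]
      have hA : (∑ t ∈ range (m+1), (-1:ℚ)^(t+1) * (m.choose (t+1) : ℚ) * p.eval ((t+1 : ℕ) : ℚ))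
          + (-1:ℚ)^0 * ((m+1).choose 0 : ℚ) * p.eval ((0:ℕ):ℚ)
          = ∑ s ∈ range (m+1), (-1:ℚ)^s * (m.choose s : ℚ) * p.eval (s:ℚ) := by
        rw [Finset.sum_range_succ]
        have hz : ((m.choose (m+1) : ℚ)) = 0 := by
          simp [Nat.choose_succ_self]
        rw [hz, mul_zero, zero_mul, add_zero,
          Finset.sum_range_succ' (fun s => (-1:ℚ)^s * (m.choose s : ℚ) * p.eval (s:ℚ)) m]
        push_cast
        simp
      have hB : ∑ t ∈ range (m+1), (-1:ℚ)^t * (m.choose t : ℚ) * p.eval ((t:ℚ) + 1)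
          = (∑ t ∈ range (m+1), (-1:ℚ)^t * (m.choose t : ℚ) * q.eval (t:ℚ))
            + ∑ t ∈ range (m+1), (-1:ℚ)^t * (m.choose t : ℚ) * p.eval (t:ℚ) := by
        rw [← Finset.sum_add_distrib]
        refine Finset.sum_congr rfl fun t _ => ?_
        rw [hqe]; ring
      rw [hB]
      linarith [hA, ihq]

lemma shift_comp (b : ℚ) (e : ℕ) : ((X + C b) ^ e).comp (X + 1) = (X + C (b + 1)) ^ e := by
  rw [Polynomial.pow_comp, Polynomial.add_comp, Polynomial.X_comp, Polynomial.C_comp,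
    Polynomial.C_add, Polynomial.C_1]
  ring

lemma abelPoly : ∀ (m : ℕ) (x : ℚ),
    (∑ s ∈ range (m + 1), C ((m.choose s : ℚ) * Atilde s x) * (X + C ((m : ℚ) - (s : ℚ))) ^ (m - s))
      = (X + C (x + (m : ℚ))) ^ m := by
  intro m
  induction m with
  | zero => intro x; simp
  | succ m ih =>
    intro x
    set L := ∑ s ∈ range (m + 1 + 1), C (((m+1).choose s : ℚ) * Atilde s x) *
        (X + C (((m+1 : ℕ) : ℚ) - (s : ℚ))) ^ (m + 1 - s) with hLdef
    set R := (X + C (x + ((m+1 : ℕ) : ℚ))) ^ (m + 1) with hRdef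
    show L = R
    have hder : derivative (L - R) = 0 := by
      have hdL : derivative L = C (((m+1 : ℕ) : ℚ)) * (X + C (x + ((m+1:ℕ):ℚ))) ^ m := by
        rw [hLdef, derivative_sum, Finset.sum_range_succ]
        have hlast : derivative (C (((m+1).choose (m+1) : ℚ) * Atilde (m+1) x) *
            (X + C (((m+1 : ℕ) : ℚ) - (((m+1:ℕ)) : ℚ))) ^ (m + 1 - (m+1))) = 0 := by
          rw [Nat.sub_self, pow_zero, mul_one, derivative_C]
        rw [hlast, add_zero]
        have hterm : ∀ s ∈ range (m+1),
            derivative (C (((m+1).choose s : ℚ) * Atilde s x) *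
              (X + C (((m+1 : ℕ) : ℚ) - (s : ℚ))) ^ (m + 1 - s))
            = C (((m+1 : ℕ) : ℚ)) * (C ((m.choose s : ℚ) * Atilde s x) *
                ((X + C (((m : ℕ) : ℚ) - (s:ℚ))) ^ (m - s)).comp (X + 1)) := by
          intro s hs
          rw [mem_range] at hs
          rw [derivative_C_mul, derivative_pow, derivative_add, derivative_X, derivative_C,
            add_zero, mul_one]
          have he : m + 1 - s - 1 = m - s := by omega
          have hc2 : ((m : ℕ) : ℚ) - (s:ℚ) + 1 = ((m+1 : ℕ) : ℚ) - s := by push_cast; ring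
          rw [he, shift_comp, hc2, ← mul_assoc, ← Polynomial.C_mul, ← mul_assoc,
            ← Polynomial.C_mul]
          congr 1
          rw [Polynomial.C_inj]
          have hnat := congrArg (Nat.cast (R := ℚ)) (Nat.choose_mul_succ_eq m s)
          push_cast [Nat.cast_sub (by omega : s ≤ m + 1)] at hnat ⊢
          linear_combination (-(Atilde s x)) * hnat
        rw [Finset.sum_congr rfl hterm, ← Finset.mul_sum]
        simp only [shift_comp]
        have hcomp := congrArg (fun p : ℚ[X] => p.comp (X + 1)) (ih x)
        simp only [Polynomial.sum_comp, Polynomial.mul_comp, Polynomial.C_comp,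
          shift_comp] at hcomp
        rw [hcomp, show x + ((m+1:ℕ):ℚ) = x + (m:ℚ) + 1 by push_cast; ring]
      have hdR : derivative R = C (((m+1 : ℕ) : ℚ)) * (X + C (x + ((m+1:ℕ):ℚ))) ^ m := by
        rw [hRdef, derivative_pow, derivative_add, derivative_X, derivative_C, add_zero, mul_one,
          Nat.add_sub_cancel]
      rw [derivative_sub, hdL, hdR, sub_self]
    have hc := Polynomial.eq_C_of_derivative_eq_zero hder
    set y0 : ℚ := -(x + ((m+1:ℕ) : ℚ)) with hy0
    have hevalR : R.eval y0 = 0 := by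
      rw [hRdef, eval_pow, eval_add, eval_X, eval_C]
      rw [show y0 + (x + ((m+1:ℕ):ℚ)) = 0 by rw [hy0]; ring]
      exact zero_pow (Nat.succ_ne_zero m)
    have hevalL : L.eval y0 = 0 := by
      rw [hLdef, eval_finset_sum]
      have hterm : ∀ s ∈ range (m+1+1),
          eval y0 (C (((m+1).choose s : ℚ) * Atilde s x) *
            (X + C (((m+1 : ℕ) : ℚ) - (s : ℚ))) ^ (m + 1 - s))
          = ((-1:ℚ)^(m+1) * x) * ((-1:ℚ)^s * (((m+1).choose s : ℚ)) * eval (s:ℚ) ((X + C x)^m)) := by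
        intro s hs
        rw [mem_range] at hs
        rw [eval_mul, eval_C, eval_pow, eval_add, eval_X, eval_C]
        rw [show y0 + (((m+1 : ℕ) : ℚ) - (s : ℚ)) = -(x + s) by rw [hy0]; ring]
        rw [eval_pow, eval_add, eval_X, eval_C]
        have hsign : (-(x + (s:ℚ))) ^ (m + 1 - s) = (-1:ℚ)^(m+1-s) * (x + s)^(m+1-s) := by
          rw [neg_pow]
        have hsign2 : (-1:ℚ)^(m+1-s) = (-1:ℚ)^(m+1) * (-1:ℚ)^s := by
          have h2 : m + 1 - s + s = m + 1 := by omega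
          have h3 : ((-1:ℚ))^(m+1) = (-1)^(m+1-s) * (-1)^s := by rw [← pow_add, h2]
          rw [h3, mul_assoc, ← pow_add, ← two_mul, pow_mul]
          norm_num
        rw [hsign, hsign2]
        rcases Nat.eq_zero_or_pos s with rfl | hspos
        · simp only [Atilde_zero, Nat.choose_zero_right, Nat.cast_zero, Nat.cast_one]
          push_cast
          ring
        · rw [Atilde_pos (Nat.pos_iff_ne_zero.mp hspos)]
          have hpow : (x + (s:ℚ))^(m+1-s) * (x + s)^(s-1) = (x + s)^m := by
            rw [← pow_add]; congr 1; omega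
          have hc3 : ((s:ℚ) + x) = (x + s) := by ring
          rw [hc3]
          linear_combination ((-1:ℚ)^(m+1) * (-1)^s * (((m+1).choose s : ℚ)) * x) * hpow
      rw [Finset.sum_congr rfl hterm, ← Finset.mul_sum]
      have hnd : ((X + C x)^m).natDegree < m + 1 := by
        rw [Polynomial.natDegree_pow, Polynomial.natDegree_X_add_C]
        omega
      have hfd := findiff (m+1) ((X + C x)^m) hnd
      rw [hfd, mul_zero]
    have heval := congrArg (eval y0) hc
    rw [eval_sub, hevalL, hevalR, sub_zero, eval_C] at heval
    have hzero : L - R = 0 := by rw [hc, ← heval]; simp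
    exact sub_eq_zero.mp hzero

lemma abel1 (m : ℕ) (x y : ℚ) :
    ∑ s ∈ range (m + 1), (m.choose s : ℚ) * Atilde s x * (y + ((m : ℚ) - s)) ^ (m - s)
      = (x + y + m) ^ m := by
  have h := congrArg (eval y) (abelPoly m x)
  simp only [eval_finset_sum, eval_mul, eval_pow, eval_add, eval_X, eval_C] at h
  rw [show (x + y + (m:ℚ)) = y + (x + m) by ring]
  rw [← h]

lemma cauchy (m : ℕ) (hm : 1 ≤ m) (x y : ℚ) :
    ∑ s ∈ range (m + 1), (m.choose s : ℚ) * Atilde s x * Atilde (m - s) y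
      = (x + y) * (x + y + m) ^ (m - 1) := by
  have hsplit : ∀ s ∈ range (m + 1),
      (m.choose s : ℚ) * Atilde s x * Atilde (m - s) y
      = (m.choose s : ℚ) * Atilde s x * (y + ((m : ℚ) - s)) ^ (m - s)
        - (m.choose s : ℚ) * Atilde s x * (((m : ℚ) - s) * (y + ((m : ℚ) - s)) ^ (m - s - 1)) := by
    intro s hs
    rw [mem_range] at hs
    rcases eq_or_lt_of_le (Nat.lt_succ_iff.mp hs) with rfl | hlt
    · simp [Atilde]
    · have ht : m - s ≠ 0 := by omega
      rw [Atilde_pos ht]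
      have hcast : ((m - s : ℕ) : ℚ) = (m : ℚ) - s := by
        push_cast [Nat.cast_sub (le_of_lt hlt)]; ring
      rw [hcast]
      have hpow : (y + ((m:ℚ) - s)) ^ (m - s) = (y + ((m:ℚ) - s)) ^ (m - s - 1) * (y + ((m:ℚ)-s)) := by
        rw [← pow_succ]; congr 1; omega
      rw [hpow]; ring
  rw [Finset.sum_congr rfl hsplit, Finset.sum_sub_distrib]
  rw [abel1 m x y]
  have hsum2 : ∑ s ∈ range (m + 1),
      (m.choose s : ℚ) * Atilde s x * (((m : ℚ) - s) * (y + ((m : ℚ) - s)) ^ (m - s - 1))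
      = (m : ℚ) * (x + (y+1) + ((m-1 : ℕ) : ℚ)) ^ (m - 1) := by
    rw [Finset.sum_range_succ]
    have hlast : (m.choose m : ℚ) * Atilde m x * (((m : ℚ) - m) * (y + ((m : ℚ) - m)) ^ (m - m - 1)) = 0 := by
      simp
    rw [hlast, add_zero]
    obtain ⟨m', rfl⟩ : ∃ m', m = m' + 1 := ⟨m - 1, by omega⟩
    have hterm : ∀ s ∈ range (m' + 1),
        ((m'+1).choose s : ℚ) * Atilde s x * ((((m'+1 : ℕ)) - (s:ℚ)) * (y + (((m'+1:ℕ)) - (s:ℚ))) ^ (m' + 1 - s - 1))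
        = ((m' : ℚ) + 1) * ((m'.choose s : ℚ) * Atilde s x * ((y+1) + ((m' : ℚ) - s)) ^ (m' - s)) := by
      intro s hs
      rw [mem_range] at hs
      have he : m' + 1 - s - 1 = m' - s := by omega
      have hc2 : (y + (((m'+1:ℕ)) - (s:ℚ))) = (y + 1) + ((m' : ℚ) - s) := by push_cast; ring
      have hnat := congrArg (Nat.cast (R := ℚ)) (Nat.choose_mul_succ_eq m' s)
      push_cast [Nat.cast_sub (by omega : s ≤ m' + 1)] at hnat
      rw [he, hc2]
      have hfix : ((m' + 1 : ℕ) : ℚ) - (s : ℚ) = (m' : ℚ) + 1 - s := by push_cast; ring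
      rw [hfix]
      linear_combination (Atilde s x * ((y+1) + ((m' : ℚ) - s)) ^ (m' - s)) * hnat.symm
    rw [Finset.sum_congr rfl hterm, ← Finset.mul_sum, abel1 m' x (y+1)]
    push_cast [Nat.add_sub_cancel]
    ring
  rw [hsum2]
  have hc3 : (x + (y+1) + ((m-1 : ℕ) : ℚ)) = x + y + m := by
    push_cast [Nat.cast_sub (by omega : 1 ≤ m)]; ring
  rw [hc3]
  have hpow : (x + y + (m:ℚ)) ^ m = (x + y + m) ^ (m-1) * (x+y+m) := by
    rw [← pow_succ]; congr 1; omega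
  rw [hpow]; ring

lemma cauchy1 (m : ℕ) (y : ℚ) :
    ∑ s ∈ range (m + 1), (m.choose s : ℚ) * Atilde s 1 * Atilde (m - s) y
      = Atilde m (1 + y) := by
  rcases Nat.eq_zero_or_pos m with rfl | hm
  · simp
  · rw [cauchy m hm 1 y, Atilde_pos (by omega : m ≠ 0)]

lemma sum_antidiagonalTuple_succ {M : Type*} [AddCommMonoid M] (k m : ℕ)
    (f : (Fin (k+1) → ℕ) → M) :
    ∑ c ∈ Finset.Nat.antidiagonalTuple (k+1) m, f c
      = ∑ p ∈ Finset.HasAntidiagonal.antidiagonal m, ∑ t ∈ Finset.Nat.antidiagonalTuple k p.2,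
          f (Fin.cons p.1 t) := by
  rw [Finset.sum_sigma']
  refine Finset.sum_nbij' (fun c => ⟨(c 0, ∑ i : Fin k, Fin.tail c i), Fin.tail c⟩)
    (fun x => Fin.cons x.1.1 x.2) ?_ ?_ ?_ ?_ ?_
  · intro c hc
    rw [Finset.Nat.mem_antidiagonalTuple] at hc
    rw [Finset.mem_sigma, Finset.HasAntidiagonal.mem_antidiagonal]
    constructor
    · rw [← hc, Fin.sum_univ_succ]; rfl
    · rw [Finset.Nat.mem_antidiagonalTuple]
  · intro x hx
    rw [Finset.mem_sigma, Finset.HasAntidiagonal.mem_antidiagonal, Finset.Nat.mem_antidiagonalTuple] at hx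
    rw [Finset.Nat.mem_antidiagonalTuple, Fin.sum_cons, hx.2, hx.1]
  · intro c _
    exact Fin.cons_self_tail c
  · intro x hx
    rw [Finset.mem_sigma, Finset.Nat.mem_antidiagonalTuple] at hx
    obtain ⟨h1, h2⟩ := hx
    refine Sigma.ext ?_ ?_
    · simp only [Fin.cons_zero, Fin.tail_cons]
      exact Prod.ext rfl h2
    · simp [Fin.tail_cons]
  · intro c _
    rw [Fin.cons_self_tail]

lemma tuple_sum : ∀ (k : ℕ), 1 ≤ k → ∀ (m : ℕ),
    ∑ c ∈ Finset.Nat.antidiagonalTuple k m, ∏ l, (Atilde (c l) 1 / (c l).factorial)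
      = Atilde m k / m.factorial := by
  intro k
  induction k with
  | zero => omega
  | succ k ih =>
    intro _ m
    rcases Nat.eq_zero_or_pos k with rfl | hk
    · -- k+1 = 1
      rw [Finset.Nat.antidiagonalTuple_one, Finset.sum_singleton]
      simp [Fin.prod_univ_one]
    · rw [sum_antidiagonalTuple_succ]
      have hinner : ∀ p ∈ Finset.HasAntidiagonal.antidiagonal m,
          ∑ t ∈ Finset.Nat.antidiagonalTuple k p.2,
            ∏ l, (Atilde ((Fin.cons p.1 t : Fin (k+1) → ℕ) l) 1 / ((Fin.cons p.1 t : Fin (k+1) → ℕ) l).factorial)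
          = (Atilde p.1 1 / (p.1).factorial) * (Atilde p.2 (k : ℚ) / (p.2).factorial) := by
        intro p _
        have hprod : ∀ t : Fin k → ℕ,
            ∏ l, (Atilde ((Fin.cons p.1 t : Fin (k+1) → ℕ) l) 1 / ((Fin.cons p.1 t : Fin (k+1) → ℕ) l).factorial)
            = (Atilde p.1 1 / (p.1).factorial) * ∏ l, (Atilde (t l) 1 / (t l).factorial) := by
          intro t
          rw [Fin.prod_univ_succ]
          simp [Fin.cons_succ]
        rw [Finset.sum_congr rfl (fun t _ => hprod t), ← Finset.mul_sum, ih hk p.2]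
      rw [Finset.sum_congr rfl hinner, Finset.Nat.sum_antidiagonal_eq_sum_range_succ_mk]
      have hterm : ∀ s ∈ range (m+1),
          (Atilde s 1 / (s).factorial) * (Atilde (m - s) (k : ℚ) / (m - s).factorial)
          = ((m.choose s : ℚ) * Atilde s 1 * Atilde (m - s) (k : ℚ)) / m.factorial := by
        intro s hs
        rw [mem_range] at hs
        rw [Nat.cast_choose ℚ (by omega : s ≤ m)]
        have h1 : ((s).factorial : ℚ) ≠ 0 := Nat.cast_ne_zero.mpr (Nat.factorial_ne_zero s)
        have h2 : (((m-s)).factorial : ℚ) ≠ 0 := Nat.cast_ne_zero.mpr (Nat.factorial_ne_zero _)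
        have h3 : ((m).factorial : ℚ) ≠ 0 := Nat.cast_ne_zero.mpr (Nat.factorial_ne_zero m)
        field_simp
      rw [Finset.sum_congr rfl hterm, ← Finset.sum_div, cauchy1 m (k : ℚ)]
      congr 1
      push_cast
      ring


def cnt {k n : ℕ} (c : Fin k → Fin n) (i : Fin n) : ℕ :=
  (univ.filter fun l => c l = i).card

lemma cnt_le {k n : ℕ} (c : Fin k → Fin n) (i : Fin n) : cnt c i ≤ k := by
  classical
  calc cnt c i ≤ (univ : Finset (Fin k)).card := Finset.card_filter_le _ _
  _ = k := by simp

lemma cnt_sum {k n : ℕ} (c : Fin k → Fin n) : ∑ i, cnt c i = k := by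
  classical
  have := Finset.card_eq_sum_card_fiberwise (f := c) (s := univ) (t := univ)
    (fun l _ => mem_univ _)
  simpa [cnt] using this.symm

lemma sum_comp_cnt {k n : ℕ} (c : Fin k → Fin n) (g : Fin n → ℕ) :
    ∑ l, g (c l) = ∑ i, cnt c i * g i := by
  classical
  rw [← Finset.sum_fiberwise univ c (fun l => g (c l))]
  refine Finset.sum_congr rfl fun i _ => ?_
  have h1 : ∀ l ∈ univ.filter fun l => c l = i, g (c l) = g i := by
    intro l hl
    rw [(Finset.mem_filter.mp hl).2]
  rw [Finset.sum_congr rfl h1, Finset.sum_const, smul_eq_mul]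
  rfl

lemma prod_comp_cnt {k n : ℕ} (c : Fin k → Fin n) (g : Fin n → ℚ) :
    ∏ l, g (c l) = ∏ i, g i ^ cnt c i := by
  classical
  rw [← Finset.prod_fiberwise univ c (fun l => g (c l))]
  refine Finset.prod_congr rfl fun i _ => ?_
  have h1 : ∀ l ∈ univ.filter fun l => c l = i, g (c l) = g i := by
    intro l hl
    rw [(Finset.mem_filter.mp hl).2]
  rw [Finset.prod_congr rfl h1, Finset.prod_const]
  rfl

lemma cnt_cons {k n : ℕ} (v : Fin n) (t : Fin k → Fin n) (i : Fin n) :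
    cnt (Fin.cons v t) i = cnt t i + (if v = i then 1 else 0) := by
  classical
  rw [cnt, Finset.card_filter, Fin.sum_univ_succ]
  simp only [Fin.cons_zero, Fin.cons_succ]
  rw [cnt, Finset.card_filter]
  ring

lemma count_multis : ∀ (k : ℕ) {n : ℕ} (j : Fin n → ℕ), (∑ i, j i = k) →
    ((univ.filter fun c : Fin k → Fin n => ∀ i, cnt c i = j i).card)
      * (∏ i, (j i).factorial) = k.factorial := by
  intro k
  induction k with
  | zero =>
    intro n j hj
    have hj0 : ∀ i, j i = 0 := by
      intro i
      have := Finset.sum_eq_zero_iff.mp hj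
      exact this i (mem_univ i)
    have hfil : (univ.filter fun c : Fin 0 → Fin n => ∀ i, cnt c i = j i) = univ := by
      refine Finset.filter_true_of_mem fun c _ => fun i => ?_
      rw [hj0 i, cnt]
      simp
    rw [hfil]
    simp [hj0, Finset.card_univ]
  | succ k ih =>
    intro n j hj
    set S := univ.filter fun c : Fin (k+1) → Fin n => ∀ i, cnt c i = j i with hS
    have hcard : S.card = ∑ v : Fin n, (S.filter fun c => c 0 = v).card :=
      Finset.card_eq_sum_card_fiberwise (f := fun c : Fin (k+1) → Fin n => c 0) (s := S) (t := univ)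
        (fun c _ => mem_univ _)
    have hfib : ∀ v : Fin n, (S.filter fun c => c 0 = v).card * ∏ i, (j i).factorial
        = k.factorial * j v := by
      intro v
      rcases Nat.eq_zero_or_pos (j v) with hv0 | hvpos
      · have : (S.filter fun c => c 0 = v) = ∅ := by
          refine Finset.eq_empty_of_forall_notMem fun c hc => ?_
          rw [Finset.mem_filter, hS, Finset.mem_filter] at hc
          obtain ⟨⟨-, hcnt⟩, h0⟩ := hc
          have h1 : (0 : Fin (k+1)) ∈ univ.filter fun l => c l = v := by
            rw [Finset.mem_filter]
            exact ⟨mem_univ _, h0⟩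
          have h2 : 0 < cnt c v := Finset.card_pos.mpr ⟨0, h1⟩
          rw [hcnt v, hv0] at h2
          exact absurd h2 (lt_irrefl 0)
        rw [this, hv0]
        simp
      · -- bijection with tails
        set j' := Function.update j v (j v - 1) with hj'
        have hbij : (S.filter fun c => c 0 = v).card
            = (univ.filter fun t : Fin k → Fin n => ∀ i, cnt t i = j' i).card := by
          refine Finset.card_nbij' (fun c => Fin.tail c) (fun t => Fin.cons v t) ?_ ?_ ?_ ?_
          · intro c hc
            rw [Finset.mem_coe, Finset.mem_filter, hS, Finset.mem_filter] at hc
            obtain ⟨⟨-, hcnt⟩, h0⟩ := hc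
            rw [Finset.mem_coe, Finset.mem_filter]
            refine ⟨mem_univ _, fun i => ?_⟩
            have hcc : c = Fin.cons v (Fin.tail c) := by
              rw [← h0, Fin.cons_self_tail]
            have := hcnt i
            rw [hcc, cnt_cons] at this
            rw [hj']
            rcases eq_or_ne v i with rfl | hne
            · rw [Function.update_self]
              simp only [if_pos rfl] at this
              exact Nat.eq_sub_of_add_eq this
            · rw [Function.update_of_ne (Ne.symm hne)]
              simp only [if_neg hne] at this
              simpa using this
          · intro t ht
            rw [Finset.mem_coe, Finset.mem_filter] at ht
            obtain ⟨-, hcnt⟩ := ht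
            rw [Finset.mem_coe, Finset.mem_filter, hS, Finset.mem_filter]
            refine ⟨⟨mem_univ _, fun i => ?_⟩, by simp⟩
            rw [cnt_cons, hcnt i, hj']
            rcases eq_or_ne v i with rfl | hne
            · rw [Function.update_self, if_pos rfl]
              exact Nat.succ_pred_eq_of_pos hvpos
            · rw [Function.update_of_ne (Ne.symm hne), if_neg hne]
              simp
          · intro c hc
            rw [Finset.mem_coe, Finset.mem_filter] at hc
            have : Fin.cons v (Fin.tail c) = c := by rw [← hc.2]; exact Fin.cons_self_tail c
            exact this
          · intro t _
            simp [Fin.tail_cons]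
        have hsum' : ∑ i, j' i = k := by
          rw [hj', Finset.sum_update_of_mem (mem_univ v)]
          have h2 : ∑ i, j i = j v + ∑ i ∈ univ \ {v}, j i :=
            Finset.sum_eq_add_sum_sdiff_singleton_of_mem (mem_univ v) j
          have h3 : j v + ∑ i ∈ univ \ {v}, j i = k + 1 := by rw [← h2]; exact hj
          have h4 : j v - 1 + ∑ i ∈ univ \ {v}, j i + 1 = k + 1 := by
            rw [add_right_comm, Nat.sub_add_cancel hvpos]
            exact h3
          exact Nat.succ_injective h4
        have hIH := ih j' hsum'
        have hup : ∀ i, ((Function.update j v (j v - 1)) i).factorial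
            = Function.update (fun i => (j i).factorial) v ((j v - 1).factorial) i := by
          intro i
          rcases eq_or_ne i v with rfl | hne
          · simp
          · simp [Function.update_of_ne hne]
        have hprod : ∏ i, (j i).factorial = j v * ∏ i, (j' i).factorial := by
          rw [hj']
          rw [Finset.prod_congr rfl (fun i _ => hup i)]
          rw [Finset.prod_update_of_mem (mem_univ v)]
          rw [Finset.prod_eq_mul_prod_sdiff_singleton_of_mem (mem_univ v) (fun i => (j i).factorial)]
          rw [← mul_assoc, Nat.mul_factorial_pred (Nat.pos_iff_ne_zero.mp hvpos)]
        rw [hbij, hprod, ← mul_assoc]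
        rw [mul_comm _ (j v), mul_assoc, hIH, mul_comm]
    calc S.card * ∏ i, (j i).factorial
        = ∑ v : Fin n, (S.filter fun c => c 0 = v).card * ∏ i, (j i).factorial := by
          rw [hcard, Finset.sum_mul]
      _ = ∑ v : Fin n, k.factorial * j v := by
          exact Finset.sum_congr rfl fun v _ => hfib v
      _ = k.factorial * ∑ v, j v := by rw [Finset.mul_sum]
      _ = (k+1).factorial := by rw [hj, Nat.factorial_succ, mul_comm]

lemma symmetrize (a : ℕ → ℚ) (n k : ℕ) (hkn : k ≤ n) :
    (k.factorial : ℚ) * partialBell a n k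
      = ∑ c ∈ univ.filter (fun c : Fin k → Fin n => ∑ l, ((c l : ℕ) + 1) = n),
          (n.factorial : ℚ) * ∏ l, (a ((c l : ℕ) + 1) / ((((c l : ℕ) + 1).factorial : ℕ) : ℚ)) := by
  have hφlt : ∀ (c : Fin k → Fin n) (i : Fin n), cnt c i < n + 1 := fun c i =>
    Nat.lt_succ_of_le ((cnt_le c i).trans hkn)
  set φ : (Fin k → Fin n) → (Fin n → Fin (n+1)) :=
    fun c i => ⟨cnt c i, hφlt c i⟩ with hφ
  rw [← Finset.sum_fiberwise_of_maps_to
    (g := φ) (t := (univ : Finset (Fin n → Fin (n+1)))) (fun c _ => mem_univ _)]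
  rw [partialBell, Finset.mul_sum]
  refine Finset.sum_congr rfl fun j _ => ?_
  by_cases hcond : (∑ i, (j i : ℕ)) = k ∧ (∑ i, (i.1 + 1) * (j i : ℕ)) = n
  · rw [if_pos hcond]
    have hset : ((univ.filter fun c : Fin k → Fin n => ∑ l, ((c l : ℕ) + 1) = n).filter
          fun c => φ c = j)
        = univ.filter (fun c : Fin k → Fin n => ∀ i, cnt c i = (j i : ℕ)) := by
      ext c
      simp only [Finset.mem_filter, Finset.mem_univ, true_and]
      constructor
      · rintro ⟨hC, hphi⟩ i
        have h1 := congrFun hphi i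
        exact congrArg Fin.val h1
      · intro hcnt
        constructor
        · have h1 := sum_comp_cnt c (fun i => (i : ℕ) + 1)
          calc ∑ l, ((c l : ℕ) + 1) = ∑ i : Fin n, cnt c i * ((i : ℕ) + 1) := h1
            _ = ∑ i : Fin n, ((i : ℕ) + 1) * ((j i : ℕ)) := by
                refine Finset.sum_congr rfl fun i _ => ?_
                rw [hcnt i, mul_comm]
            _ = n := hcond.2
        · funext i
          exact Fin.ext (hcnt i)
    rw [hset]
    have hconst : ∀ c ∈ univ.filter (fun c : Fin k → Fin n => ∀ i, cnt c i = (j i : ℕ)),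
        (n.factorial : ℚ) * ∏ l, (a ((c l : ℕ) + 1) / ((((c l : ℕ) + 1).factorial : ℕ) : ℚ))
        = (n.factorial : ℚ) * ∏ i : Fin n, (a ((i : ℕ) + 1) / ((((i : ℕ) + 1).factorial : ℕ) : ℚ)) ^ (j i : ℕ) := by
      intro c hc
      rw [Finset.mem_filter] at hc
      congr 1
      rw [prod_comp_cnt c (fun i => a ((i : ℕ) + 1) / ((((i : ℕ) + 1).factorial : ℕ) : ℚ))]
      exact Finset.prod_congr rfl fun i _ => by rw [hc.2 i]
    rw [Finset.sum_congr rfl hconst, Finset.sum_const, nsmul_eq_mul]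
    have hcards : ((univ.filter fun c : Fin k → Fin n => ∀ i, cnt c i = (j i : ℕ)).card : ℚ)
        * (∏ i, (((j i : ℕ).factorial : ℕ) : ℚ)) = (k.factorial : ℚ) := by
      rw [← Nat.cast_prod, ← Nat.cast_mul, count_multis k (fun i => (j i : ℕ)) hcond.1]
    set card := (univ.filter fun c : Fin k → Fin n => ∀ i, cnt c i = (j i : ℕ)).card
    have hD1ne : (∏ i, (((j i : ℕ).factorial : ℕ) : ℚ)) ≠ 0 :=
      Finset.prod_ne_zero_iff.mpr fun i _ => Nat.cast_ne_zero.mpr (Nat.factorial_ne_zero _)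
    have hD2ne : (∏ i : Fin n, ((((i : ℕ) + 1).factorial : ℕ) : ℚ) ^ (j i : ℕ)) ≠ 0 :=
      Finset.prod_ne_zero_iff.mpr fun i _ => pow_ne_zero _ (Nat.cast_ne_zero.mpr (Nat.factorial_ne_zero _))
    have hcast : ((∏ i, (j i : ℕ).factorial * ((i.1 + 1).factorial) ^ (j i : ℕ) : ℕ) : ℚ)
        = (∏ i, (((j i : ℕ).factorial : ℕ) : ℚ)) * (∏ i : Fin n, ((((i : ℕ) + 1).factorial : ℕ) : ℚ) ^ (j i : ℕ)) := by
      push_cast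
      rw [Finset.prod_mul_distrib]
    rw [hcast]
    have hsplit : ∏ i : Fin n, (a ((i : ℕ) + 1) / ((((i : ℕ) + 1).factorial : ℕ) : ℚ)) ^ (j i : ℕ)
        = (∏ i : Fin n, a ((i : ℕ) + 1) ^ (j i : ℕ))
          / (∏ i : Fin n, ((((i : ℕ) + 1).factorial : ℕ) : ℚ) ^ (j i : ℕ)) := by
      rw [← Finset.prod_div_distrib]
      exact Finset.prod_congr rfl fun i _ => div_pow _ _ _
    rw [hsplit]
    rw [← hcards]
    field_simp
  · rw [if_neg hcond, mul_zero]
    have hempty : ((univ.filter fun c : Fin k → Fin n => ∑ l, ((c l : ℕ) + 1) = n).filter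
        fun c => φ c = j) = ∅ := by
      refine Finset.eq_empty_of_forall_notMem fun c hc => hcond ?_
      rw [Finset.mem_filter, Finset.mem_filter] at hc
      obtain ⟨⟨-, hC⟩, hphi⟩ := hc
      have hval : ∀ i, (j i : ℕ) = cnt c i := fun i =>
        (congrArg Fin.val (congrFun hphi i)).symm
      constructor
      · rw [Finset.sum_congr rfl fun i _ => hval i]
        exact cnt_sum c
      · rw [Finset.sum_congr rfl fun i _ => by rw [hval i, mul_comm]]
        rw [← sum_comp_cnt c (fun i => (i : ℕ) + 1)]
        exact hC
    rw [hempty, Finset.sum_empty]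

/-- `B(n,k;(1,2,3²,4³,…)) = C(n−1,k−1)·n^(n−k)` for the sequence `a_m = m^(m−1)`. -/
theorem partialBell_treelike (n k : ℕ) (hk : 1 ≤ k) (hkn : k ≤ n) :
    partialBell (fun m => (m : ℚ) ^ (m - 1)) n k =
      ((n - 1).choose (k - 1) : ℚ) * (n : ℚ) ^ (n - k) := by
  have hn1 : 1 ≤ n := hk.trans hkn
  set a : ℕ → ℚ := fun m => (m : ℚ) ^ (m - 1) with ha
  have hAt : ∀ s : ℕ, a (s + 1) / (((s+1).factorial : ℕ) : ℚ)
      = Atilde s 1 / ((s.factorial : ℕ) : ℚ) := by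
    intro s
    rcases Nat.eq_zero_or_pos s with rfl | hs
    · simp [ha, Atilde]
    · rw [Atilde_pos (by omega : s ≠ 0), ha]
      simp only
      rw [Nat.factorial_succ]
      have h1 : (((s+1:ℕ)) : ℚ) ^ ((s+1) - 1) = ((s:ℚ)+1) ^ s := by push_cast; norm_num
      rw [h1]
      have h2 : ((s:ℚ)+1) ^ s = ((s:ℚ)+1)^(s-1) * ((s:ℚ)+1) := by
        rw [← pow_succ]; congr 1; omega
      rw [h2]
      have hsne : ((s.factorial : ℕ) : ℚ) ≠ 0 := Nat.cast_ne_zero.mpr (Nat.factorial_ne_zero _)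
      have hs1ne : ((s:ℚ)+1) ≠ 0 := by positivity
      push_cast
      field_simp
      ring
  have hsym := symmetrize a n k hkn
  have hstep1 : ∑ c ∈ univ.filter (fun c : Fin k → Fin n => ∑ l, ((c l : ℕ) + 1) = n),
        (n.factorial : ℚ) * ∏ l, (a ((c l : ℕ) + 1) / ((((c l : ℕ) + 1).factorial : ℕ) : ℚ))
      = (n.factorial : ℚ) * ∑ c ∈ univ.filter (fun c : Fin k → Fin n => ∑ l, ((c l : ℕ) + 1) = n),
          ∏ l, (Atilde ((c l : ℕ)) 1 / ((((c l : ℕ)).factorial : ℕ) : ℚ)) := by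
    rw [Finset.mul_sum]
    refine Finset.sum_congr rfl fun c _ => ?_
    congr 1
    exact Finset.prod_congr rfl fun l _ => hAt ((c l : ℕ))
  have hstep2 : ∑ c ∈ univ.filter (fun c : Fin k → Fin n => ∑ l, ((c l : ℕ) + 1) = n),
        ∏ l, (Atilde ((c l : ℕ)) 1 / ((((c l : ℕ)).factorial : ℕ) : ℚ))
      = ∑ t ∈ Finset.Nat.antidiagonalTuple k (n - k),
          ∏ l, (Atilde (t l) 1 / (((t l).factorial : ℕ) : ℚ)) := by
    refine Finset.sum_nbij' (fun c l => ((c l : ℕ)))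
      (fun t l => (⟨min (t l) (n-1), by omega⟩ : Fin n)) ?_ ?_ ?_ ?_ ?_
    · intro c hc
      rw [Finset.mem_filter] at hc
      rw [Finset.Nat.mem_antidiagonalTuple]
      have h3 : ∑ l, ((c l : ℕ) + 1) = (∑ l, (c l : ℕ)) + k := by
        rw [Finset.sum_add_distrib]; simp
      have h4 := hc.2
      rw [h3] at h4
      exact Nat.eq_sub_of_add_eq h4
    · intro t ht
      rw [Finset.Nat.mem_antidiagonalTuple] at ht
      rw [Finset.mem_filter]
      refine ⟨mem_univ _, ?_⟩
      have hbound : ∀ l, t l ≤ n - k := fun l =>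
        ht ▸ Finset.single_le_sum (fun _ _ => Nat.zero_le _) (mem_univ l)
      have hmin : ∀ l, min (t l) (n-1) = t l := fun l => min_eq_left (by have := hbound l; omega)
      simp only [Fin.val_mk]
      calc ∑ l, ((min (t l) (n-1)) + 1) = ∑ l, (t l + 1) :=
            Finset.sum_congr rfl fun l _ => by rw [hmin l]
        _ = (∑ l, t l) + k := by rw [Finset.sum_add_distrib]; simp
        _ = n := by rw [ht]; omega
    · intro c _
      funext l
      refine Fin.ext ?_
      simp only [Fin.val_mk]
      exact min_eq_left (by have := (c l).isLt; omega)
    · intro t ht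
      rw [Finset.Nat.mem_antidiagonalTuple] at ht
      have hbound : ∀ l, t l ≤ n - k := fun l =>
        ht ▸ Finset.single_le_sum (fun _ _ => Nat.zero_le _) (mem_univ l)
      funext l
      simp only [Fin.val_mk]
      exact min_eq_left (by have := hbound l; omega)
    · intro c _
      rfl
  have hmain : (k.factorial : ℚ) * partialBell a n k
      = (n.factorial : ℚ) * (Atilde (n-k) (k : ℚ) / (((n-k).factorial : ℕ) : ℚ)) := by
    rw [hsym, hstep1, hstep2, tuple_sum k hk (n-k)]
  have hfin : (k.factorial : ℚ) * (((n - 1).choose (k - 1) : ℚ) * (n : ℚ) ^ (n - k))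
      = (n.factorial : ℚ) * (Atilde (n-k) (k : ℚ) / (((n-k).factorial : ℕ) : ℚ)) := by
    rcases Nat.eq_or_lt_of_le hkn with rfl | hlt
    · rw [Nat.sub_self]
      simp [Atilde, Nat.choose_self]
    · have hm : 1 ≤ n - k := by omega
      rw [Atilde_pos (by omega : n - k ≠ 0)]
      rw [show ((k:ℚ) + ((n-k : ℕ):ℚ)) = (n:ℚ) by push_cast [Nat.cast_sub hkn]; ring]
      have hnat : ((n-1).choose (k-1)) * (k-1).factorial * (n-k).factorial
          = (n-1).factorial := by
        have h := Nat.choose_mul_factorial_mul_factorial (show k-1 ≤ n-1 by omega)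
        rw [show n-1-(k-1) = n-k by omega] at h
        exact h
      have hnatQ : (((n-1).choose (k-1) : ℕ) : ℚ) * (((k-1).factorial : ℕ) : ℚ)
          * (((n-k).factorial : ℕ) : ℚ) = (((n-1).factorial : ℕ) : ℚ) := by
        exact_mod_cast congrArg (Nat.cast (R := ℚ)) hnat
      have hkf : (k.factorial : ℚ) = k * (k-1).factorial := by
        rw [← Nat.mul_factorial_pred (by omega : k ≠ 0)]; push_cast; ring
      have hnf : (n.factorial : ℚ) = n * (n-1).factorial := by
        rw [← Nat.mul_factorial_pred (by omega : n ≠ 0)]; push_cast; ring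
      have hpow : (n:ℚ)^(n-k) = (n:ℚ)^(n-k-1) * n := by
        rw [← pow_succ]; congr 1; omega
      have hmne : (((n-k).factorial : ℕ) : ℚ) ≠ 0 :=
        Nat.cast_ne_zero.mpr (Nat.factorial_ne_zero _)
      rw [hkf, hnf, hpow]
      field_simp
      linear_combination hnatQ
  have hkne : (k.factorial : ℚ) ≠ 0 := Nat.cast_ne_zero.mpr (Nat.factorial_ne_zero _)
  exact mul_left_cancel₀ hkne (hmain.trans hfin.symm)
end

section
/- Let a : ℕ → ℚ be a sequence indexed from 1 and let a' be the sequence with a'_1 = 0 and a'_m = a_m for m ≥ 2. Then for all natural numbers n ≥ k ≥ 1, B(n,k;a') = (n!/(n−k)!)·B(n−k, k; b), where b is the sequence with b_j = a_{j+1}/(j+1) for j ≥ 1; moreover B(n,k;a') = 0 whenever n < k. -/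
open Finset BigOperators

lemma aux_sum {M : Type*} [AddCommMonoid M] {n m : ℕ} (h : m < n) (f : Fin n → M)
    (h0 : ∀ i : Fin n, i.1 = 0 ∨ m < i.1 → f i = 0) :
    ∑ i, f i = ∑ l : Fin m, f ⟨l.1 + 1, by omega⟩ := by
  classical
  have hemb : Function.Injective (fun l : Fin m => (⟨l.1 + 1, by omega⟩ : Fin n)) := by
    intro x y hxy
    simpa [Fin.ext_iff] using hxy
  have : ∑ l : Fin m, f ⟨l.1 + 1, by omega⟩
      = ∑ i ∈ Finset.univ.map ⟨_, hemb⟩, f i := by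
    rw [Finset.sum_map]; rfl
  rw [this]
  refine (Finset.sum_subset (Finset.subset_univ _) ?_).symm
  intro i _ hi
  apply h0
  simp only [Finset.mem_map, Finset.mem_univ, Function.Embedding.coeFn_mk, true_and] at hi
  push_neg at hi
  by_contra hcon
  push_neg at hcon
  exact hi ⟨i.1 - 1, by omega⟩ (by apply Fin.ext; simp; omega)

lemma aux_prod {M : Type*} [CommMonoid M] {n m : ℕ} (h : m < n) (f : Fin n → M)
    (h0 : ∀ i : Fin n, i.1 = 0 ∨ m < i.1 → f i = 1) :
    ∏ i, f i = ∏ l : Fin m, f ⟨l.1 + 1, by omega⟩ := by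
  classical
  have hemb : Function.Injective (fun l : Fin m => (⟨l.1 + 1, by omega⟩ : Fin n)) := by
    intro x y hxy
    simpa [Fin.ext_iff] using hxy
  have : ∏ l : Fin m, f ⟨l.1 + 1, by omega⟩
      = ∏ i ∈ Finset.univ.map ⟨_, hemb⟩, f i := by
    rw [Finset.prod_map]; rfl
  rw [this]
  refine (Finset.prod_subset (Finset.subset_univ _) ?_).symm
  intro i _ hi
  apply h0
  simp only [Finset.mem_map, Finset.mem_univ, Function.Embedding.coeFn_mk, true_and] at hi
  push_neg at hi
  by_contra hcon
  push_neg at hcon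
  exact hi ⟨i.1 - 1, by omega⟩ (by apply Fin.ext; simp; omega)

/-- Extend a multiplicity function on shifted sizes to sizes `1..n`. -/
def eMap (n m : ℕ) (hmn : m < n) (j' : Fin m → Fin (m + 1)) : Fin n → Fin (n + 1) :=
  fun i =>
    if h : 1 ≤ i.1 ∧ i.1 ≤ m then
      ⟨(j' ⟨i.1 - 1, by omega⟩ : ℕ), by
        have := (j' ⟨i.1 - 1, by omega⟩).isLt; omega⟩
    else ⟨0, by omega⟩

/-- Restrict a multiplicity function on sizes `1..n` to the shifted range. -/
def phiMap (n m : ℕ) (hmn : m < n) (j : Fin n → Fin (n + 1)) : Fin m → Fin (m + 1) :=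
  fun l => ⟨min ((j ⟨l.1 + 1, by have := l.isLt; omega⟩ : ℕ)) m, by omega⟩

lemma eMap_coe (n m : ℕ) (hmn : m < n) (j' : Fin m → Fin (m + 1)) (i : Fin n) :
    ((eMap n m hmn j' i : ℕ)) =
      if h : 1 ≤ i.1 ∧ i.1 ≤ m then (j' ⟨i.1 - 1, by omega⟩ : ℕ) else 0 := by
  unfold eMap; split <;> rfl

lemma eMap_succ (n m : ℕ) (hmn : m < n) (j' : Fin m → Fin (m + 1)) (l : Fin m)
    (hl : l.1 + 1 < n) :
    ((eMap n m hmn j' ⟨l.1 + 1, hl⟩ : ℕ)) = (j' l : ℕ) := by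
  rw [eMap_coe, dif_pos (show 1 ≤ ((⟨l.1 + 1, hl⟩ : Fin n)).1 ∧ ((⟨l.1 + 1, hl⟩ : Fin n)).1 ≤ m
    from ⟨Nat.succ_le_succ (Nat.zero_le _), l.isLt⟩)]
  have hidx : ((⟨l.1 + 1 - 1, by have := l.isLt; omega⟩ : Fin m)) = l :=
    Fin.ext rfl
  rw [hidx]

lemma eMap_out (n m : ℕ) (hmn : m < n) (j' : Fin m → Fin (m + 1)) (i : Fin n)
    (h : i.1 = 0 ∨ m < i.1) : ((eMap n m hmn j' i : ℕ)) = 0 := by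
  rw [eMap_coe, dif_neg (by omega)]

lemma phiMap_coe (n m : ℕ) (hmn : m < n) (j : Fin n → Fin (n + 1)) (l : Fin m) :
    ((phiMap n m hmn j l : ℕ))
      = min ((j ⟨l.1 + 1, by have := l.isLt; omega⟩ : ℕ)) m := rfl

lemma phiMap_coe' (n m : ℕ) (hmn : m < n) (j : Fin n → Fin (n + 1)) (l : Fin m)
    (i : Fin n) (h : i.1 = l.1 + 1) :
    ((phiMap n m hmn j l : ℕ)) = min ((j i : ℕ)) m := by
  have hidx : ((⟨l.1 + 1, by have := l.isLt; omega⟩ : Fin n)) = i := Fin.ext h.symm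
  rw [phiMap_coe, hidx]

/-- For the sequence `a'` with `a'_1 = 0` and `a'_m = a_m` for `m ≥ 2`:
`B(n,k;a') = (n!/(n−k)!)·B(n−k,k;b)` for `n ≥ k ≥ 1`, where `b_j = a_{j+1}/(j+1)`,
and `B(n,k;a') = 0` for `n < k`. -/
theorem partialBell_first_term_zero (a : ℕ → ℚ) (n k : ℕ) (hk : 1 ≤ k) :
    (k ≤ n →
      partialBell (fun m => if m = 1 then 0 else a m) n k =
        (n.factorial : ℚ) / ((n - k).factorial : ℚ) *
          partialBell (fun j => a (j + 1) / ((j : ℚ) + 1)) (n - k) k) ∧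
    (n < k → partialBell (fun m => if m = 1 then 0 else a m) n k = 0) := by
  constructor
  · intro hkn
    set m := n - k with hmdef
    have hmn : m < n := by omega
    have hn1 : 1 ≤ n := by omega
    have hkey : ∀ j : Fin n → Fin (n + 1), (∑ i, (j i : ℕ)) = k →
        (∑ i, (i.1 + 1) * (j i : ℕ)) = n →
        (∀ i : Fin n, i.1 * (j i : ℕ) ≤ m) ∧ (∑ i : Fin n, i.1 * (j i : ℕ)) = m := by
      intro j h1 h2
      have hsplit : ∑ i : Fin n, (i.1 + 1) * (j i : ℕ)
          = (∑ i : Fin n, i.1 * (j i : ℕ)) + ∑ i : Fin n, (j i : ℕ) := by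
        rw [← Finset.sum_add_distrib]
        exact Finset.sum_congr rfl fun i _ => by ring
      have hw : ∑ i : Fin n, i.1 * (j i : ℕ) = m := by omega
      refine ⟨fun i => ?_, hw⟩
      have hone : i.1 * (j i : ℕ) ≤ ∑ i : Fin n, i.1 * (j i : ℕ) :=
        Finset.single_le_sum (f := fun i : Fin n => i.1 * (j i : ℕ))
          (fun i _ => Nat.zero_le _) (Finset.mem_univ i)
      omega
    rw [partialBell, partialBell, Finset.mul_sum]
    rw [show (∑ j : Fin m → Fin (m + 1),
        (n.factorial : ℚ) / ((m).factorial : ℚ) *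
          (if (∑ i, (j i : ℕ)) = k ∧ (∑ i, (i.1 + 1) * (j i : ℕ)) = m then
            (m.factorial : ℚ) /
                ((∏ i, (j i : ℕ).factorial * ((i.1 + 1).factorial) ^ (j i : ℕ) : ℕ) : ℚ) *
              ∏ i, (fun j => a (j + 1) / ((j : ℚ) + 1)) (i.1 + 1) ^ (j i : ℕ)
          else 0))
      = ∑ j ∈ Finset.univ.filter (fun j : Fin m → Fin (m + 1) =>
          (∑ i, (j i : ℕ)) = k ∧ (∑ i, (i.1 + 1) * (j i : ℕ)) = m),
        (n.factorial : ℚ) / ((m).factorial : ℚ) *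
          ((m.factorial : ℚ) /
                ((∏ i, (j i : ℕ).factorial * ((i.1 + 1).factorial) ^ (j i : ℕ) : ℕ) : ℚ) *
              ∏ i, (fun j => a (j + 1) / ((j : ℚ) + 1)) (i.1 + 1) ^ (j i : ℕ)) from by
        rw [Finset.sum_filter]
        exact Finset.sum_congr rfl fun j _ => by split <;> simp]
    rw [show (∑ j : Fin n → Fin (n + 1),
        (if (∑ i, (j i : ℕ)) = k ∧ (∑ i, (i.1 + 1) * (j i : ℕ)) = n then
          (n.factorial : ℚ) /
              ((∏ i, (j i : ℕ).factorial * ((i.1 + 1).factorial) ^ (j i : ℕ) : ℕ) : ℚ) *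
            ∏ i, (fun m => if m = 1 then 0 else a m) (i.1 + 1) ^ (j i : ℕ)
        else 0))
      = ∑ j ∈ Finset.univ.filter (fun j : Fin n → Fin (n + 1) =>
          ((∑ i, (j i : ℕ)) = k ∧ (∑ i, (i.1 + 1) * (j i : ℕ)) = n) ∧ (j ⟨0, hn1⟩ : ℕ) = 0),
        (n.factorial : ℚ) /
            ((∏ i, (j i : ℕ).factorial * ((i.1 + 1).factorial) ^ (j i : ℕ) : ℕ) : ℚ) *
          ∏ i, (fun m => if m = 1 then 0 else a m) (i.1 + 1) ^ (j i : ℕ) from by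
        rw [Finset.sum_filter]
        refine Finset.sum_congr rfl fun j _ => ?_
        by_cases hc : (∑ i, (j i : ℕ)) = k ∧ (∑ i, (i.1 + 1) * (j i : ℕ)) = n
        · by_cases h0 : (j ⟨0, hn1⟩ : ℕ) = 0
          · rw [if_pos hc, if_pos ⟨hc, h0⟩]
          · rw [if_pos hc, if_neg (by tauto)]
            have hz : (∏ i, (fun m => if m = 1 then 0 else a m) (i.1 + 1) ^ (j i : ℕ)) = 0 := by
              apply Finset.prod_eq_zero (Finset.mem_univ (⟨0, hn1⟩ : Fin n))
              show (if ((0 : ℕ) + 1 = 1) then (0 : ℚ) else a (0 + 1)) ^ ((j ⟨0, hn1⟩ : ℕ)) = 0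
              rw [if_pos rfl]
              exact zero_pow h0
            rw [hz, mul_zero]
        · rw [if_neg hc, if_neg (by tauto)]]
    symm
    refine Finset.sum_nbij' (i := eMap n m hmn) (j := phiMap n m hmn) ?_ ?_ ?_ ?_ ?_
    · -- hi
      intro j' hj'
      simp only [Finset.mem_filter, Finset.mem_univ, true_and] at hj' ⊢
      obtain ⟨hs, hw⟩ := hj'
      have hsum1 : ∑ i, (eMap n m hmn j' i : ℕ) = k := by
        have t1 : ∑ i : Fin n, ((eMap n m hmn j' i : ℕ))
            = ∑ l : Fin m, ((eMap n m hmn j' ⟨l.1 + 1, by have := l.isLt; omega⟩ : ℕ)) :=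
          aux_sum hmn _ (fun i hi => eMap_out n m hmn j' i hi)
        exact (t1.trans (Finset.sum_congr rfl fun l _ =>
          eMap_succ n m hmn j' l (by have := l.isLt; omega))).trans hs
      have hsum2 : ∑ i : Fin n, (i.1 + 1) * (eMap n m hmn j' i : ℕ) = n := by
        have u1 : ∑ i : Fin n, (i.1 + 1) * ((eMap n m hmn j' i : ℕ))
            = ∑ l : Fin m, (l.1 + 1 + 1) *
                ((eMap n m hmn j' ⟨l.1 + 1, by have := l.isLt; omega⟩ : ℕ)) :=
          aux_sum hmn (fun i : Fin n => (i.1 + 1) * ((eMap n m hmn j' i : ℕ)))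
            (fun i hi => by
              show (i.1 + 1) * ((eMap n m hmn j' i : ℕ)) = 0
              rw [eMap_out n m hmn j' i hi, mul_zero])
        have u2 : ∀ l : Fin m, (l.1 + 1 + 1) *
            ((eMap n m hmn j' ⟨l.1 + 1, by have := l.isLt; omega⟩ : ℕ))
            = (l.1 + 1) * (j' l : ℕ) + (j' l : ℕ) := by
          intro l
          rw [eMap_succ n m hmn j' l (by have := l.isLt; omega)]
          ring
        rw [u1, Finset.sum_congr rfl fun l _ => u2 l, Finset.sum_add_distrib, hw, hs]
        omega
      exact ⟨⟨hsum1, hsum2⟩, eMap_out n m hmn j' _ (Or.inl rfl)⟩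
    · -- hj
      intro j hj
      simp only [Finset.mem_filter, Finset.mem_univ, true_and] at hj ⊢
      obtain ⟨⟨hs, hw⟩, h0⟩ := hj
      obtain ⟨hle, hwm⟩ := hkey j hs hw
      have hz : ∀ i : Fin n, m < i.1 → (j i : ℕ) = 0 := by
        intro i hi
        have h1 : i.1 * (j i : ℕ) ≤ m := hle i
        by_contra hne
        have h2 : i.1 ≤ i.1 * (j i : ℕ) := Nat.le_mul_of_pos_right _ (by omega)
        omega
      have hmin : ∀ l : Fin m, ∀ hl : l.1 + 1 < n,
          min ((j ⟨l.1 + 1, hl⟩ : ℕ)) m = (j ⟨l.1 + 1, hl⟩ : ℕ) := by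
        intro l hl
        have h1 : (l.1 + 1) * ((j ⟨l.1 + 1, hl⟩ : ℕ)) ≤ m := hle ⟨l.1 + 1, hl⟩
        have h2 : ((j ⟨l.1 + 1, hl⟩ : ℕ)) ≤ (l.1 + 1) * ((j ⟨l.1 + 1, hl⟩ : ℕ)) :=
          Nat.le_mul_of_pos_left _ (by omega)
        omega
      have hzero : ∀ i : Fin n, i.1 = 0 ∨ m < i.1 → (j i : ℕ) = 0 := by
        intro i hi
        rcases hi with h | h
        · have : i = ⟨0, hn1⟩ := Fin.ext h
          rw [this]; exact h0
        · exact hz i h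
      constructor
      · have e1 : ∑ l : Fin m, ((phiMap n m hmn j l : ℕ))
            = ∑ l : Fin m, ((j ⟨l.1 + 1, by have := l.isLt; omega⟩ : ℕ)) :=
          Finset.sum_congr rfl fun l _ => by
            rw [phiMap_coe]; exact hmin l _
        have e2 : ∑ i : Fin n, ((j i : ℕ))
            = ∑ l : Fin m, ((j ⟨l.1 + 1, by have := l.isLt; omega⟩ : ℕ)) :=
          aux_sum hmn (fun i => (j i : ℕ)) hzero
        exact e1.trans (e2.symm.trans hs)
      · have e1 : ∑ l : Fin m, (l.1 + 1) * ((phiMap n m hmn j l : ℕ))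
            = ∑ l : Fin m, (l.1 + 1) * ((j ⟨l.1 + 1, by have := l.isLt; omega⟩ : ℕ)) :=
          Finset.sum_congr rfl fun l _ => by
            rw [phiMap_coe, hmin l _]
        have e2 : ∑ i : Fin n, i.1 * ((j i : ℕ))
            = ∑ l : Fin m, (l.1 + 1) * ((j ⟨l.1 + 1, by have := l.isLt; omega⟩ : ℕ)) :=
          aux_sum hmn (fun i : Fin n => i.1 * ((j i : ℕ)))
            (fun i hi => by
              show i.1 * ((j i : ℕ)) = 0
              rcases hi with h | h
              · rw [h, Nat.zero_mul]
              · rw [hzero i (Or.inr h), mul_zero])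
        exact e1.trans (e2.symm.trans hwm)
    · -- left inverse
      intro j' hj'
      funext l
      apply Fin.ext
      show ((phiMap n m hmn (eMap n m hmn j') l : ℕ)) = (j' l : ℕ)
      rw [phiMap_coe, eMap_succ n m hmn j' l (by have := l.isLt; omega)]
      have := (j' l).isLt
      omega
    · -- right inverse
      intro j hj
      simp only [Finset.mem_filter, Finset.mem_univ, true_and] at hj
      obtain ⟨⟨hs, hw⟩, h0⟩ := hj
      obtain ⟨hle, hwm⟩ := hkey j hs hw
      have hz : ∀ i : Fin n, m < i.1 → (j i : ℕ) = 0 := by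
        intro i hi
        have h1 : i.1 * (j i : ℕ) ≤ m := hle i
        by_contra hne
        have h2 : i.1 ≤ i.1 * (j i : ℕ) := Nat.le_mul_of_pos_right _ (by omega)
        omega
      funext i
      apply Fin.ext
      show ((eMap n m hmn (phiMap n m hmn j) i : ℕ)) = (j i : ℕ)
      rw [eMap_coe]
      split
      · next h =>
        rw [phiMap_coe' n m hmn j ⟨i.1 - 1, by omega⟩ i (by show i.1 = i.1 - 1 + 1; omega)]
        have h1 : i.1 * ((j i : ℕ)) ≤ m := hle i
        have h2 : ((j i : ℕ)) ≤ i.1 * ((j i : ℕ)) := Nat.le_mul_of_pos_left _ (by omega)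
        omega
      · next h =>
        have hcase : i.1 = 0 ∨ m < i.1 := by omega
        rcases hcase with h' | h'
        · have : i = ⟨0, hn1⟩ := Fin.ext h'
          rw [this, h0]
        · rw [hz i h']
    · -- term equality
      intro j' hj'
      simp only [Finset.mem_filter, Finset.mem_univ, true_and] at hj'
      obtain ⟨hs, hw⟩ := hj'
      beta_reduce
      have hD : (∏ i : Fin n,
          ((eMap n m hmn j' i : ℕ)).factorial *
            ((i.1 + 1).factorial) ^ ((eMap n m hmn j' i : ℕ)))
          = ∏ l : Fin m, ((j' l : ℕ)).factorial * ((l.1 + 2).factorial) ^ ((j' l : ℕ)) := by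
        have t1 := aux_prod hmn (fun i : Fin n =>
            ((eMap n m hmn j' i : ℕ)).factorial *
              ((i.1 + 1).factorial) ^ ((eMap n m hmn j' i : ℕ)))
          (fun i hi => by
            show ((eMap n m hmn j' i : ℕ)).factorial *
              ((i.1 + 1).factorial) ^ ((eMap n m hmn j' i : ℕ)) = 1
            rw [eMap_out n m hmn j' i hi]; simp)
        refine t1.trans (Finset.prod_congr rfl fun l _ => ?_)
        show ((eMap n m hmn j' ⟨l.1 + 1, by have := l.isLt; omega⟩ : ℕ)).factorial *
            ((l.1 + 1 + 1).factorial) ^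
              ((eMap n m hmn j' ⟨l.1 + 1, by have := l.isLt; omega⟩ : ℕ))
          = ((j' l : ℕ)).factorial * ((l.1 + 2).factorial) ^ ((j' l : ℕ))
        rw [eMap_succ n m hmn j' l (by have := l.isLt; omega)]
      have hA : (∏ i : Fin n,
          (if i.1 + 1 = 1 then (0 : ℚ) else a (i.1 + 1)) ^ ((eMap n m hmn j' i : ℕ)))
          = ∏ l : Fin m, a (l.1 + 2) ^ ((j' l : ℕ)) := by
        have t1 := aux_prod hmn (fun i : Fin n =>
            (if i.1 + 1 = 1 then (0 : ℚ) else a (i.1 + 1)) ^ ((eMap n m hmn j' i : ℕ)))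
          (fun i hi => by
            show (if i.1 + 1 = 1 then (0 : ℚ) else a (i.1 + 1)) ^
              ((eMap n m hmn j' i : ℕ)) = 1
            rw [eMap_out n m hmn j' i hi, pow_zero])
        refine t1.trans (Finset.prod_congr rfl fun l _ => ?_)
        show (if l.1 + 1 + 1 = 1 then (0 : ℚ) else a (l.1 + 1 + 1)) ^
            ((eMap n m hmn j' ⟨l.1 + 1, by have := l.isLt; omega⟩ : ℕ))
          = a (l.1 + 2) ^ ((j' l : ℕ))
        rw [eMap_succ n m hmn j' l (by have := l.isLt; omega), if_neg (by omega)]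
      have hP : (∏ l : Fin m, (a (l.1 + 1 + 1) / (((l.1 + 1 : ℕ) : ℚ) + 1)) ^ ((j' l : ℕ)))
          = (∏ l : Fin m, a (l.1 + 2) ^ ((j' l : ℕ))) /
              ∏ l : Fin m, (((l.1 : ℚ) + 2)) ^ ((j' l : ℕ)) := by
        rw [← Finset.prod_div_distrib]
        refine Finset.prod_congr rfl fun l _ => ?_
        rw [div_pow]
        congr 2
        push_cast
        ring
      have hDD : (((∏ l : Fin m, ((j' l : ℕ)).factorial *
            ((l.1 + 2).factorial) ^ ((j' l : ℕ)) : ℕ)) : ℚ)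
          = (((∏ l : Fin m, ((j' l : ℕ)).factorial *
              ((l.1 + 1).factorial) ^ ((j' l : ℕ)) : ℕ)) : ℚ) *
            ∏ l : Fin m, (((l.1 : ℚ) + 2)) ^ ((j' l : ℕ)) := by
        rw [Nat.cast_prod, Nat.cast_prod, ← Finset.prod_mul_distrib]
        refine Finset.prod_congr rfl fun l _ => ?_
        have h2 : (((l.1 + 2).factorial : ℕ) : ℚ)
            = ((l.1 : ℚ) + 2) * (((l.1 + 1).factorial : ℕ) : ℚ) := by
          rw [show (l.1 + 2).factorial = (l.1 + 2) * (l.1 + 1).factorial from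
            Nat.factorial_succ (l.1 + 1), Nat.cast_mul]
          congr 1
          push_cast
          ring
        rw [Nat.cast_mul, Nat.cast_mul, Nat.cast_pow, Nat.cast_pow, h2, mul_pow]
        ring
      have hC : (∏ l : Fin m, (((l.1 : ℚ) + 2)) ^ ((j' l : ℕ))) ≠ 0 := by
        apply Finset.prod_ne_zero_iff.mpr
        intro l _
        positivity
      have hD2 : (((∏ l : Fin m, ((j' l : ℕ)).factorial *
            ((l.1 + 1).factorial) ^ ((j' l : ℕ)) : ℕ)) : ℚ) ≠ 0 := by
        rw [Nat.cast_ne_zero]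
        apply Finset.prod_ne_zero_iff.mpr
        intro l _
        positivity
      have hm : ((m.factorial : ℚ)) ≠ 0 := Nat.cast_ne_zero.mpr (Nat.factorial_ne_zero m)
      rw [hD, hA, hP, hDD]
      have hn' : ((n.factorial : ℚ)) ≠ 0 := Nat.cast_ne_zero.mpr n.factorial_ne_zero
      field_simp
  · intro hnk
    rw [partialBell]
    apply Finset.sum_eq_zero
    intro j _
    rw [if_neg]
    rintro ⟨h1, h2⟩
    have : (∑ i, (j i : ℕ)) ≤ ∑ i : Fin n, (i.1 + 1) * (j i : ℕ) :=
      Finset.sum_le_sum fun i _ => Nat.le_mul_of_pos_left _ (by omega)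
    omega
end

section
/- For every sequence a : ℕ → ℚ indexed from 1 and all natural numbers n, k_1, k_2, one has C(k_1+k_2, k_1)·B(n, k_1+k_2; a) = Σ_{i=0}^n C(n,i)·B(i,k_1;a)·B(n−i,k_2;a), where C denotes the binomial coefficient. -/
open Finset BigOperators

noncomputable def bellF (a : ℕ → ℚ) : PowerSeries ℚ :=
  PowerSeries.mk (fun m => if m = 0 then 0 else a m / m.factorial)

lemma fib_disjoint (K n : ℕ) (l : ℕ →₀ ℕ) :
    (↑(Finset.univ : Finset (Fin n)) : Set (Fin n)).PairwiseDisjoint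
      (fun v : Fin n => (range K).filter (fun t => l t = v.1 + 1)) := by
  intro v _ w _ hvw
  simp only [Finset.disjoint_left, Finset.mem_filter]
  rintro t ⟨_, h1⟩ ⟨_, h2⟩
  exact hvw (Fin.ext (by omega))

lemma fib_cover {K n : ℕ} {l : ℕ →₀ ℕ}
    (hcov : ∀ t ∈ range K, ∃ v : Fin n, l t = v.1 + 1) :
    range K = Finset.univ.biUnion
      (fun v : Fin n => (range K).filter (fun t => l t = v.1 + 1)) := by
  ext t
  simp only [Finset.mem_biUnion, Finset.mem_filter, Finset.mem_univ, true_and]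
  constructor
  · intro ht; obtain ⟨v, hv⟩ := hcov t ht; exact ⟨v, ht, hv⟩
  · rintro ⟨v, ht, _⟩; exact ht

lemma sum_over_cover {M : Type*} [AddCommMonoid M] {K n : ℕ} {l : ℕ →₀ ℕ}
    (hcov : ∀ t ∈ range K, ∃ v : Fin n, l t = v.1 + 1) (h : ℕ → M) :
    ∑ t ∈ range K, h (l t)
      = ∑ v : Fin n, ((range K).filter (fun t => l t = v.1 + 1)).card • h (v.1 + 1) := by
  have hb := Finset.sum_biUnion (f := fun t => h (l t)) (fib_disjoint K n l)
  rw [← fib_cover hcov] at hb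
  rw [hb]
  refine Finset.sum_congr rfl fun v _ => ?_
  rw [Finset.sum_congr rfl (fun t ht => by rw [(Finset.mem_filter.mp ht).2] :
    ∀ t ∈ (range K).filter (fun t => l t = v.1 + 1), h (l t) = h (v.1 + 1)),
    Finset.sum_const]

lemma prod_over_cover {M : Type*} [CommMonoid M] {K n : ℕ} {l : ℕ →₀ ℕ}
    (hcov : ∀ t ∈ range K, ∃ v : Fin n, l t = v.1 + 1) (h : ℕ → M) :
    ∏ t ∈ range K, h (l t)
      = ∏ v : Fin n, h (v.1 + 1) ^ ((range K).filter (fun t => l t = v.1 + 1)).card := by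
  have hb := Finset.prod_biUnion (f := fun t => h (l t)) (fib_disjoint K n l)
  rw [← fib_cover hcov] at hb
  rw [hb]
  refine Finset.prod_congr rfl fun v _ => ?_
  rw [Finset.prod_congr rfl (fun t ht => by rw [(Finset.mem_filter.mp ht).2] :
    ∀ t ∈ (range K).filter (fun t => l t = v.1 + 1), h (l t) = h (v.1 + 1)),
    Finset.prod_const]

lemma cover_of_cards {n K : ℕ} {l : ℕ →₀ ℕ} {j : Fin n → ℕ}
    (hfib : ∀ v : Fin n, ((range K).filter (fun t => l t = v.1 + 1)).card = j v)
    (hsum : ∑ v, j v = K) : ∀ t ∈ range K, ∃ v : Fin n, l t = v.1 + 1 := by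
  classical
  have hdis : ∀ x ∈ (Finset.univ : Finset (Fin n)), ∀ y ∈ (Finset.univ : Finset (Fin n)),
      x ≠ y → Disjoint ((range K).filter (fun t => l t = x.1 + 1))
        ((range K).filter (fun t => l t = y.1 + 1)) :=
    fun x hx y hy hxy => fib_disjoint K n l (Finset.mem_coe.mpr hx) (Finset.mem_coe.mpr hy) hxy
  have hcard : (Finset.univ.biUnion
      (fun v : Fin n => (range K).filter (fun t => l t = v.1 + 1))).card = K := by
    rw [Finset.card_biUnion hdis, Finset.sum_congr rfl (fun v _ => hfib v), hsum]
  have heq2 : Finset.univ.biUnion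
      (fun v : Fin n => (range K).filter (fun t => l t = v.1 + 1)) = range K :=
    Finset.eq_of_subset_of_card_le
      (Finset.biUnion_subset.mpr fun v _ => Finset.filter_subset _ _)
      (by rw [hcard, Finset.card_range])
  intro t ht
  rw [← heq2] at ht
  obtain ⟨v, -, hv⟩ := Finset.mem_biUnion.mp ht
  exact ⟨v, (Finset.mem_filter.mp hv).2⟩

lemma phi_spec {n k : ℕ} {l : ℕ →₀ ℕ} (hl : l ∈ finsuppAntidiag (range k) n)
    (hpos : ∀ t ∈ range k, l t ≠ 0) :
    (∀ t ∈ range k, ∃ v : Fin n, l t = v.1 + 1) ∧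
    (∀ v : Fin n, ((range k).filter (fun t => l t = v.1 + 1)).card ≤ n) ∧
    (∑ v : Fin n, ((range k).filter (fun t => l t = v.1 + 1)).card = k) ∧
    (∑ v : Fin n, (v.1 + 1) * ((range k).filter (fun t => l t = v.1 + 1)).card = n) := by
  obtain ⟨hsum, hsupp⟩ := Finset.mem_finsuppAntidiag.mp hl
  have hsum' : ∑ t ∈ range k, l t = n := hsum
  have hle : ∀ t ∈ range k, l t ≤ n := by
    intro t ht
    have h := Finset.single_le_sum (f := fun t => l t) (fun i _ => Nat.zero_le _) ht
    rwa [hsum'] at h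
  have hcov : ∀ t ∈ range k, ∃ v : Fin n, l t = v.1 + 1 := by
    intro t ht
    have h0 := hpos t ht
    have h2 := hle t ht
    exact ⟨⟨l t - 1, by omega⟩, by simp only []; omega⟩
  have hcardle : ∀ v : Fin n, ((range k).filter (fun t => l t = v.1 + 1)).card ≤ n := by
    intro v
    have h3 : ∑ t ∈ (range k).filter (fun t => l t = v.1 + 1), l t ≤ n := by
      have h := Finset.sum_le_sum_of_subset (f := fun t => l t)
        (Finset.filter_subset (fun t => l t = v.1 + 1) (range k))
      rwa [hsum'] at h
    have h4 : ∑ t ∈ (range k).filter (fun t => l t = v.1 + 1), l t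
        = ((range k).filter (fun t => l t = v.1 + 1)).card * (v.1 + 1) := by
      rw [Finset.sum_congr rfl (fun t ht => (Finset.mem_filter.mp ht).2), Finset.sum_const,
        smul_eq_mul]
    have h5 : ((range k).filter (fun t => l t = v.1 + 1)).card
        ≤ ((range k).filter (fun t => l t = v.1 + 1)).card * (v.1 + 1) :=
      Nat.le_mul_of_pos_right _ (by omega)
    omega
  have hs1 := sum_over_cover hcov (fun _ => (1 : ℕ))
  have hs2 := sum_over_cover hcov (fun m => m)
  simp only [smul_eq_mul, mul_one, Finset.sum_const, Finset.card_range] at hs1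
  refine ⟨hcov, hcardle, hs1.symm, ?_⟩
  calc ∑ v : Fin n, (v.1 + 1) * ((range k).filter (fun t => l t = v.1 + 1)).card
      = ∑ v : Fin n, ((range k).filter (fun t => l t = v.1 + 1)).card • (v.1 + 1) :=
        Finset.sum_congr rfl fun v _ => by rw [smul_eq_mul, mul_comm]
    _ = ∑ t ∈ range k, l t := hs2.symm
    _ = n := hsum'

lemma mult_rec {n : ℕ} (j : Fin n → ℕ) (k : ℕ) (hj : ∑ v, j v = k + 1) :
    ∑ v0 ∈ Finset.univ.filter (fun v => 1 ≤ j v),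
        Nat.multinomial Finset.univ (Function.update j v0 (j v0 - 1))
      = Nat.multinomial Finset.univ j := by
  set P := ∏ v, (j v).factorial with hP
  have hPpos : 0 < P := Finset.prod_pos fun _ _ => Nat.factorial_pos _
  apply Nat.eq_of_mul_eq_mul_right hPpos
  have hterm : ∀ v0 ∈ Finset.univ.filter (fun v => 1 ≤ j v),
      Nat.multinomial Finset.univ (Function.update j v0 (j v0 - 1)) * P
        = j v0 * k.factorial := by
    intro v0 hv0
    have hv1 : 1 ≤ j v0 := (Finset.mem_filter.mp hv0).2
    obtain ⟨m, hm⟩ : ∃ m, j v0 = m + 1 := ⟨j v0 - 1, by omega⟩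
    have hcongr : ∀ v ∈ Finset.univ,
        (Function.update j v0 (j v0 - 1) v).factorial
          = Function.update (fun v => (j v).factorial) v0 ((j v0 - 1).factorial) v := by
      intro v _
      by_cases h : v = v0 <;> simp [Function.update, h]
    have hspec := Nat.multinomial_spec Finset.univ (Function.update j v0 (j v0 - 1))
    have hsum : ∑ v, Function.update j v0 (j v0 - 1) v = k := by
      rw [Finset.sum_update_of_mem (Finset.mem_univ v0)] at *
      have := Finset.add_sum_erase Finset.univ j (Finset.mem_univ v0)
      rw [show Finset.univ \ {v0} = Finset.univ.erase v0 by
        rw [Finset.erase_eq]] at *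
      omega
    rw [hsum] at hspec
    have hPfac : P = j v0 * ∏ v, (Function.update j v0 (j v0 - 1) v).factorial := by
      rw [Finset.prod_congr rfl hcongr, Finset.prod_update_of_mem (Finset.mem_univ v0),
        hP, ← Finset.mul_prod_erase Finset.univ _ (Finset.mem_univ v0),
        show Finset.univ \ {v0} = Finset.univ.erase v0 by rw [Finset.erase_eq]]
      rw [hm]
      simp only [Nat.add_sub_cancel, Nat.factorial_succ]
      ring
    calc Nat.multinomial Finset.univ (Function.update j v0 (j v0 - 1)) * P
        = j v0 * ((∏ v, (Function.update j v0 (j v0 - 1) v).factorial) *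
            Nat.multinomial Finset.univ (Function.update j v0 (j v0 - 1))) := by
          rw [hPfac]; ring
      _ = j v0 * k.factorial := by rw [hspec]
  rw [Finset.sum_mul, Finset.sum_congr rfl hterm, ← Finset.sum_mul]
  have hfil : ∑ v0 ∈ Finset.univ.filter (fun v => 1 ≤ j v), j v0 = ∑ v0, j v0 :=
    Finset.sum_filter_of_ne (fun v _ h => by omega)
  have hspec2 := Nat.multinomial_spec Finset.univ j
  rw [hj] at hspec2
  rw [hfil, hj, mul_comm (Nat.multinomial Finset.univ j) P, hspec2, Nat.factorial_succ]

lemma FC (n : ℕ) : ∀ (k : ℕ) (j : Fin n → ℕ), (∑ v, j v) = k →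
    ((finsuppAntidiag (range k) (∑ v, (v.1 + 1) * j v)).filter
      (fun l => ∀ v : Fin n, ((range k).filter (fun t => l t = v.1 + 1)).card = j v)).card
      = Nat.multinomial Finset.univ j := by
  intro k
  induction k with
  | zero =>
    intro j hj
    have hj0 : ∀ v, j v = 0 := fun v =>
      (Finset.sum_eq_zero_iff.mp hj) v (Finset.mem_univ v)
    have hN : (∑ v : Fin n, (v.1 + 1) * j v) = 0 := by simp [hj0]
    rw [hN]
    have hset : ((finsuppAntidiag (range 0) 0).filter
        (fun l => ∀ v : Fin n, ((range 0).filter (fun t => l t = v.1 + 1)).card = j v)) = {0} := by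
      ext l
      simp only [Finset.mem_filter, Finset.mem_finsuppAntidiag, Finset.range_zero,
        Finset.filter_empty, Finset.card_empty, Finset.sum_empty, Finset.mem_singleton]
      constructor
      · rintro ⟨⟨-, hsupp⟩, -⟩
        exact Finsupp.support_eq_empty.mp (Finset.subset_empty.mp hsupp)
      · rintro rfl
        refine ⟨⟨?_, ?_⟩, fun v => (hj0 v).symm⟩ <;> simp
    rw [hset, Finset.card_singleton]
    have hs := Nat.multinomial_spec (Finset.univ : Finset (Fin n)) j
    rw [hj] at hs
    have h1 : ∏ v, (j v).factorial = 1 := by simp [hj0]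
    rw [h1, one_mul] at hs
    rw [hs]
    rfl
  | succ k ih =>
    intro j hj
    classical
    set N := ∑ v : Fin n, (v.1 + 1) * j v with hNdef
    -- decomposition of fibers over `range (k+1)`
    have hdec : ∀ (l : ℕ →₀ ℕ) (v0 : Fin n), l k = v0.1 + 1 → ∀ v : Fin n,
        ((range (k + 1)).filter (fun t => l t = v.1 + 1)).card
          = ((range k).filter (fun t => l t = v.1 + 1)).card + (if v = v0 then 1 else 0) := by
      intro l v0 hk v
      rw [Finset.range_add_one, Finset.filter_insert]
      by_cases h : v = v0
      · subst h
        rw [if_pos hk, if_pos rfl,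
          Finset.card_insert_of_notMem (fun hmem => by
            exact absurd (Finset.mem_of_mem_filter k hmem) (by simp))]
      · have hne : ¬ (l k = v.1 + 1) := by
          rw [hk]; intro hh; exact h (Fin.ext (by omega)).symm
        rw [if_neg hne, if_neg h]
        omega
    -- sum identity for updated `j`
    have hNsub : ∀ v0 : Fin n, 1 ≤ j v0 →
        (∑ v : Fin n, (v.1 + 1) * Function.update j v0 (j v0 - 1) v) + (v0.1 + 1) = N := by
      intro v0 hv1
      obtain ⟨m, hm⟩ : ∃ m, j v0 = m + 1 := ⟨j v0 - 1, by omega⟩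
      have hcongr : ∀ v ∈ Finset.univ,
          (v.1 + 1) * Function.update j v0 (j v0 - 1) v
            = Function.update (fun v : Fin n => (v.1 + 1) * j v) v0 ((v0.1 + 1) * (j v0 - 1)) v := by
        intro v _
        by_cases h : v = v0 <;> simp [Function.update, h]
      rw [Finset.sum_congr rfl hcongr, Finset.sum_update_of_mem (Finset.mem_univ v0)]
      have hN2 : N = (v0.1 + 1) * j v0 + ∑ v ∈ Finset.univ.erase v0, (v.1 + 1) * j v := by
        rw [hNdef, ← Finset.add_sum_erase Finset.univ _ (Finset.mem_univ v0)]
      rw [show Finset.univ \ {v0} = Finset.univ.erase v0 from by rw [Finset.erase_eq]]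
      rw [hN2, hm]
      simp only [Nat.add_sub_cancel]
      ring
    -- the target sigma finset
    set T := (Finset.univ.filter (fun v : Fin n => 1 ≤ j v)).sigma
      (fun v0 => (finsuppAntidiag (range k)
          (∑ v : Fin n, (v.1 + 1) * Function.update j v0 (j v0 - 1) v)).filter
        (fun l => ∀ v : Fin n, ((range k).filter (fun t => l t = v.1 + 1)).card
            = Function.update j v0 (j v0 - 1) v)) with hT
    have hcardT : T.card = Nat.multinomial Finset.univ j := by
      rw [hT, Finset.card_sigma, ← mult_rec j k hj]
      refine Finset.sum_congr rfl fun v0 hv0 => ?_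
      refine ih (Function.update j v0 (j v0 - 1)) ?_
      have hv1 : 1 ≤ j v0 := (Finset.mem_filter.mp hv0).2
      rw [Finset.sum_update_of_mem (Finset.mem_univ v0)]
      have h2 := Finset.add_sum_erase Finset.univ j (Finset.mem_univ v0)
      rw [show Finset.univ \ {v0} = Finset.univ.erase v0 from by rw [Finset.erase_eq]]
      omega
    rw [← hcardT]
    refine (Finset.card_nbij (fun p => p.2 + Finsupp.single k (p.1.1 + 1)) ?_ ?_ ?_).symm
    · -- maps to
      rintro ⟨v0, l'⟩ hp
      obtain ⟨hv0, hl'⟩ := Finset.mem_sigma.mp hp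
      dsimp only at hv0 hl' ⊢
      have hv1 : 1 ≤ j v0 := (Finset.mem_filter.mp hv0).2
      obtain ⟨hl'm, hfib'⟩ := Finset.mem_filter.mp hl'
      obtain ⟨hsum', hsupp'⟩ := Finset.mem_finsuppAntidiag.mp hl'm
      have hl'k : l' k = 0 := by
        by_contra h
        exact absurd (Finset.mem_range.mp (hsupp' (Finsupp.mem_support_iff.mpr h))) (by omega)
      set l : ℕ →₀ ℕ := l' + Finsupp.single k (v0.1 + 1) with hldef
      have hlk : l k = v0.1 + 1 := by simp [hldef, hl'k]
      have hlt : ∀ t, t ≠ k → l t = l' t := by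
        intro t ht; simp [hldef, Finsupp.single_apply, Ne.symm ht]
      have hfibk : ∀ v : Fin n, ((range k).filter (fun t => l t = v.1 + 1))
          = ((range k).filter (fun t => l' t = v.1 + 1)) := by
        intro v
        refine Finset.filter_congr fun t ht => ?_
        rw [hlt t (by have := Finset.mem_range.mp ht; omega)]
      simp only [Finset.coe_filter, Set.mem_setOf_eq, Finset.mem_filter, Finset.mem_finsuppAntidiag]
      refine ⟨⟨?_, ?_⟩, ?_⟩
      · -- sum over range (k+1)
        rw [Finset.sum_range_succ, hlk,
          Finset.sum_congr rfl (fun t ht => hlt t (by have := Finset.mem_range.mp ht; omega)),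
          hsum']
        exact hNsub v0 hv1
      · -- support
        intro t htsupp
        have h1 : l t ≠ 0 := Finsupp.mem_support_iff.mp htsupp
        by_cases h : t = k
        · subst h; simp
        · rw [hlt t h] at h1
          have := Finset.mem_range.mp (hsupp' (Finsupp.mem_support_iff.mpr h1))
          exact Finset.mem_range.mpr (by omega)
      · -- fibers
        intro v
        rw [hdec l v0 hlk v, hfibk v, hfib' v]
        by_cases h : v = v0
        · subst h
          rw [if_pos rfl, Function.update_self]
          omega
        · rw [if_neg h, Function.update_of_ne h]
          omega
    · -- injectivity
      rintro ⟨v0, l'⟩ hp0 ⟨w0, m'⟩ hq0 heq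
      have hp := Finset.mem_sigma.mp (Finset.mem_coe.mp hp0)
      have hq := Finset.mem_sigma.mp (Finset.mem_coe.mp hq0)
      have hl'k : l' k = 0 := by
        obtain ⟨hsum', hsupp'⟩ := Finset.mem_finsuppAntidiag.mp (Finset.mem_filter.mp hp.2).1
        by_contra h
        exact absurd (Finset.mem_range.mp (hsupp' (Finsupp.mem_support_iff.mpr h))) (by omega)
      have hm'k : m' k = 0 := by
        obtain ⟨hsum', hsupp'⟩ := Finset.mem_finsuppAntidiag.mp (Finset.mem_filter.mp hq.2).1
        by_contra h
        exact absurd (Finset.mem_range.mp (hsupp' (Finsupp.mem_support_iff.mpr h))) (by omega)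
      have hk : v0 = w0 := by
        have := DFunLike.congr_fun heq k
        simp [hl'k, hm'k] at this
        exact Fin.ext this
      subst hk
      have : l' = m' := by
        have := add_right_cancel heq
        exact this
      subst this
      rfl
    · -- surjectivity
      intro l hl
      simp only [Finset.coe_filter, Set.mem_setOf_eq] at hl
      obtain ⟨hlm, hfib⟩ := hl
      obtain ⟨hsum, hsupp⟩ := Finset.mem_finsuppAntidiag.mp hlm
      -- covering
      have hcov : ∀ t ∈ range (k + 1), ∃ v : Fin n, l t = v.1 + 1 := by
        have hdis : ∀ x ∈ (Finset.univ : Finset (Fin n)), ∀ y ∈ (Finset.univ : Finset (Fin n)),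
            x ≠ y → Disjoint ((range (k+1)).filter (fun t => l t = x.1 + 1))
              ((range (k+1)).filter (fun t => l t = y.1 + 1)) :=
          fun x hx y hy hxy => fib_disjoint (k+1) n l (Finset.mem_coe.mpr hx)
            (Finset.mem_coe.mpr hy) hxy
        have hcard : (Finset.univ.biUnion
            (fun v : Fin n => (range (k+1)).filter (fun t => l t = v.1 + 1))).card = k + 1 := by
          rw [Finset.card_biUnion hdis]
          rw [Finset.sum_congr rfl (fun v _ => hfib v), hj]
        have heq2 : Finset.univ.biUnion
            (fun v : Fin n => (range (k+1)).filter (fun t => l t = v.1 + 1)) = range (k+1) :=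
          Finset.eq_of_subset_of_card_le
            (Finset.biUnion_subset.mpr fun v _ => Finset.filter_subset _ _)
            (by rw [hcard, Finset.card_range])
        intro t ht
        rw [← heq2] at ht
        obtain ⟨v, -, hv⟩ := Finset.mem_biUnion.mp ht
        exact ⟨v, (Finset.mem_filter.mp hv).2⟩
      obtain ⟨v0, hv0k⟩ := hcov k (Finset.self_mem_range_succ k)
      have hv1 : 1 ≤ j v0 := by
        rw [← hfib v0]
        refine Finset.card_pos.mpr ⟨k, Finset.mem_filter.mpr ⟨Finset.self_mem_range_succ k, hv0k⟩⟩
      set l' := l.erase k with hl'def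
      have hl't : ∀ t, t ≠ k → l' t = l t := by
        intro t ht; simp [hl'def, Finsupp.erase_ne ht]
      have hfibk : ∀ v : Fin n, ((range k).filter (fun t => l' t = v.1 + 1))
          = ((range k).filter (fun t => l t = v.1 + 1)) := by
        intro v
        refine Finset.filter_congr fun t ht => ?_
        rw [hl't t (by have := Finset.mem_range.mp ht; omega)]
      refine ⟨⟨v0, l'⟩, ?_, ?_⟩
      · -- membership in T
        refine Finset.mem_coe.mpr (Finset.mem_sigma.mpr ⟨?_, ?_⟩)
        · exact Finset.mem_filter.mpr ⟨Finset.mem_univ v0, hv1⟩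
        · dsimp only
          refine (Finset.mem_filter.mpr ⟨Finset.mem_finsuppAntidiag.mpr
            ⟨?_, ?_⟩, ?_⟩)
          · -- sum
            have h1 : ∑ t ∈ range (k+1), l t = N := hsum
            rw [Finset.sum_range_succ] at h1
            rw [Finset.sum_congr rfl (fun t ht =>
              hl't t (by have := Finset.mem_range.mp ht; omega))]
            have h2 := hNsub v0 hv1
            have h4 : (range k).sum ⇑l' = ∑ t ∈ range k, l' t := rfl
            have h5 : (range k).sum ⇑l = ∑ t ∈ range k, l t := rfl
            omega
          · -- support
            intro t htsupp
            have h1 : l' t ≠ 0 := Finsupp.mem_support_iff.mp htsupp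
            have htk : t ≠ k := by
              intro h; subst h; simp [hl'def] at h1
            rw [hl't t htk] at h1
            have := Finset.mem_range.mp (hsupp (Finsupp.mem_support_iff.mpr h1))
            exact Finset.mem_range.mpr (by omega)
          · -- fibers
            intro v
            rw [hfibk v]
            have h3 := hdec l v0 hv0k v
            rw [hfib v] at h3
            by_cases h : v = v0
            · subst h
              rw [if_pos rfl] at h3
              rw [Function.update_self]
              omega
            · rw [if_neg h] at h3
              rw [Function.update_of_ne h]
              omega
      · -- i applied gives back l
        show l' + Finsupp.single k (v0.1 + 1) = l
        rw [← hv0k, hl'def]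
        exact Finsupp.erase_add_single k l

lemma key (a : ℕ → ℚ) (n k : ℕ) :
    (k.factorial : ℚ) * partialBell a n k =
      (n.factorial : ℚ) * PowerSeries.coeff n (bellF a ^ k) := by
  classical
  have hco : (PowerSeries.coeff n) (bellF a ^ k)
      = ∑ l ∈ finsuppAntidiag (range k) n,
          ∏ t ∈ range k, (if l t = 0 then 0 else a (l t) / ((l t).factorial : ℚ)) := by
    rw [PowerSeries.coeff_pow]
    exact Finset.sum_congr rfl fun l _ => Finset.prod_congr rfl fun t _ => by
      simp [bellF, PowerSeries.coeff_mk]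
  set F : (ℕ →₀ ℕ) → ℚ :=
    fun l => ∏ t ∈ range k, (if l t = 0 then 0 else a (l t) / ((l t).factorial : ℚ)) with hF
  set D1 := (finsuppAntidiag (range k) n).filter (fun l => ∀ t ∈ range k, l t ≠ 0) with hD1
  have h1 : ∑ l ∈ D1, F l = ∑ l ∈ finsuppAntidiag (range k) n, F l := by
    refine Finset.sum_filter_of_ne fun l hl hF0 t ht hzero => ?_
    exact hF0 (Finset.prod_eq_zero ht (by rw [hzero]; simp))
  set φ : (ℕ →₀ ℕ) → (Fin n → Fin (n + 1)) := fun l v =>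
    ⟨min (((range k).filter (fun t => l t = v.1 + 1)).card) n,
      Nat.lt_succ_of_le (min_le_right _ _)⟩ with hφ
  have h2 : ∑ l ∈ D1, F l = ∑ j : Fin n → Fin (n + 1), ∑ l ∈ D1.filter (fun l => φ l = j), F l :=
    (Finset.sum_fiberwise D1 φ F).symm
  rw [hco, ← h1, h2, partialBell, Finset.mul_sum, Finset.mul_sum]
  refine Finset.sum_congr rfl fun j _ => ?_
  by_cases hval : (∑ i, ((j i : ℕ))) = k ∧ (∑ i, (i.1 + 1) * (j i : ℕ)) = n
  · obtain ⟨hk1, hn1⟩ := hval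
    rw [if_pos ⟨hk1, hn1⟩]
    have hfibset : D1.filter (fun l => φ l = j)
        = (finsuppAntidiag (range k) n).filter
            (fun l => ∀ v : Fin n, ((range k).filter (fun t => l t = v.1 + 1)).card
              = (j v : ℕ)) := by
      ext l
      simp only [Finset.mem_filter, hD1]
      constructor
      · rintro ⟨⟨hlD, hlpos⟩, hlφ⟩
        obtain ⟨hcov, hle, hsum1, hsum2⟩ := phi_spec hlD hlpos
        refine ⟨hlD, fun v => ?_⟩
        have := congrFun hlφ v
        have h3 : min (((range k).filter (fun t => l t = v.1 + 1)).card) n = (j v : ℕ) :=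
          congrArg Fin.val this
        have h4 := hle v
        omega
      · rintro ⟨hlD, hfib⟩
        have hcov := cover_of_cards hfib hk1
        have hpos : ∀ t ∈ range k, l t ≠ 0 := by
          intro t ht
          obtain ⟨v, hv⟩ := hcov t ht
          omega
        refine ⟨⟨hlD, hpos⟩, funext fun v => Fin.ext ?_⟩
        show min (((range k).filter (fun t => l t = v.1 + 1)).card) n = (j v : ℕ)
        have h4 : (j v : ℕ) ≤ n := Fin.is_le _
        rw [hfib v]
        omega
    have hcard := FC n k (fun v => (j v : ℕ)) hk1
    rw [hn1] at hcard
    have hconst : ∀ l ∈ D1.filter (fun l => φ l = j),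
        F l = ∏ v : Fin n, (a (v.1 + 1) / (((v.1 + 1).factorial : ℕ) : ℚ)) ^ (j v : ℕ) := by
      intro l hl
      rw [hfibset] at hl
      obtain ⟨hlD, hfib⟩ := Finset.mem_filter.mp hl
      have hcov := cover_of_cards hfib hk1
      show (∏ t ∈ range k, (if l t = 0 then 0 else a (l t) / ((l t).factorial : ℚ))) = _
      rw [prod_over_cover hcov (fun m => if m = 0 then 0 else a m / (m.factorial : ℚ))]
      refine Finset.prod_congr rfl fun v _ => ?_
      rw [hfib v]
      simp
    rw [Finset.sum_congr rfl hconst, Finset.sum_const, hfibset, hcard]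
    -- arithmetic
    have hspec := Nat.multinomial_spec Finset.univ (fun v : Fin n => (j v : ℕ))
    rw [hk1] at hspec
    have hspecQ : (∏ v : Fin n, (((j v : ℕ).factorial : ℕ) : ℚ))
        * ((Nat.multinomial Finset.univ (fun v : Fin n => (j v : ℕ)) : ℕ) : ℚ)
        = (k.factorial : ℚ) := by
      rw [← Nat.cast_prod, ← Nat.cast_mul, hspec]
    have hcast : ((∏ i : Fin n, (j i : ℕ).factorial * ((i.1 + 1).factorial) ^ (j i : ℕ) : ℕ) : ℚ)
        = (∏ v : Fin n, (((j v : ℕ).factorial : ℕ) : ℚ))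
          * (∏ v : Fin n, ((((v.1 + 1).factorial : ℕ) : ℚ)) ^ (j v : ℕ)) := by
      rw [← Finset.prod_mul_distrib]
      push_cast
      rfl
    rw [hcast, nsmul_eq_mul]
    have hdiv : ∏ v : Fin n, (a (v.1 + 1) / (((v.1 + 1).factorial : ℕ) : ℚ)) ^ (j v : ℕ)
        = (∏ v : Fin n, a (v.1 + 1) ^ (j v : ℕ))
          / (∏ v : Fin n, ((((v.1 + 1).factorial : ℕ) : ℚ)) ^ (j v : ℕ)) := by
      rw [← Finset.prod_div_distrib]
      exact Finset.prod_congr rfl fun v _ => div_pow _ _ _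
    rw [hdiv]
    have hPq : (∏ v : Fin n, (((j v : ℕ).factorial : ℕ) : ℚ)) ≠ 0 :=
      Finset.prod_ne_zero_iff.mpr fun v _ => Nat.cast_ne_zero.mpr (Nat.factorial_ne_zero _)
    have hQ : (∏ v : Fin n, ((((v.1 + 1).factorial : ℕ) : ℚ)) ^ (j v : ℕ)) ≠ 0 :=
      Finset.prod_ne_zero_iff.mpr fun v _ =>
        pow_ne_zero _ (Nat.cast_ne_zero.mpr (Nat.factorial_ne_zero _))
    rw [← hspecQ]
    field_simp
  · rw [if_neg hval, mul_zero]
    have hempty : D1.filter (fun l => φ l = j) = ∅ := by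
      rw [Finset.eq_empty_iff_forall_notMem]
      intro l hl
      obtain ⟨hlD1, hlφ⟩ := Finset.mem_filter.mp hl
      obtain ⟨hlD, hlpos⟩ := Finset.mem_filter.mp hlD1
      obtain ⟨hcov, hle, hsum1, hsum2⟩ := phi_spec hlD hlpos
      have hjc : ∀ v : Fin n, (j v : ℕ) = ((range k).filter (fun t => l t = v.1 + 1)).card := by
        intro v
        have h3 := congrArg Fin.val (congrFun hlφ v)
        have h4 := hle v
        simp only [hφ] at h3
        omega
      refine hval ⟨?_, ?_⟩
      · rw [Finset.sum_congr rfl fun v _ => hjc v]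
        exact hsum1
      · rw [Finset.sum_congr rfl fun v _ => by rw [hjc v]]
        exact hsum2
    rw [hempty]
    simp

/-- Binomiality of the partial Bell polynomials:
`C(k₁+k₂,k₁)·B(n,k₁+k₂;a) = Σ_{i=0}^n C(n,i)·B(i,k₁;a)·B(n−i,k₂;a)`. -/
theorem partialBell_binomial (a : ℕ → ℚ) (n k₁ k₂ : ℕ) :
    ((k₁ + k₂).choose k₁ : ℚ) * partialBell a n (k₁ + k₂) =
      ∑ i ∈ Finset.range (n + 1),
        (n.choose i : ℚ) * partialBell a i k₁ * partialBell a (n - i) k₂ := by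
  have hfac : ∀ m : ℕ, ((m.factorial : ℕ) : ℚ) ≠ 0 :=
    fun m => Nat.cast_ne_zero.mpr (Nat.factorial_ne_zero m)
  have hB : ∀ (m K : ℕ), partialBell a m K
      = (m.factorial : ℚ) * PowerSeries.coeff m (bellF a ^ K) / (K.factorial : ℚ) := by
    intro m K
    rw [eq_div_iff (hfac K)]
    linear_combination key a m K
  have hmulc : PowerSeries.coeff n (bellF a ^ (k₁ + k₂))
      = ∑ i ∈ Finset.range (n + 1),
          PowerSeries.coeff i (bellF a ^ k₁) * PowerSeries.coeff (n - i) (bellF a ^ k₂) := by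
    rw [pow_add, PowerSeries.coeff_mul, Finset.Nat.sum_antidiagonal_eq_sum_range_succ_mk]
  simp only [hB]
  rw [hmulc, Finset.mul_sum, Finset.sum_div, Finset.mul_sum]
  refine Finset.sum_congr rfl fun i hi => ?_
  have hin : i ≤ n := by have := Finset.mem_range.mp hi; omega
  have h1 : ((k₁ + k₂).choose k₁ : ℚ) * (k₁.factorial : ℚ) * (k₂.factorial : ℚ)
      = ((k₁ + k₂).factorial : ℚ) := by
    have := Nat.choose_mul_factorial_mul_factorial (Nat.le_add_right k₁ k₂)
    rw [Nat.add_sub_cancel_left] at this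
    push_cast [← this]
    ring
  have h2 : ((n.choose i : ℕ) : ℚ) * (i.factorial : ℚ) * ((n - i).factorial : ℚ)
      = (n.factorial : ℚ) := by
    have := Nat.choose_mul_factorial_mul_factorial hin
    push_cast [← this]
    ring
  field_simp
  linear_combination ((n.factorial : ℚ) * PowerSeries.coeff i (bellF a ^ k₁)
        * PowerSeries.coeff (n - i) (bellF a ^ k₂)) * h1
    - (((k₁ + k₂).factorial : ℚ) * PowerSeries.coeff i (bellF a ^ k₁)
        * PowerSeries.coeff (n - i) (bellF a ^ k₂)) * h2
end

section
/- For all sequences a, b : ℕ → ℚ indexed from 1 and every natural number n, the complete Bell polynomial of the termwise sum satisfies A(n; a+b) = Σ_{i=0}^n C(n,i)·A(i;a)·A(n−i;b), where (a+b)_m = a_m + b_m and C denotes the binomial coefficient. -/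
open Finset BigOperators

namespace BellAux

/-- weighted size of a multi-index -/
def wsum {N : ℕ} (j : Fin N → ℕ) : ℕ := ∑ i, (i.1 + 1) * j i

/-- normalized product term -/
def trm (a : ℕ → ℚ) {N : ℕ} (j : Fin N → ℕ) : ℚ :=
  ∏ i, a (i.1 + 1) ^ j i / (((j i).factorial : ℚ) * (((i.1 + 1).factorial : ℚ)) ^ j i)

/-- normalized Bell sum with domain size `N` and weight `n` -/
noncomputable def gB (a : ℕ → ℚ) (N n : ℕ) : ℚ :=
  ∑ j ∈ (Fintype.piFinset fun _ : Fin N => Finset.range (n + 1)).filter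
      (fun j => wsum j = n), trm a j

lemma entry_le_wsum {N : ℕ} (j : Fin N → ℕ) (i : Fin N) : j i ≤ wsum j := by
  calc j i ≤ (i.1 + 1) * j i := Nat.le_mul_of_pos_left _ (Nat.succ_pos _)
  _ ≤ wsum j := Finset.single_le_sum (f := fun i => (i.1 + 1) * j i)
      (fun _ _ => Nat.zero_le _) (mem_univ i)

lemma filter_bound {N n m : ℕ} (h : n ≤ m) :
    (Fintype.piFinset fun _ : Fin N => Finset.range (m + 1)).filter (fun j => wsum j = n)
      = (Fintype.piFinset fun _ : Fin N => Finset.range (n + 1)).filter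
        (fun j => wsum j = n) := by
  ext j
  simp only [mem_filter, Fintype.mem_piFinset, mem_range, Nat.lt_succ_iff]
  constructor
  · rintro ⟨hb, hw⟩
    exact ⟨fun i => hw ▸ entry_le_wsum j i, hw⟩
  · rintro ⟨hb, hw⟩
    exact ⟨fun i => le_trans (hb i) h, hw⟩

lemma ksum_le_wsum {N : ℕ} (j : Fin N → ℕ) : (∑ i, j i) ≤ wsum j :=
  Finset.sum_le_sum fun i _ => Nat.le_mul_of_pos_left _ (Nat.succ_pos _)

lemma trm_eq (a : ℕ → ℚ) {N : ℕ} (j : Fin N → ℕ) :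
    trm a j = (∏ i, a (i.1 + 1) ^ j i) /
      ((∏ i, (j i).factorial * ((i.1 + 1).factorial) ^ (j i) : ℕ) : ℚ) := by
  rw [trm, Finset.prod_div_distrib]
  push_cast
  ring

lemma completeBell_eq (a : ℕ → ℚ) (n : ℕ) :
    completeBell a n = (n.factorial : ℚ) * gB a n n := by
  rw [completeBell]
  simp only [partialBell]
  rw [Finset.sum_comm, gB, Finset.sum_filter, Finset.mul_sum]
  refine Finset.sum_bij' (fun (j : Fin n → Fin (n + 1)) _ => fun i => (j i : ℕ))
    (fun j hj => fun i => ⟨j i, by simpa using (Fintype.mem_piFinset.mp hj i)⟩)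
    (fun j _ => by simp [Fintype.mem_piFinset, Nat.lt_succ_iff, Fin.is_le])
    (fun j hj => Finset.mem_univ _)
    (fun j _ => by funext i; simp)
    (fun j hj => by funext i; simp)
    (fun j _ => ?_)
  rw [Finset.sum_eq_single (∑ i, (j i : ℕ))]
  · by_cases hw : (∑ i, (i.1 + 1) * (j i : ℕ)) = n
    · rw [if_pos ⟨rfl, hw⟩, if_pos (show wsum (fun i => ((j i : ℕ))) = n from hw),
        trm_eq]
      ring
    · rw [if_neg (fun h => hw h.2),
        if_neg (show ¬ wsum (fun i => ((j i : ℕ))) = n from hw), mul_zero]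
  · intro k _ hk
    exact if_neg (fun h => hk (h.1.symm))
  · intro h
    rw [Finset.mem_range, Nat.lt_succ_iff, not_le] at h
    refine if_neg (fun hc => ?_)
    have := ksum_le_wsum (fun i => (j i : ℕ))
    rw [wsum, hc.2] at this
    omega

lemma prod_restrict {M : Type*} [CommMonoid M] {N n : ℕ} (h : n ≤ N) (G : Fin N → M)
    (hz : ∀ i : Fin N, n ≤ i.1 → G i = 1) :
    ∏ i : Fin N, G i = ∏ i : Fin n, G (Fin.castLE h i) := by
  rw [← Finset.prod_filter_of_ne (p := fun i : Fin N => i.1 < n)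
    (fun i _ hne => lt_of_not_ge fun hge => hne (hz i hge))]
  exact Finset.prod_bij' (fun i hi => (⟨i.1, (Finset.mem_filter.mp hi).2⟩ : Fin n))
    (fun i _ => Fin.castLE h i)
    (fun i _ => Finset.mem_univ _)
    (fun i _ => Finset.mem_filter.mpr ⟨Finset.mem_univ _, i.isLt⟩)
    (fun i _ => rfl) (fun i _ => rfl) (fun i _ => rfl)

lemma sum_restrict {M : Type*} [AddCommMonoid M] {N n : ℕ} (h : n ≤ N) (G : Fin N → M)
    (hz : ∀ i : Fin N, n ≤ i.1 → G i = 0) :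
    ∑ i : Fin N, G i = ∑ i : Fin n, G (Fin.castLE h i) :=
  prod_restrict (M := Multiplicative M) h G hz

lemma eventually_zero {N n : ℕ} {j : Fin N → ℕ} (hw : wsum j = n) {i : Fin N}
    (hi : n ≤ i.1) : j i = 0 := by
  by_contra hne
  have h1 : i.1 + 1 ≤ (i.1 + 1) * j i := Nat.le_mul_of_pos_right _ (Nat.pos_of_ne_zero hne)
  have h2 : (i.1 + 1) * j i ≤ wsum j :=
    Finset.single_le_sum (f := fun i : Fin N => (i.1 + 1) * j i)
      (fun _ _ => Nat.zero_le _) (Finset.mem_univ i)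
  omega

lemma wsum_restrict {N n : ℕ} (h : n ≤ N) {j : Fin N → ℕ} (hw : wsum j = n) :
    wsum (fun i : Fin n => j (Fin.castLE h i)) = n := by
  have := sum_restrict h (fun i : Fin N => (i.1 + 1) * j i)
    (fun i hi => by beta_reduce; rw [eventually_zero hw hi, mul_zero])
  calc wsum (fun i : Fin n => j (Fin.castLE h i))
      = ∑ i : Fin N, (i.1 + 1) * j i := this.symm
    _ = n := hw

lemma trm_restrict (a : ℕ → ℚ) {N n : ℕ} (h : n ≤ N) {j : Fin N → ℕ} (hw : wsum j = n) :
    trm a j = trm a (fun i : Fin n => j (Fin.castLE h i)) := by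
  rw [trm, trm]
  exact prod_restrict h _ (fun i hi => by
    rw [eventually_zero hw hi]; simp)

lemma gB_restrict (a : ℕ → ℚ) {N n : ℕ} (h : n ≤ N) : gB a N n = gB a n n := by
  rw [gB, gB]
  refine Finset.sum_bij'
    (fun (j : Fin N → ℕ) _ => fun i : Fin n => j (Fin.castLE h i))
    (fun (j : Fin n → ℕ) _ => fun i : Fin N => if hi : i.1 < n then j ⟨i.1, hi⟩ else 0)
    ?_ ?_ ?_ ?_ ?_
  · intro j hj
    rw [Finset.mem_filter] at hj ⊢
    refine ⟨Fintype.mem_piFinset.mpr fun i => ?_, wsum_restrict h hj.2⟩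
    exact Fintype.mem_piFinset.mp hj.1 _
  · intro j hj
    beta_reduce
    rw [Finset.mem_filter] at hj ⊢
    have hd : (fun i : Fin n => (fun i : Fin N => if hi : i.1 < n then j ⟨i.1, hi⟩ else 0)
        (Fin.castLE h i)) = j := by
      funext i
      simp [i.isLt]
    constructor
    · refine Fintype.mem_piFinset.mpr fun i => ?_
      by_cases hi : i.1 < n
      · rw [dif_pos hi]
        exact Fintype.mem_piFinset.mp hj.1 _
      · rw [dif_neg hi]
        simp
    · have hz : ∀ i : Fin N, n ≤ i.1 →
          (fun i : Fin N => if hi : i.1 < n then j ⟨i.1, hi⟩ else 0) i = 0 := by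
        intro i hi
        exact dif_neg (not_lt.mpr hi)
      rw [wsum, sum_restrict h _ (fun i hi => by rw [dif_neg (not_lt.mpr hi), mul_zero])]
      simpa [hd, wsum] using hj.2
  · intro j hj
    beta_reduce
    funext i
    by_cases hi : i.1 < n
    · simp [hi]
    · rw [dif_neg hi]
      exact (eventually_zero (Finset.mem_filter.mp hj).2 (not_lt.mp hi)).symm
  · intro j hj
    funext i
    simp [i.isLt]
  · intro j hj
    exact trm_restrict a h (Finset.mem_filter.mp hj).2

lemma single_split (x y c : ℚ) (hc : c ≠ 0) (j : ℕ) :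
    (x + y) ^ j / ((j.factorial : ℚ) * c ^ j) =
      ∑ s ∈ Finset.range (j + 1),
        (x ^ s / ((s.factorial : ℚ) * c ^ s)) *
          (y ^ (j - s) / (((j - s).factorial : ℚ) * c ^ (j - s))) := by
  rw [add_pow, Finset.sum_div]
  refine Finset.sum_congr rfl fun s hs => ?_
  rw [Finset.mem_range, Nat.lt_succ_iff] at hs
  have hfac : ((j.choose s : ℚ)) * (s.factorial : ℚ) * ((j - s).factorial : ℚ)
      = (j.factorial : ℚ) := by
    exact_mod_cast congrArg (Nat.cast : ℕ → ℚ) (Nat.choose_mul_factorial_mul_factorial hs)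
  have hpow : c ^ j = c ^ s * c ^ (j - s) := by
    rw [← pow_add, Nat.add_sub_cancel' hs]
  have h1 : (s.factorial : ℚ) ≠ 0 := Nat.cast_ne_zero.mpr (Nat.factorial_ne_zero _)
  have h2 : ((j - s).factorial : ℚ) ≠ 0 := Nat.cast_ne_zero.mpr (Nat.factorial_ne_zero _)
  have h3 : (j.factorial : ℚ) ≠ 0 := Nat.cast_ne_zero.mpr (Nat.factorial_ne_zero _)
  rw [hpow]
  field_simp
  linear_combination x ^ s * y ^ (j - s) * hfac

lemma trm_split (a b : ℕ → ℚ) {N : ℕ} (j : Fin N → ℕ) :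
    trm (fun m => a m + b m) j =
      ∑ s ∈ Fintype.piFinset (fun i => Finset.range (j i + 1)),
        trm a s * trm b (fun i => j i - s i) := by
  rw [trm]
  have : ∀ i : Fin N,
      (fun m => a m + b m) (i.1 + 1) ^ j i /
          (((j i).factorial : ℚ) * (((i.1 + 1).factorial : ℚ)) ^ j i) =
        ∑ s ∈ Finset.range (j i + 1),
          (a (i.1 + 1) ^ s / ((s.factorial : ℚ) * ((i.1 + 1).factorial : ℚ) ^ s)) *
            (b (i.1 + 1) ^ (j i - s) /
              (((j i - s).factorial : ℚ) * ((i.1 + 1).factorial : ℚ) ^ (j i - s))) :=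
    fun i => single_split _ _ _ (Nat.cast_ne_zero.mpr (Nat.factorial_ne_zero _)) (j i)
  rw [Finset.prod_congr rfl fun i _ => this i, Finset.prod_univ_sum]
  refine Finset.sum_congr rfl fun s hs => ?_
  rw [trm, trm, ← Finset.prod_mul_distrib]

lemma wsum_add {N : ℕ} (s t : Fin N → ℕ) :
    wsum (fun i => s i + t i) = wsum s + wsum t := by
  rw [wsum, wsum, wsum, ← Finset.sum_add_distrib]
  exact Finset.sum_congr rfl fun i _ => mul_add _ _ _

lemma gB_add (a b : ℕ → ℚ) (N n : ℕ) :
    gB (fun m => a m + b m) N n =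
      ∑ p ∈ Finset.range (n + 1), gB a N p * gB b N (n - p) := by
  classical
  rw [gB]
  rw [Finset.sum_congr rfl fun j _ => trm_split a b j]
  rw [Finset.sum_sigma'
    (((Fintype.piFinset fun _ : Fin N => Finset.range (n + 1))).filter
      (fun j => wsum j = n))
    (fun j => Fintype.piFinset fun i => Finset.range (j i + 1))
    (fun j s => trm a s * trm b (fun i => j i - s i))]
  have hbase :
      (∑ x ∈ (((Fintype.piFinset fun _ : Fin N => Finset.range (n + 1))).filter
          (fun j => wsum j = n)).sigma
          (fun j => Fintype.piFinset fun i => Finset.range (j i + 1)),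
        trm a x.snd * trm b (fun i => x.fst i - x.snd i))
        = ∑ q ∈ ((Fintype.piFinset fun _ : Fin N => Finset.range (n + 1)) ×ˢ
            (Fintype.piFinset fun _ : Fin N => Finset.range (n + 1))).filter
            (fun q => wsum q.1 + wsum q.2 = n),
          trm a q.1 * trm b q.2 := by
    refine Finset.sum_bij' (fun x _ => (x.snd, fun i => x.fst i - x.snd i))
      (fun q _ => ⟨fun i => q.1 i + q.2 i, q.1⟩) ?_ ?_ ?_ ?_ ?_
    · intro x hx
      rw [Finset.mem_sigma, Finset.mem_filter] at hx
      obtain ⟨⟨hjP, hjw⟩, hs⟩ := hx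
      have hsle : ∀ i, x.snd i ≤ x.fst i := fun i => by
        have := Fintype.mem_piFinset.mp hs i
        rw [Finset.mem_range, Nat.lt_succ_iff] at this
        exact this
      have hjle : ∀ i, x.fst i ≤ n := fun i => by
        have := Fintype.mem_piFinset.mp hjP i
        rw [Finset.mem_range, Nat.lt_succ_iff] at this
        exact this
      rw [Finset.mem_filter, Finset.mem_product]
      refine ⟨⟨Fintype.mem_piFinset.mpr fun i => ?_, Fintype.mem_piFinset.mpr fun i => ?_⟩, ?_⟩
      · rw [Finset.mem_range, Nat.lt_succ_iff]
        exact le_trans (hsle i) (hjle i)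
      · rw [Finset.mem_range, Nat.lt_succ_iff]
        exact le_trans (Nat.sub_le _ _) (hjle i)
      · have hfx : (fun i => x.snd i + (x.fst i - x.snd i)) = x.fst :=
          funext fun i => Nat.add_sub_cancel' (hsle i)
        calc wsum x.snd + wsum (fun i => x.fst i - x.snd i)
            = wsum (fun i => x.snd i + (x.fst i - x.snd i)) := (wsum_add _ _).symm
          _ = n := by rw [hfx, hjw]
    · intro q hq
      rw [Finset.mem_filter, Finset.mem_product] at hq
      obtain ⟨⟨h1, h2⟩, hsum⟩ := hq
      rw [Finset.mem_sigma, Finset.mem_filter]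
      refine ⟨⟨Fintype.mem_piFinset.mpr fun i => ?_, ?_⟩, Fintype.mem_piFinset.mpr fun i => ?_⟩
      · rw [Finset.mem_range, Nat.lt_succ_iff]
        calc q.1 i + q.2 i ≤ wsum q.1 + wsum q.2 :=
              Nat.add_le_add (entry_le_wsum _ i) (entry_le_wsum _ i)
          _ = n := hsum
      · rw [wsum_add, hsum]
      · rw [Finset.mem_range, Nat.lt_succ_iff]
        exact Nat.le_add_right _ _
    · intro x hx
      rw [Finset.mem_sigma] at hx
      have hsle : ∀ i, x.snd i ≤ x.fst i := fun i => by
        have := Fintype.mem_piFinset.mp hx.2 i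
        rw [Finset.mem_range, Nat.lt_succ_iff] at this
        exact this
      exact Sigma.ext (funext fun i => Nat.add_sub_cancel' (hsle i)) (HEq.refl _)
    · intro q hq
      exact Prod.ext rfl (funext fun i => Nat.add_sub_cancel_left _ _)
    · intro x hx
      rfl
  rw [hbase]
  rw [← Finset.sum_fiberwise_of_maps_to
    (g := fun q : (Fin N → ℕ) × (Fin N → ℕ) => wsum q.1) (t := Finset.range (n + 1))
    (fun q hq => by
      rw [Finset.mem_filter] at hq
      rw [Finset.mem_range, Nat.lt_succ_iff]
      show wsum q.1 ≤ n
      omega)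
    (fun q => trm a q.1 * trm b q.2)]
  refine Finset.sum_congr rfl fun p hp => ?_
  rw [Finset.mem_range, Nat.lt_succ_iff] at hp
  have hset : (((Fintype.piFinset fun _ : Fin N => Finset.range (n + 1)) ×ˢ
        (Fintype.piFinset fun _ : Fin N => Finset.range (n + 1))).filter
        (fun q => wsum q.1 + wsum q.2 = n)).filter (fun q => wsum q.1 = p)
      = ((Fintype.piFinset fun _ : Fin N => Finset.range (n + 1)).filter
          (fun j => wsum j = p)) ×ˢ
        ((Fintype.piFinset fun _ : Fin N => Finset.range (n + 1)).filter
          (fun j => wsum j = n - p)) := by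
    ext q
    simp only [Finset.mem_filter, Finset.mem_product]
    constructor
    · rintro ⟨⟨⟨hq1, hq2⟩, hsum⟩, hws⟩
      exact ⟨⟨hq1, hws⟩, hq2, by omega⟩
    · rintro ⟨⟨hq1, hws⟩, hq2, hwt⟩
      exact ⟨⟨⟨hq1, hq2⟩, by omega⟩, hws⟩
  rw [hset, gB, gB, ← filter_bound hp, ← filter_bound (Nat.sub_le n p),
    Finset.sum_mul_sum, ← Finset.sum_product']

end BellAux

open BellAux in
/-- `A(n;a+b) = Σ_{i=0}^n C(n,i)·A(i;a)·A(n−i;b)`. -/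
theorem completeBell_add (a b : ℕ → ℚ) (n : ℕ) :
    completeBell (fun m => a m + b m) n =
      ∑ i ∈ Finset.range (n + 1),
        (n.choose i : ℚ) * completeBell a i * completeBell b (n - i) := by
  rw [completeBell_eq, gB_add, Finset.mul_sum]
  refine Finset.sum_congr rfl fun p hp => ?_
  rw [Finset.mem_range, Nat.lt_succ_iff] at hp
  rw [gB_restrict a hp, gB_restrict b (Nat.sub_le n p),
    completeBell_eq a, completeBell_eq b]
  rw [← Nat.choose_mul_factorial_mul_factorial hp]
  push_cast
  ring
end
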